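/- arXiv:2108.03040 — 5 statements merged into one kernel-verified Lean document; each statement's English description precedes it below -/
import Mathlib

section
/- Let π : [0, T₀] → 𝒮 be such that for every f ∈ C([0,1]) the map t ↦ π_t(f) is right-continuous with left limits (hence bounded and measurable on [0, T₀]). If J_ini(π₀) + J_dyn(π) = 0, then π_t = μ_t for every t ∈ [0, T₀]. -/
open MeasureTheory Filter

noncomputable section

/-- The unit interval `[0,1]`. -/
abbrev I01 := unitInterval

/-- The Banach space `C([0,1])` of continuous real functions with the sup norm. -/
abbrev CI := C(I01, ℝ)

/-- The topological dual `𝒮` of `C([0,1])` with the operator norm. -/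
abbrev S := CI →L[ℝ] ℝ

/-- A real function on `[0,T₀]` is càdlàg: right-continuous on `[0,T₀]`
with left limits on `(0,T₀]`. -/
def Cadlag (T₀ : ℝ) (g : ℝ → ℝ) : Prop :=
  (∀ t ∈ Set.Icc (0:ℝ) T₀, Filter.Tendsto g (nhdsWithin t (Set.Ici t)) (nhds (g t))) ∧
  (∀ t ∈ Set.Ioc (0:ℝ) T₀, ∃ L : ℝ, Filter.Tendsto g (nhdsWithin t (Set.Iio t)) (nhds L))

/-- The initial large-deviation rate functional
`J_ini(ν) = sup_f { ν(f) - ∫₀¹ φ(x)(e^{f(x)} - 1) dx }`. -/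
def Jini (φ : CI) (ν : S) : EReal :=
  ⨆ f : CI, ((ν f - ∫ x : I01, φ x * (Real.exp (f x) - 1) : ℝ) : EReal)

/-- Test functions in `C^{1,0}([0,T₀]×[0,1])`, encoded as a pair: a curve `G : [0,T₀] → C([0,1])`
together with its continuous time-derivative `∂ₜG`. -/
def C10 (T₀ : ℝ) : Set ((ℝ → CI) × (ℝ → CI)) :=
  {p | ContinuousOn p.1 (Set.Icc 0 T₀) ∧ ContinuousOn p.2 (Set.Icc 0 T₀) ∧
    ∀ t ∈ Set.Icc (0:ℝ) T₀, HasDerivWithinAt p.1 (p.2 t) (Set.Icc 0 T₀) t}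

/-- The dynamical large-deviation rate functional
`J_dyn(π) = sup_G { π_{T₀}(G_{T₀}) - π₀(G₀) - ∫₀^{T₀} π_s((∂ₛG)_s + 𝓑G_s) ds }`. -/
def Jdyn (T₀ : ℝ) (B : CI → CI) (π : ℝ → S) : EReal :=
  ⨆ G ∈ C10 T₀,
    ((π T₀ (G.1 T₀) - π 0 (G.1 0)
      - ∫ s in (0:ℝ)..T₀, π s (G.2 s + B (G.1 s)) : ℝ) : EReal)

/-- The set `𝔄_C`: càdlàg nonnegative paths `π : [0,T₀] → 𝒮` with
`J_ini(π₀) + J_dyn(π) ≤ C`. -/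
def memA (T₀ C : ℝ) (φ : CI) (B : CI → CI) (π : ℝ → S) : Prop :=
  (∀ f : CI, Cadlag T₀ fun t => π t f) ∧
  (∀ t ∈ Set.Icc (0:ℝ) T₀, ∀ f : CI, (∀ x, 0 ≤ f x) → 0 ≤ π t f) ∧
  Jini φ (π 0) + Jdyn T₀ B π ≤ (C : EReal)

/-! ### Auxiliary lemmas -/

lemma integrable_cont (g : I01 → ℝ) (hg : Continuous g) : Integrable g (volume : Measure I01) :=
  hg.integrable_of_hasCompactSupport
    (IsCompact.of_isClosed_subset isCompact_univ (isClosed_tsupport g) (Set.subset_univ _))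

lemma abs_integral_le (F : I01 → ℝ) (C : ℝ) (h : ∀ y, |F y| ≤ C) : |∫ y : I01, F y| ≤ C := by
  have := norm_integral_le_of_norm_le_const (μ := (volume : Measure I01)) (f := F) (C := C)
    (Filter.Eventually.of_forall h)
  simpa using this

lemma exp_sub_one_abs_le (w : ℝ) : |Real.exp w - 1| ≤ |w| * Real.exp |w| := by
  rcases le_or_gt 0 w with hw | hw
  · rw [abs_of_nonneg hw, abs_of_nonneg (by linarith [Real.one_le_exp hw] : (0:ℝ) ≤ Real.exp w - 1)]
    have h := Real.add_one_le_exp (-w)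
    have hp : (0:ℝ) < Real.exp w := Real.exp_pos w
    have : (-w + 1) * Real.exp w ≤ Real.exp (-w) * Real.exp w := by nlinarith
    rw [← Real.exp_add] at this
    simp at this
    nlinarith
  · rw [abs_of_neg hw, abs_of_nonpos (by linarith [Real.exp_lt_one_iff.mpr hw] : Real.exp w - 1 ≤ 0)]
    have h := Real.add_one_le_exp w
    have h1 : (1:ℝ) ≤ Real.exp (-w) := Real.one_le_exp (by linarith)
    nlinarith

lemma cadlag_bounded {T₀ : ℝ} {g : ℝ → ℝ} (hg : Cadlag T₀ g) :
    ∃ M, ∀ t ∈ Set.Icc (0:ℝ) T₀, |g t| ≤ M := by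
  have key : ∀ t ∈ Set.Icc (0:ℝ) T₀, ∃ r > 0, ∃ C, ∀ s ∈ Metric.ball t r ∩ Set.Icc (0:ℝ) T₀,
      |g s| ≤ C := by
    intro t ht
    have hr := hg.1 t ht
    rw [Metric.tendsto_nhdsWithin_nhds] at hr
    obtain ⟨δ, hδ, hδ'⟩ := hr 1 one_pos
    by_cases h0 : 0 < t
    · obtain ⟨L, hL⟩ := hg.2 t ⟨h0, ht.2⟩
      rw [Metric.tendsto_nhdsWithin_nhds] at hL
      obtain ⟨δ', hδ'pos, hL'⟩ := hL 1 one_pos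
      refine ⟨min δ δ', lt_min hδ hδ'pos, max (|g t| + 1) (|L| + 1), ?_⟩
      rintro s ⟨hs1, _⟩
      rw [Metric.mem_ball] at hs1
      rcases le_or_gt t s with h | h
      · have h2 := hδ' (Set.mem_Ici.mpr h) (lt_of_lt_of_le hs1 (min_le_left _ _))
        rw [Real.dist_eq] at h2
        have h3 : |g s| - |g t| ≤ |g s - g t| := abs_sub_abs_le_abs_sub _ _
        have : |g s| ≤ |g t| + 1 := by linarith
        exact le_trans this (le_max_left _ _)
      · have h2 := hL' (Set.mem_Iio.mpr h) (lt_of_lt_of_le hs1 (min_le_right _ _))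
        rw [Real.dist_eq] at h2
        have h3 : |g s| - |L| ≤ |g s - L| := abs_sub_abs_le_abs_sub _ _
        have : |g s| ≤ |L| + 1 := by linarith
        exact le_trans this (le_max_right _ _)
    · refine ⟨δ, hδ, |g t| + 1, ?_⟩
      rintro s ⟨hs1, hs2⟩
      rw [Metric.mem_ball] at hs1
      have hts : t ≤ s := by
        have : t ≤ 0 := not_lt.mp h0
        linarith [ht.1, hs2.1, le_antisymm this ht.1]
      have h2 := hδ' (Set.mem_Ici.mpr hts) hs1
      rw [Real.dist_eq] at h2
      have h3 : |g s| - |g t| ≤ |g s - g t| := abs_sub_abs_le_abs_sub _ _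
      linarith
  choose r hr C hC using key
  obtain ⟨F, hFcover⟩ := isCompact_Icc.elim_nhds_subcover'
    (fun t ht => Metric.ball t (r t ht)) (fun t ht => Metric.ball_mem_nhds _ (hr t ht))
  refine ⟨∑ x ∈ F, |C x.1 x.2|, fun t ht => ?_⟩
  have := hFcover ht
  simp only [Set.mem_iUnion] at this
  obtain ⟨x, hxF, hx⟩ := this
  calc |g t| ≤ C x.1 x.2 := hC x.1 x.2 t ⟨hx, ht⟩
    _ ≤ |C x.1 x.2| := le_abs_self _
    _ ≤ ∑ x ∈ F, |C x.1 x.2| :=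
      Finset.single_le_sum (f := fun y : (Set.Icc (0:ℝ) T₀) => |C y.1 y.2|)
        (fun i _ => abs_nonneg _) hxF

lemma meas_apply {T₀ : ℝ} (π : ℝ → S) (hπ : ∀ f : CI, Cadlag T₀ fun t => π t f)
    (M : ℝ) (hM : ∀ s ∈ Set.Icc (0:ℝ) T₀, ‖π s‖ ≤ M)
    (v : ℝ → CI) (hv : ContinuousOn v (Set.Icc (0:ℝ) T₀)) :
    AEStronglyMeasurable (fun s => π s (v s)) (volume.restrict (Set.Icc (0:ℝ) T₀)) := by
  set e : ℕ → ℝ → ℝ := fun n s => min ((⌈s * (n+1)⌉ : ℤ) / (n+1)) T₀ with he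
  have hmeas : ∀ n : ℕ, Measurable (fun s => π (e n s) (v (e n s))) := by
    intro n
    have : (fun s => π (e n s) (v (e n s))) =
        (fun k : ℤ => π (min ((k:ℝ)/(n+1)) T₀) (v (min ((k:ℝ)/(n+1)) T₀))) ∘
          (fun s : ℝ => ⌈s * (n+1)⌉) := rfl
    rw [this]
    exact measurable_from_top.comp (Int.measurable_ceil.comp (measurable_id.mul_const _))
  refine aestronglyMeasurable_of_tendsto_ae atTop
    (fun n => (hmeas n).aestronglyMeasurable) ?_
  filter_upwards [ae_restrict_mem measurableSet_Icc] with s hs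
  have hes : ∀ n : ℕ, s ≤ e n s ∧ e n s ≤ T₀ ∧ e n s ≤ s + 1/(n+1) := by
    intro n
    have h1 : (0:ℝ) < (n:ℝ) + 1 := by positivity
    refine ⟨le_min ?_ hs.2, min_le_right _ _, le_trans (min_le_left _ _) ?_⟩
    · rw [le_div_iff₀ h1]; exact Int.le_ceil _
    · rw [div_le_iff₀ h1]
      have := (Int.ceil_lt_add_one (s * (n+1))).le
      calc ((⌈s * (n+1)⌉ : ℤ) : ℝ) ≤ s * (n+1) + 1 := this
        _ = (s + 1/(n+1)) * (n+1) := by field_simp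
  have hten : Tendsto (fun n : ℕ => e n s) atTop (nhds s) := by
    have hub : Tendsto (fun n : ℕ => s + 1/(n+1)) atTop (nhds s) := by
      have := tendsto_one_div_add_atTop_nhds_zero_nat (𝕜 := ℝ)
      have h2 := this.const_add s
      simpa using h2
    exact tendsto_of_tendsto_of_tendsto_of_le_of_le tendsto_const_nhds hub
      (fun n => (hes n).1) (fun n => (hes n).2.2)
  have hmem : ∀ n, e n s ∈ Set.Icc (0:ℝ) T₀ := fun n => ⟨le_trans hs.1 (hes n).1, (hes n).2.1⟩
  have hten1 : Tendsto (fun n : ℕ => e n s) atTop (nhdsWithin s (Set.Ici s)) :=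
    tendsto_nhdsWithin_of_tendsto_nhds_of_eventually_within _ hten
      (Eventually.of_forall fun n => (hes n).1)
  have hten2 : Tendsto (fun n : ℕ => e n s) atTop (nhdsWithin s (Set.Icc (0:ℝ) T₀)) :=
    tendsto_nhdsWithin_of_tendsto_nhds_of_eventually_within _ hten
      (Eventually.of_forall fun n => hmem n)
  have hT2 : Tendsto (fun n => π (e n s) (v s)) atTop (nhds (π s (v s))) :=
    ((hπ (v s)).1 s hs).comp hten1
  have hvten : Tendsto (fun n => v (e n s)) atTop (nhds (v s)) := (hv s hs).tendsto.comp hten2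
  have hnorm : Tendsto (fun n => ‖v (e n s) - v s‖) atTop (nhds 0) :=
    tendsto_iff_norm_sub_tendsto_zero.mp hvten
  have hT1 : Tendsto (fun n => π (e n s) (v (e n s) - v s)) atTop (nhds 0) := by
    apply squeeze_zero_norm (fun n => ?_) (by simpa using hnorm.const_mul (max M 0))
    calc ‖π (e n s) (v (e n s) - v s)‖ ≤ ‖π (e n s)‖ * ‖v (e n s) - v s‖ :=
          (π (e n s)).le_opNorm _
      _ ≤ max M 0 * ‖v (e n s) - v s‖ :=
          mul_le_mul_of_nonneg_right (le_trans (hM _ (hmem n)) (le_max_left _ _)) (norm_nonneg _)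
  have heq : ∀ n, π (e n s) (v (e n s)) = π (e n s) (v (e n s) - v s) + π (e n s) (v s) := by
    intro n; rw [map_sub]; ring
  simp only [heq]
  simpa using hT1.add hT2

lemma intInt_apply {T₀ : ℝ} (π : ℝ → S) (hπ : ∀ f : CI, Cadlag T₀ fun t => π t f)
    (M : ℝ) (hM : ∀ s ∈ Set.Icc (0:ℝ) T₀, ‖π s‖ ≤ M)
    (v : ℝ → CI) (hv : ContinuousOn v (Set.Icc (0:ℝ) T₀))
    (K : ℝ) (hK : ∀ s ∈ Set.Icc (0:ℝ) T₀, ‖v s‖ ≤ K)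
    {a b : ℝ} (ha : 0 ≤ a) (hab : a ≤ b) (hb : b ≤ T₀) :
    IntervalIntegrable (fun s => π s (v s)) volume a b := by
  rw [intervalIntegrable_iff_integrableOn_Ioc_of_le hab]
  have hsub : Set.Ioc a b ⊆ Set.Icc (0:ℝ) T₀ := fun x hx => ⟨le_trans ha hx.1.le, le_trans hx.2 hb⟩
  apply Integrable.mono' (g := fun _ => M * K)
    ((integrableOn_const_iff).mpr (Or.inr measure_Ioc_lt_top))
    ((meas_apply π hπ M hM v hv).mono_measure (Measure.restrict_mono hsub le_rfl))
  filter_upwards [ae_restrict_mem measurableSet_Ioc] with s hs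
  have hs' := hsub hs
  calc ‖π s (v s)‖ ≤ ‖π s‖ * ‖v s‖ := (π s).le_opNorm _
    _ ≤ M * K := mul_le_mul (hM s hs') (hK s hs') (norm_nonneg _)
        ((norm_nonneg (π s)).trans (hM s hs'))

section Bfacts
variable (lam : C(I01 × I01, ℝ)) (P₁ P₂ : CI →L[ℝ] CI)
    (hP₁ : ∀ (f : CI) (x : I01), P₁ f x = ∫ y : I01, lam (x, y) * f y)
    (hP₂ : ∀ (f : CI) (x : I01), P₂ f x = f x * ∫ y : I01, lam (x, y))
    (B : CI → CI)
    (hB : ∀ (f : CI) (x : I01), B f x = ∫ y : I01, lam (x, y) * (Real.exp (f y - f x) - 1))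

lemma lam_cont (x : I01) : Continuous fun y : I01 => lam (x, y) :=
  lam.continuous.comp (Continuous.prodMk_right x)

include hP₁ hP₂ in
lemma Lop_apply (g : CI) (x : I01) :
    ((P₁ - P₂) g) x = ∫ y : I01, lam (x, y) * (g y - g x) := by
  have hint1 : Integrable (fun y : I01 => lam (x, y) * g y) volume :=
    integrable_cont _ ((lam_cont lam x).mul g.continuous)
  have hint2 : Integrable (fun y : I01 => lam (x, y) * g x) volume :=
    integrable_cont _ ((lam_cont lam x).mul continuous_const)
  have : ∫ y : I01, lam (x, y) * (g y - g x)
      = (∫ y : I01, lam (x, y) * g y) - ∫ y : I01, lam (x, y) * g x := by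
    rw [← integral_sub hint1 hint2]
    congr 1; ext y; ring
  rw [this, integral_mul_const]
  simp [ContinuousLinearMap.sub_apply, ContinuousMap.sub_apply, hP₁, hP₂]
  ring

include hP₁ hP₂ hB in
lemma B_lin_bound (g : CI) (hg : 2 * ‖g‖ ≤ 1) :
    ‖B g - (P₁ - P₂) g‖ ≤ 4 * ‖lam‖ * ‖g‖^2 := by
  have hC : (0:ℝ) ≤ 4 * ‖lam‖ * ‖g‖^2 := by positivity
  rw [ContinuousMap.norm_le _ hC]
  intro x
  rw [ContinuousMap.sub_apply, hB, Lop_apply lam P₁ P₂ hP₁ hP₂]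
  have hint1 : Integrable (fun y : I01 => lam (x, y) * (Real.exp (g y - g x) - 1)) volume :=
    integrable_cont _ ((lam_cont lam x).mul (((g.continuous.sub continuous_const).rexp).sub
      continuous_const))
  have hint2 : Integrable (fun y : I01 => lam (x, y) * (g y - g x)) volume :=
    integrable_cont _ ((lam_cont lam x).mul (g.continuous.sub continuous_const))
  rw [← integral_sub hint1 hint2, Real.norm_eq_abs]
  apply abs_integral_le
  intro y
  have hΔ : |g y - g x| ≤ 2 * ‖g‖ := by
    have h1 : |g y| ≤ ‖g‖ := by simpa [Real.norm_eq_abs] using g.norm_coe_le_norm y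
    have h2 : |g x| ≤ ‖g‖ := by simpa [Real.norm_eq_abs] using g.norm_coe_le_norm x
    calc |g y - g x| ≤ |g y| + |g x| := abs_sub _ _
      _ ≤ 2 * ‖g‖ := by linarith
  have hexp : |Real.exp (g y - g x) - 1 - (g y - g x)| ≤ (g y - g x)^2 :=
    Real.abs_exp_sub_one_sub_id_le (le_trans hΔ hg)
  have hsq : (g y - g x)^2 ≤ 4 * ‖g‖^2 := by
    have := sq_le_sq' (neg_le_of_abs_le hΔ) (le_of_abs_le hΔ)
    nlinarith [norm_nonneg g]
  have hlam : |lam (x, y)| ≤ ‖lam‖ := by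
    simpa [Real.norm_eq_abs] using lam.norm_coe_le_norm (x, y)
  calc |lam (x, y) * (Real.exp (g y - g x) - 1) - lam (x, y) * (g y - g x)|
      = |lam (x, y)| * |Real.exp (g y - g x) - 1 - (g y - g x)| := by
        rw [← abs_mul]; congr 1; ring
    _ ≤ ‖lam‖ * (4 * ‖g‖^2) := by
        apply mul_le_mul hlam (le_trans hexp hsq) (abs_nonneg _) (norm_nonneg _)
    _ = 4 * ‖lam‖ * ‖g‖^2 := by ring

include hB in
lemma B_smul_cont (f : CI) : Continuous fun c : ℝ => B (c • f) := by
  have key : ∀ c c' : ℝ, ‖B (c • f) - B (c' • f)‖ ≤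
      ‖lam‖ * (2 * ‖f‖) * Real.exp ((|c'| + |c - c'|) * (2 * ‖f‖)) * |c - c'| := by
    intro c c'
    have hC : (0:ℝ) ≤ ‖lam‖ * (2 * ‖f‖) * Real.exp ((|c'| + |c - c'|) * (2 * ‖f‖)) * |c - c'| := by
      positivity
    rw [ContinuousMap.norm_le _ hC]
    intro x
    rw [ContinuousMap.sub_apply, hB, hB]
    have hcont : ∀ a : ℝ, Continuous fun y : I01 =>
        lam (x, y) * (Real.exp ((a • f) y - (a • f) x) - 1) := by
      intro a
      exact (lam_cont lam x).mul ((((a • f).continuous.sub continuous_const).rexp).sub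
        continuous_const)
    rw [← integral_sub (integrable_cont _ (hcont c)) (integrable_cont _ (hcont c')),
      Real.norm_eq_abs]
    apply abs_integral_le
    intro y
    have hΔ : |f y - f x| ≤ 2 * ‖f‖ := by
      have h1 : |f y| ≤ ‖f‖ := by simpa [Real.norm_eq_abs] using f.norm_coe_le_norm y
      have h2 : |f x| ≤ ‖f‖ := by simpa [Real.norm_eq_abs] using f.norm_coe_le_norm x
      calc |f y - f x| ≤ |f y| + |f x| := abs_sub _ _
        _ ≤ 2 * ‖f‖ := by linarith
    have hlam : |lam (x, y)| ≤ ‖lam‖ := by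
      simpa [Real.norm_eq_abs] using lam.norm_coe_le_norm (x, y)
    set Δ := f y - f x with hΔdef
    have happ : ∀ a : ℝ, (a • f) y - (a • f) x = a * Δ := by
      intro a; simp [ContinuousMap.smul_apply, hΔdef]; ring
    rw [happ, happ]
    have hdiff : Real.exp (c * Δ) - 1 - (Real.exp (c' * Δ) - 1)
        = Real.exp (c' * Δ) * (Real.exp ((c - c') * Δ) - 1) := by
      have he : Real.exp (c' * Δ) * Real.exp ((c - c') * Δ) = Real.exp (c * Δ) := by
        rw [← Real.exp_add]; congr 1; ring
      rw [← he]; ring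
    have hexp1 : Real.exp (c' * Δ) ≤ Real.exp (|c'| * (2 * ‖f‖)) := by
      apply Real.exp_le_exp.mpr
      calc c' * Δ ≤ |c' * Δ| := le_abs_self _
        _ = |c'| * |Δ| := abs_mul _ _
        _ ≤ |c'| * (2 * ‖f‖) := mul_le_mul_of_nonneg_left hΔ (abs_nonneg _)
    have habsΔ : |(c - c') * Δ| ≤ |c - c'| * (2 * ‖f‖) := by
      rw [abs_mul]
      exact mul_le_mul_of_nonneg_left hΔ (abs_nonneg _)
    have hexp2 : |Real.exp ((c - c') * Δ) - 1| ≤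
        |c - c'| * (2 * ‖f‖) * Real.exp (|c - c'| * (2 * ‖f‖)) := by
      calc |Real.exp ((c - c') * Δ) - 1| ≤ |(c - c') * Δ| * Real.exp |(c - c') * Δ| :=
            exp_sub_one_abs_le _
        _ ≤ |c - c'| * (2 * ‖f‖) * Real.exp (|c - c'| * (2 * ‖f‖)) := by
            apply mul_le_mul habsΔ (Real.exp_le_exp.mpr habsΔ) (Real.exp_pos _).le
            positivity
    calc |lam (x, y) * (Real.exp (c * Δ) - 1) - lam (x, y) * (Real.exp (c' * Δ) - 1)|
        = |lam (x, y) * (Real.exp (c' * Δ) * (Real.exp ((c - c') * Δ) - 1))| := by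
          rw [← mul_sub, hdiff]
      _ = |lam (x, y)| * (Real.exp (c' * Δ) * |Real.exp ((c - c') * Δ) - 1|) := by
          rw [abs_mul, abs_mul, abs_of_nonneg (Real.exp_pos _).le]
      _ ≤ ‖lam‖ * (Real.exp (|c'| * (2 * ‖f‖)) *
            (|c - c'| * (2 * ‖f‖) * Real.exp (|c - c'| * (2 * ‖f‖)))) := by
          apply mul_le_mul hlam _ (by positivity) (norm_nonneg _)
          apply mul_le_mul hexp1 hexp2 (abs_nonneg _) (Real.exp_pos _).le
      _ = ‖lam‖ * (2 * ‖f‖) * Real.exp ((|c'| + |c - c'|) * (2 * ‖f‖)) * |c - c'| := by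
          rw [show (|c'| + |c - c'|) * (2 * ‖f‖) = |c'| * (2 * ‖f‖) + |c - c'| * (2 * ‖f‖) from by
            ring, Real.exp_add]
          ring
  rw [continuous_iff_continuousAt]
  intro c₀
  rw [ContinuousAt, tendsto_iff_dist_tendsto_zero]
  apply squeeze_zero (fun c => dist_nonneg)
    (fun c => by simpa [dist_eq_norm] using key c c₀)
  have hcont : Continuous fun c : ℝ =>
      ‖lam‖ * (2 * ‖f‖) * Real.exp ((|c₀| + |c - c₀|) * (2 * ‖f‖)) * |c - c₀| := by
    continuity
  have h0 := hcont.tendsto c₀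
  simpa using h0

end Bfacts

set_option maxHeartbeats 4000000 in
/-- If a càdlàg path `π` satisfies `J_ini(π₀) + J_dyn(π) = 0`, then `π = μ`,
the hydrodynamic limit path. -/
theorem zero_rate_implies_hydrodynamic_limit
    (lam : C(I01 × I01, ℝ)) (hlam : ∀ p, 0 < lam p)
    (φ : CI) (hφ : ∀ x, 0 < φ x)
    (T₀ : ℝ) (hT₀ : 0 < T₀)
    (P₁ P₂ : CI →L[ℝ] CI)
    (hP₁ : ∀ (f : CI) (x : I01), P₁ f x = ∫ y : I01, lam (x, y) * f y)
    (hP₂ : ∀ (f : CI) (x : I01), P₂ f x = f x * ∫ y : I01, lam (x, y))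
    (B : CI → CI)
    (hB : ∀ (f : CI) (x : I01), B f x = ∫ y : I01, lam (x, y) * (Real.exp (f y - f x) - 1))
    (μ : ℝ → S) (hμc : ContinuousOn μ (Set.Icc 0 T₀))
    (hμ : ∀ t ∈ Set.Icc (0:ℝ) T₀, ∀ f : CI,
      μ t f = (∫ x : I01, f x * φ x) + ∫ s in (0:ℝ)..t, μ s ((P₁ - P₂) f))
    (π : ℝ → S)
    (hπ : ∀ f : CI, Cadlag T₀ fun t => π t f)
    (hzero : Jini φ (π 0) + Jdyn T₀ B π = 0) :
    ∀ t ∈ Set.Icc (0:ℝ) T₀, π t = μ t := by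
  -- uniform bounds
  obtain ⟨Mp, hMp0, hMp⟩ : ∃ M, (0 ≤ M) ∧ ∀ s ∈ Set.Icc (0:ℝ) T₀, ‖π s‖ ≤ M := by
    obtain ⟨M, hM⟩ := banach_steinhaus (𝕜 := ℝ) (𝕜₂ := ℝ)
      (g := fun i : (Set.Icc (0:ℝ) T₀) => π i) (fun f => by
        obtain ⟨C, hC⟩ := cadlag_bounded (hπ f)
        exact ⟨C, fun i => by simpa [Real.norm_eq_abs] using hC i.1 i.2⟩)
    exact ⟨max M 0, le_max_right _ _, fun s hs => le_trans (hM ⟨s, hs⟩) (le_max_left _ _)⟩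
  obtain ⟨Mm, hMm0, hMm⟩ : ∃ M, (0 ≤ M) ∧ ∀ s ∈ Set.Icc (0:ℝ) T₀, ‖μ s‖ ≤ M := by
    obtain ⟨M, hM⟩ := IsCompact.exists_bound_of_continuousOn (E := S) (isCompact_Icc (a := (0:ℝ)) (b := T₀)) (f := μ) hμc
    exact ⟨max M 0, le_max_right _ _, fun s hs => le_trans (hM s hs) (le_max_left _ _)⟩
  have hB0 : B 0 = 0 := by
    ext x
    rw [hB]
    simp
  -- each rate functional is ≤ 0
  have hJini0 : (0:EReal) ≤ Jini φ (π 0) := by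
    have h0 : ((π 0) (0:CI) - ∫ x : I01, φ x * (Real.exp ((0:CI) x) - 1)) = (0:ℝ) := by simp
    have := le_iSup (fun f : CI =>
      (((π 0) f - ∫ x : I01, φ x * (Real.exp (f x) - 1) : ℝ) : EReal)) (0:CI)
    rw [h0] at this
    simpa only [Jini, EReal.coe_zero] using this
  have hJdyn0 : (0:EReal) ≤ Jdyn T₀ B π := by
    set G : (ℝ → CI) × (ℝ → CI) := (fun _ => (0:CI), fun _ => (0:CI)) with hGdef
    have hG : G ∈ C10 T₀ :=
      ⟨continuousOn_const, continuousOn_const, fun t _ => hasDerivWithinAt_const _ _ _⟩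
    have h0 : (π T₀ (G.1 T₀) - π 0 (G.1 0)
        - ∫ s in (0:ℝ)..T₀, π s (G.2 s + B (G.1 s)) : ℝ) = 0 := by
      simp [hGdef, hB0]
    have := le_iSup₂ (f := fun (G : (ℝ → CI) × (ℝ → CI)) (_ : G ∈ C10 T₀) =>
      ((π T₀ (G.1 T₀) - π 0 (G.1 0)
        - ∫ s in (0:ℝ)..T₀, π s (G.2 s + B (G.1 s)) : ℝ) : EReal)) G hG
    rw [h0] at this
    simpa [Jdyn] using this
  have hJiniNP : Jini φ (π 0) ≤ 0 := by
    calc Jini φ (π 0) = Jini φ (π 0) + 0 := (add_zero _).symm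
      _ ≤ Jini φ (π 0) + Jdyn T₀ B π := add_le_add_right hJdyn0 _
      _ = 0 := hzero
  have hJdynNP : Jdyn T₀ B π ≤ 0 := by
    calc Jdyn T₀ B π = 0 + Jdyn T₀ B π := (zero_add _).symm
      _ ≤ Jini φ (π 0) + Jdyn T₀ B π := add_le_add_left hJini0 _
      _ = 0 := hzero
  have hIni : ∀ f : CI, (π 0) f - ∫ x : I01, φ x * (Real.exp (f x) - 1) ≤ 0 := by
    intro f
    have h1 := le_iSup (fun f : CI =>
      (((π 0) f - ∫ x : I01, φ x * (Real.exp (f x) - 1) : ℝ) : EReal)) f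
    have h2 := le_trans h1 hJiniNP
    exact_mod_cast h2
  have hDyn : ∀ G ∈ C10 T₀, π T₀ (G.1 T₀) - π 0 (G.1 0)
      - (∫ s in (0:ℝ)..T₀, π s (G.2 s + B (G.1 s))) ≤ 0 := by
    intro G hG
    have h1 := le_iSup₂ (f := fun (G : (ℝ → CI) × (ℝ → CI)) (_ : G ∈ C10 T₀) =>
      ((π T₀ (G.1 T₀) - π 0 (G.1 0)
        - ∫ s in (0:ℝ)..T₀, π s (G.2 s + B (G.1 s)) : ℝ) : EReal)) G hG
    have h2 := le_trans h1 hJdynNP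
    exact_mod_cast h2
  -- Step B : initial condition
  have hInit : ∀ f : CI, π 0 f = ∫ x : I01, f x * φ x := by
    have key : ∀ f : CI, π 0 f ≤ ∫ x : I01, f x * φ x := by
      intro f
      set I := ∫ x : I01, f x * φ x with hI
      set Kc := (∫ x : I01, φ x) * ‖f‖^2 with hKc
      have hKc0 : 0 ≤ Kc :=
        mul_nonneg (integral_nonneg (fun x => (hφ x).le)) (by positivity)
      have step : ∀ ε : ℝ, 0 < ε → ε * (‖f‖ + 1) ≤ 1 → π 0 f ≤ I + ε * Kc := by
        intro ε hε hε1
        have h1 := hIni (ε • f)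
        have h2 : (π 0) (ε • f) = ε * π 0 f := by
          rw [ContinuousLinearMap.map_smul]; rfl
        have hpt : ∀ x : I01, φ x * (Real.exp ((ε • f) x) - 1)
            ≤ φ x * (ε * f x) + φ x * (ε^2 * ‖f‖^2) := by
          intro x
          have hfx : |f x| ≤ ‖f‖ := by simpa [Real.norm_eq_abs] using f.norm_coe_le_norm x
          have habs : |ε * f x| ≤ 1 := by
            rw [abs_mul, abs_of_pos hε]
            calc ε * |f x| ≤ ε * (‖f‖ + 1) := by nlinarith
              _ ≤ 1 := hε1
          have hexp := Real.abs_exp_sub_one_sub_id_le habs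
          have h3 : Real.exp (ε * f x) - 1 ≤ ε * f x + (ε * f x)^2 := by
            have := le_of_abs_le hexp; linarith
          have h4 : (ε * f x)^2 ≤ ε^2 * ‖f‖^2 := by
            rw [mul_pow]
            apply mul_le_mul_of_nonneg_left _ (sq_nonneg ε)
            exact sq_le_sq' (by linarith [neg_abs_le (f x)]) (le_trans (le_abs_self _) hfx)
          have happx : (ε • f) x = ε * f x := rfl
          rw [happx]
          have hφx := (hφ x).le
          nlinarith
        have hint : (∫ x : I01, φ x * (Real.exp ((ε • f) x) - 1))
            ≤ ∫ x : I01, (φ x * (ε * f x) + φ x * (ε^2 * ‖f‖^2)) := by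
          apply integral_mono _ _ hpt
          · exact integrable_cont _
              (φ.continuous.mul (((ε • f).continuous).rexp.sub continuous_const))
          · exact integrable_cont _
              ((φ.continuous.mul (continuous_const.mul f.continuous)).add
                (φ.continuous.mul continuous_const))
        have hsplit : (∫ x : I01, (φ x * (ε * f x) + φ x * (ε^2 * ‖f‖^2)))
            = ε * I + ε^2 * Kc := by
          rw [integral_add (f := fun x => φ x * (ε * f x)) (g := fun x => φ x * (ε^2 * ‖f‖^2))
              (integrable_cont _ (φ.continuous.mul
              (continuous_const.mul f.continuous)))
            (integrable_cont _ (φ.continuous.mul continuous_const))]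
          have e1 : (∫ x : I01, φ x * (ε * f x)) = ε * I := by
            have hfn : (fun x : I01 => φ x * (ε * f x)) = fun x => ε * (f x * φ x) := by
              funext x; ring
            rw [hfn, integral_const_mul, hI]
          have e2 : (∫ x : I01, φ x * (ε^2 * ‖f‖^2)) = ε^2 * Kc := by
            rw [integral_mul_const, hKc]; ring
          rw [e1, e2]
        have hch : ε * (π 0 f) ≤ ε * (I + ε * Kc) := by
          rw [h2] at h1
          nlinarith
        exact (mul_le_mul_iff_right₀ hε).mp hch
      apply le_of_forall_pos_le_add
      intro ε' hε'
      have hd : (0:ℝ) < ‖f‖ + 1 := by positivity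
      set ε := min (1/(‖f‖+1)) (ε'/(Kc+1)) with hεdef
      have hεpos : 0 < ε := lt_min (by positivity) (by positivity)
      have h1 : ε * (‖f‖ + 1) ≤ 1 := by
        have := min_le_left (1/(‖f‖+1)) (ε'/(Kc+1))
        rw [← hεdef] at this
        calc ε * (‖f‖ + 1) ≤ (1/(‖f‖+1)) * (‖f‖ + 1) := by nlinarith
          _ = 1 := by field_simp
      have h2 := step ε hεpos h1
      have h3 : ε * Kc ≤ ε' := by
        have hm := min_le_right (1/(‖f‖+1)) (ε'/(Kc+1))
        rw [← hεdef] at hm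
        have hKc1 : (0:ℝ) < Kc + 1 := by linarith
        calc ε * Kc ≤ (ε'/(Kc+1)) * Kc := by nlinarith
          _ ≤ ε' := by rw [div_mul_eq_mul_div, div_le_iff₀ hKc1]; nlinarith
      linarith
    intro f
    have h1 := key f
    have h2 := key (-f)
    have h3 : π 0 (-f) = -(π 0 f) := map_neg _ _
    have h4 : (∫ x : I01, (-f) x * φ x) = -∫ x : I01, f x * φ x := by
      rw [← integral_neg]
      congr 1
      funext x
      show (-f) x * φ x = -(f x * φ x)
      rw [ContinuousMap.neg_apply]; ring
    rw [h3, h4] at h2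
    linarith
  -- interval integrability helper
  have hII : ∀ (v : ℝ → CI), ContinuousOn v (Set.Icc 0 T₀) → ∀ {a b : ℝ},
      0 ≤ a → a ≤ b → b ≤ T₀ → IntervalIntegrable (fun s => π s (v s)) volume a b := by
    intro v hv a b ha hab hb
    obtain ⟨K, hK⟩ := IsCompact.exists_bound_of_continuousOn
      (isCompact_Icc (a := (0:ℝ)) (b := T₀)) hv
    exact intInt_apply π hπ Mp hMp v hv K hK ha hab hb
  -- Step C : linearized weak formulation
  have hWeak : ∀ (f : CI) (χ χ' : ℝ → ℝ), Continuous χ → Continuous χ' →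
      (∀ s, HasDerivAt χ (χ' s) s) →
      χ T₀ * π T₀ f - χ 0 * π 0 f
        = ∫ s in (0:ℝ)..T₀, (π s ((χ' s) • f) + π s ((χ s) • ((P₁ - P₂) f))) := by
    intro f χ χ' hχ hχ' hχd
    obtain ⟨X, hX⟩ := IsCompact.exists_bound_of_continuousOn
      (isCompact_Icc (a := (0:ℝ)) (b := T₀)) hχ.continuousOn
    have hX0 : 0 ≤ X := le_trans (norm_nonneg _) (hX 0 ⟨le_refl 0, hT₀.le⟩)
    set E := χ T₀ * π T₀ f - χ 0 * π 0 f with hE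
    set D := ∫ s in (0:ℝ)..T₀, (π s ((χ' s) • f) + π s ((χ s) • ((P₁ - P₂) f))) with hD
    have hv1 : ContinuousOn (fun s => (χ' s) • f) (Set.Icc (0:ℝ) T₀) :=
      (hχ'.smul continuous_const).continuousOn
    have hv2 : ContinuousOn (fun s => (χ s) • ((P₁ - P₂) f)) (Set.Icc (0:ℝ) T₀) :=
      (hχ.smul continuous_const).continuousOn
    have hI1 : IntervalIntegrable (fun s => π s ((χ' s) • f)) volume 0 T₀ :=
      hII _ hv1 le_rfl hT₀.le le_rfl
    have hI2 : IntervalIntegrable (fun s => π s ((χ s) • ((P₁ - P₂) f))) volume 0 T₀ :=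
      hII _ hv2 le_rfl hT₀.le le_rfl
    have hIB : ∀ c : ℝ, IntervalIntegrable (fun s => π s (B ((c * χ s) • f))) volume 0 T₀ := by
      intro c
      apply hII _ ?_ le_rfl hT₀.le le_rfl
      have hco : (fun s => B ((c * χ s) • f)) = (fun a : ℝ => B (a • f)) ∘ (fun s => c * χ s) :=
        rfl
      rw [hco]
      exact ((B_smul_cont lam B hB f).comp (continuous_const.mul hχ)).continuousOn
    set CC := T₀ * (Mp * (4 * ‖lam‖ * (X^2 * ‖f‖^2))) with hCC
    have hCC0 : 0 ≤ CC := by positivity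
    have hDsplit : D = (∫ s in (0:ℝ)..T₀, π s ((χ' s) • f))
        + ∫ s in (0:ℝ)..T₀, π s ((χ s) • ((P₁ - P₂) f)) := by
      rw [hD, intervalIntegral.integral_add hI1 hI2]
    have main : ∀ c : ℝ, |c| * (2 * X * ‖f‖) ≤ 1 →
        c * E - c * D ≤ c^2 * CC := by
      intro c hcs
      set G : (ℝ → CI) × (ℝ → CI) := (fun s => (c * χ s) • f, fun s => (c * χ' s) • f) with hG
      have hGmem : G ∈ C10 T₀ := by
        refine ⟨((continuous_const.mul hχ).smul continuous_const).continuousOn,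
          ((continuous_const.mul hχ').smul continuous_const).continuousOn, fun t _ => ?_⟩
        exact (((hχd t).const_mul c).smul_const f).hasDerivWithinAt
      have hd := hDyn G hGmem
      have hend : π T₀ (G.1 T₀) - π 0 (G.1 0) = c * E := by
        show π T₀ ((c * χ T₀) • f) - π 0 ((c * χ 0) • f) = c * E
        rw [show (c * χ T₀) • f = c • ((χ T₀) • f) from (smul_smul c (χ T₀) f).symm,
          show (c * χ 0) • f = c • ((χ 0) • f) from (smul_smul c (χ 0) f).symm,
          ContinuousLinearMap.map_smul, ContinuousLinearMap.map_smul,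
          ContinuousLinearMap.map_smul, ContinuousLinearMap.map_smul]
        simp only [smul_eq_mul, hE]
        ring
      have hintg : ∀ s : ℝ, π s (G.2 s + B (G.1 s))
          = c * (π s ((χ' s) • f)) + (π s (B ((c * χ s) • f))) := by
        intro s
        show π s ((c * χ' s) • f + B ((c * χ s) • f)) = _
        rw [map_add, show (c * χ' s) • f = c • ((χ' s) • f) from (smul_smul c (χ' s) f).symm,
          ContinuousLinearMap.map_smul]
        rfl
      have hsplit : (∫ s in (0:ℝ)..T₀, π s (G.2 s + B (G.1 s)))
          = c * (∫ s in (0:ℝ)..T₀, π s ((χ' s) • f))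
            + ∫ s in (0:ℝ)..T₀, π s (B ((c * χ s) • f)) := by
        rw [show (fun s => π s (G.2 s + B (G.1 s)))
            = fun s => c * (π s ((χ' s) • f)) + π s (B ((c * χ s) • f)) from funext hintg]
        rw [intervalIntegral.integral_add (hI1.const_mul c) (hIB c),
          intervalIntegral.integral_const_mul]
      -- the residual term
      have herr : (∫ s in (0:ℝ)..T₀, π s (B ((c * χ s) • f)))
          - c * (∫ s in (0:ℝ)..T₀, π s ((χ s) • ((P₁ - P₂) f))) ≤ c^2 * CC := by
        have heq : (∫ s in (0:ℝ)..T₀, π s (B ((c * χ s) • f)))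
            - c * (∫ s in (0:ℝ)..T₀, π s ((χ s) • ((P₁ - P₂) f)))
            = ∫ s in (0:ℝ)..T₀,
                (π s (B ((c * χ s) • f)) - c * (π s ((χ s) • ((P₁ - P₂) f)))) := by
          rw [intervalIntegral.integral_sub (hIB c) (hI2.const_mul c),
            intervalIntegral.integral_const_mul]
        rw [heq]
        have hb : ∀ s ∈ Set.uIoc (0:ℝ) T₀,
            ‖π s (B ((c * χ s) • f)) - c * (π s ((χ s) • ((P₁ - P₂) f)))‖
              ≤ Mp * (4 * ‖lam‖ * (c^2 * (X^2 * ‖f‖^2))) := by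
          intro s hs
          rw [Set.uIoc_of_le hT₀.le] at hs
          have hsI : s ∈ Set.Icc (0:ℝ) T₀ := ⟨hs.1.le, hs.2⟩
          have hχs : |χ s| ≤ X := by simpa [Real.norm_eq_abs] using hX s hsI
          have hterm : c * (π s ((χ s) • ((P₁ - P₂) f)))
              = π s ((P₁ - P₂) ((c * χ s) • f)) := by
            simp only [ContinuousLinearMap.map_smul, smul_eq_mul]
            ring
          rw [hterm, ← map_sub]
          have hgn : ‖(c * χ s) • f‖ = |c * χ s| * ‖f‖ := by
            simpa [Real.norm_eq_abs, abs_mul] using norm_smul (c * χ s) f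
          have hgb : ‖(c * χ s) • f‖ ≤ |c| * (X * ‖f‖) := by
            rw [hgn, abs_mul]
            have := mul_le_mul_of_nonneg_right
              (mul_le_mul_of_nonneg_left hχs (abs_nonneg c)) (norm_nonneg f)
            calc |c| * |χ s| * ‖f‖ ≤ |c| * X * ‖f‖ := this
              _ = |c| * (X * ‖f‖) := by ring
          have hsmall : 2 * ‖(c * χ s) • f‖ ≤ 1 := by
            calc 2 * ‖(c * χ s) • f‖ ≤ 2 * (|c| * (X * ‖f‖)) :=
                  mul_le_mul_of_nonneg_left hgb (by norm_num)
              _ = |c| * (2 * X * ‖f‖) := by ring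
              _ ≤ 1 := hcs
          have hBb := B_lin_bound lam P₁ P₂ hP₁ hP₂ B hB ((c * χ s) • f) hsmall
          have hsq : ‖(c * χ s) • f‖^2 ≤ c^2 * (X^2 * ‖f‖^2) := by
            have h0 : (0:ℝ) ≤ |c| * (X * ‖f‖) := by positivity
            calc ‖(c * χ s) • f‖^2 ≤ (|c| * (X * ‖f‖))^2 := by
                  apply sq_le_sq' _ hgb
                  linarith [norm_nonneg ((c * χ s) • f)]
              _ = c^2 * (X^2 * ‖f‖^2) := by
                  rw [mul_pow, mul_pow, sq_abs]
          calc ‖π s (B ((c * χ s) • f) - (P₁ - P₂) ((c * χ s) • f))‖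
              ≤ ‖π s‖ * ‖B ((c * χ s) • f) - (P₁ - P₂) ((c * χ s) • f)‖ := (π s).le_opNorm _
            _ ≤ Mp * (4 * ‖lam‖ * (c^2 * (X^2 * ‖f‖^2))) := by
                apply mul_le_mul (hMp s hsI) _ (norm_nonneg _) hMp0
                calc ‖B ((c * χ s) • f) - (P₁ - P₂) ((c * χ s) • f)‖
                    ≤ 4 * ‖lam‖ * ‖(c * χ s) • f‖^2 := hBb
                  _ ≤ 4 * ‖lam‖ * (c^2 * (X^2 * ‖f‖^2)) :=
                      mul_le_mul_of_nonneg_left hsq (by positivity)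
        have := intervalIntegral.norm_integral_le_of_norm_le_const hb
        rw [Real.norm_eq_abs] at this
        have habs := le_of_abs_le this
        calc (∫ s in (0:ℝ)..T₀,
              (π s (B ((c * χ s) • f)) - c * (π s ((χ s) • ((P₁ - P₂) f)))))
            ≤ Mp * (4 * ‖lam‖ * (c^2 * (X^2 * ‖f‖^2))) * |T₀ - 0| := habs
          _ = c^2 * CC := by
              rw [abs_of_nonneg (by linarith : (0:ℝ) ≤ T₀ - 0), hCC]
              ring
      rw [hend, hsplit] at hd
      rw [hDsplit]
      linarith
    -- conclude E = D
    have hfin : ∀ ε : ℝ, 0 < ε → |E - D| ≤ ε := by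
      intro ε hε
      set c := min (1/(2 * X * ‖f‖ + 1)) (ε/(CC + 1)) with hcdef
      have hc0 : 0 < c := lt_min (by positivity) (by positivity)
      have hc1 : |c| * (2 * X * ‖f‖) ≤ 1 := by
        rw [abs_of_pos hc0]
        have h1 := min_le_left (1/(2 * X * ‖f‖ + 1)) (ε/(CC + 1))
        rw [← hcdef] at h1
        have hden : (0:ℝ) < 2 * X * ‖f‖ + 1 := by positivity
        calc c * (2 * X * ‖f‖) ≤ (1/(2 * X * ‖f‖ + 1)) * (2 * X * ‖f‖) :=
              mul_le_mul_of_nonneg_right h1 (by positivity)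
          _ ≤ 1 := by rw [div_mul_eq_mul_div, div_le_one hden]; linarith
      have hc2 : c * CC ≤ ε := by
        have h2 := min_le_right (1/(2 * X * ‖f‖ + 1)) (ε/(CC + 1))
        rw [← hcdef] at h2
        have hden : (0:ℝ) < CC + 1 := by linarith
        calc c * CC ≤ (ε/(CC + 1)) * CC := mul_le_mul_of_nonneg_right h2 hCC0
          _ ≤ ε := by rw [div_mul_eq_mul_div, div_le_iff₀ hden]; nlinarith
      have hm1 := main c hc1
      have hm2 := main (-c) (by rwa [abs_neg])
      have hsq : c^2 * CC = c * (c * CC) := by ring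
      have hle1 : E - D ≤ c * CC := by
        have : c * (E - D) ≤ c * (c * CC) := by rw [← hsq]; linarith [hm1]
        exact (mul_le_mul_iff_right₀ hc0).mp this
      have hle2 : -(E - D) ≤ c * CC := by
        have h3 : (-c) * E - (-c) * D = c * (-(E - D)) := by ring
        have : c * (-(E - D)) ≤ c * (c * CC) := by rw [← hsq]; linarith [hm2, h3.symm.le]
        exact (mul_le_mul_iff_right₀ hc0).mp (by linarith [hm2, h3])
      rw [abs_le]
      constructor <;> linarith
    have hED : E = D := by
      have h0 : |E - D| ≤ 0 := by
        apply le_of_forall_pos_le_add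
        intro ε hε
        simpa using hfin ε hε
      have := abs_eq_zero.mp (le_antisymm h0 (abs_nonneg _))
      linarith [sub_eq_zero.mp this]
    exact hED
  -- Step D : pointwise integral identity
  have hIdent : ∀ (f : CI), ∀ r ∈ Set.Icc (0:ℝ) T₀,
      π r f = π 0 f + ∫ s in (0:ℝ)..r, π s ((P₁ - P₂) f) := by
    intro f r hr
    rcases eq_or_lt_of_le hr.2 with hrT | hrT
    · subst hrT
      have hw := hWeak f (fun _ => 1) (fun _ => 0) continuous_const continuous_const
        (fun s => hasDerivAt_const s 1)
      simp only [one_mul, zero_smul, map_zero, zero_add, one_smul] at hw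
      linarith
    · have key : ∀ ε : ℝ, 0 < ε →
          |π r f - (π 0 f + ∫ s in (0:ℝ)..r, π s ((P₁ - P₂) f))| ≤ 2*ε := by
        intro ε hε
        have hrc := (hπ f).1 r hr
        rw [Metric.tendsto_nhdsWithin_nhds] at hrc
        obtain ⟨δ₁, hδ₁, hrc⟩ := hrc ε hε
        set Kk := Mp * ‖(P₁ - P₂) f‖ with hKk
        have hKk0 : 0 ≤ Kk := mul_nonneg hMp0 (norm_nonneg _)
        set δ := min (δ₁/2) (min (T₀ - r) (ε/(Kk+1))) with hδdef
        have hδ0 : 0 < δ := lt_min (by linarith) (lt_min (by linarith) (by positivity))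
        have hδT : r + δ ≤ T₀ := by
          have h1 := min_le_right (δ₁/2) (min (T₀ - r) (ε/(Kk+1)))
          have h2 := min_le_left (T₀ - r) (ε/(Kk+1))
          rw [← hδdef] at h1
          linarith [le_trans h1 h2]
        have hδ1 : δ < δ₁ := lt_of_le_of_lt (min_le_left _ _) (by linarith)
        have hδk : δ * Kk ≤ ε := by
          have h2 : δ ≤ ε/(Kk+1) := le_trans (min_le_right _ _) (min_le_right _ _)
          calc δ * Kk ≤ (ε/(Kk+1)) * Kk := mul_le_mul_of_nonneg_right h2 hKk0
            _ ≤ ε := by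
                rw [div_mul_eq_mul_div, div_le_iff₀ (by linarith : (0:ℝ) < Kk+1)]
                nlinarith
        set β : ℝ → ℝ := fun s => max 0 ((6/δ^3) * ((s - r) * (r + δ - s))) with hβdef
        have hβcont : Continuous β := by
          apply continuous_const.max
          exact continuous_const.mul ((continuous_id.sub continuous_const).mul
            (continuous_const.sub continuous_id))
        have hβnn : ∀ s, 0 ≤ β s := fun s => le_max_left _ _
        have hc6 : (0:ℝ) < 6/δ^3 := by positivity
        have hβleft : ∀ s, s ≤ r → β s = 0 := by
          intro s hs
          apply max_eq_left
          have h2 : (0:ℝ) ≤ r + δ - s := by linarith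
          have h3 : (s - r) * (r + δ - s) ≤ 0 :=
            mul_nonpos_iff.mpr (Or.inr ⟨by linarith, h2⟩)
          exact mul_nonpos_iff.mpr (Or.inl ⟨hc6.le, h3⟩)
        have hβright : ∀ s, r + δ ≤ s → β s = 0 := by
          intro s hs
          apply max_eq_left
          have h2 : (0:ℝ) ≤ s - r := by linarith
          have h3 : (s - r) * (r + δ - s) ≤ 0 :=
            mul_nonpos_iff.mpr (Or.inl ⟨h2, by linarith⟩)
          exact mul_nonpos_iff.mpr (Or.inl ⟨hc6.le, h3⟩)
        have hβmid : Set.EqOn β (fun s => (6/δ^3) * ((s - r) * (r + δ - s)))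
            (Set.uIcc r (r+δ)) := by
          intro s hs
          rw [Set.uIcc_of_le (by linarith : r ≤ r + δ)] at hs
          apply max_eq_right
          have h1 : (0:ℝ) ≤ s - r := by linarith [hs.1]
          have h2 : (0:ℝ) ≤ r + δ - s := by linarith [hs.2]
          exact mul_nonneg hc6.le (mul_nonneg h1 h2)
        have htent : (∫ s in r..(r+δ), β s) = 1 := by
          rw [intervalIntegral.integral_congr hβmid]
          have hQ : ∀ s ∈ Set.uIcc r (r+δ), HasDerivAt (fun u => (6/δ^3) *
              ((u^3 * (-(1:ℝ)/3) + u^2 * ((2*r+δ)/2)) + u * (-(r*(r+δ)))))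
              ((6/δ^3) * ((s - r) * (r + δ - s))) s := by
            intro s _
            have h3 : HasDerivAt (fun u:ℝ => u^3) (3*s^2) s := by
              simpa using hasDerivAt_pow 3 s
            have h2 : HasDerivAt (fun u:ℝ => u^2) (2*s) s := by
              simpa using hasDerivAt_pow 2 s
            have h1 : HasDerivAt (fun u:ℝ => u) 1 s := hasDerivAt_id s
            have hsum := (((h3.mul_const (-(1:ℝ)/3)).add (h2.mul_const ((2*r+δ)/2))).add
              (h1.mul_const (-(r*(r+δ))))).const_mul (6/δ^3)
            have heq : (6/δ^3) * ((s - r) * (r + δ - s))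
                = (6/δ^3) * ((3*s^2 * (-(1:ℝ)/3) + 2*s * ((2*r+δ)/2)) + 1 * (-(r*(r+δ)))) := by
              ring
            rw [heq]
            exact hsum
          rw [intervalIntegral.integral_eq_sub_of_hasDerivAt hQ (by
            apply Continuous.intervalIntegrable
            exact continuous_const.mul ((continuous_id.sub continuous_const).mul
              (continuous_const.sub continuous_id)))]
          have hδne : δ ≠ 0 := hδ0.ne'
          field_simp
          ring
        set χ : ℝ → ℝ := fun s => 1 - ∫ u in (0:ℝ)..s, β u with hχdef
        have hχd : ∀ s, HasDerivAt χ (-(β s)) s := by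
          intro s
          have h := intervalIntegral.integral_hasDerivAt_right
            (hβcont.intervalIntegrable 0 s)
            (hβcont.stronglyMeasurable.stronglyMeasurableAtFilter)
            hβcont.continuousAt
          exact h.const_sub 1
        have hχcont : Continuous χ := by
          have hdiff : Differentiable ℝ χ := fun s => (hχd s).differentiableAt
          exact hdiff.continuous
        have hint0r : (∫ u in (0:ℝ)..r, β u) = 0 := by
          have hEq : Set.EqOn β (fun _ => (0:ℝ)) (Set.uIcc 0 r) := by
            intro u hu
            rw [Set.uIcc_of_le hr.1] at hu
            exact hβleft u hu.2
          rw [intervalIntegral.integral_congr hEq]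
          simp
        have hχ1 : ∀ s, 0 ≤ s → s ≤ r → χ s = 1 := by
          intro s h0 hsr
          have hz : (∫ u in (0:ℝ)..s, β u) = 0 := by
            have hEq : Set.EqOn β (fun _ => (0:ℝ)) (Set.uIcc 0 s) := by
              intro u hu
              rw [Set.uIcc_of_le h0] at hu
              exact hβleft u (le_trans hu.2 hsr)
            rw [intervalIntegral.integral_congr hEq]
            simp
          simp only [hχdef, hz, sub_zero]
        have hint0rδ : (∫ u in (0:ℝ)..(r+δ), β u) = 1 := by
          rw [← intervalIntegral.integral_add_adjacent_intervals
            (hβcont.intervalIntegrable 0 r) (hβcont.intervalIntegrable r (r+δ)), hint0r, htent]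
          norm_num
        have hχ0 : ∀ s, r + δ ≤ s → χ s = 0 := by
          intro s hs
          have h1 : (∫ u in (0:ℝ)..s, β u) = 1 := by
            rw [← intervalIntegral.integral_add_adjacent_intervals
              (hβcont.intervalIntegrable 0 (r+δ)) (hβcont.intervalIntegrable (r+δ) s), hint0rδ]
            have hz : (∫ u in (r+δ)..s, β u) = 0 := by
              have hEq : Set.EqOn β (fun _ => (0:ℝ)) (Set.uIcc (r+δ) s) := by
                intro u hu
                rw [Set.uIcc_of_le hs] at hu
                exact hβright u hu.1
              rw [intervalIntegral.integral_congr hEq]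
              simp
            rw [hz]
            norm_num
          simp only [hχdef, h1, sub_self]
        have hχbd : ∀ s, r ≤ s → s ≤ r + δ → |χ s| ≤ 1 := by
          intro s hs1 hs2
          have hsplit : (∫ u in (0:ℝ)..s, β u) = ∫ u in r..s, β u := by
            rw [← intervalIntegral.integral_add_adjacent_intervals
              (hβcont.intervalIntegrable 0 r) (hβcont.intervalIntegrable r s), hint0r, zero_add]
          have hge : 0 ≤ ∫ u in r..s, β u :=
            intervalIntegral.integral_nonneg hs1 (fun u _ => hβnn u)
          have hle : (∫ u in r..s, β u) ≤ 1 := by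
            rw [← htent, ← intervalIntegral.integral_add_adjacent_intervals
              (hβcont.intervalIntegrable r s) (hβcont.intervalIntegrable s (r+δ))]
            have h0 : 0 ≤ ∫ u in s..(r+δ), β u :=
              intervalIntegral.integral_nonneg hs2 (fun u _ => hβnn u)
            linarith
          have hval : χ s = 1 - ∫ u in r..s, β u := by
            simp only [hχdef, hsplit]
          rw [hval, abs_le]
          constructor <;> linarith
        have hw := hWeak f χ (fun s => -(β s)) hχcont hβcont.neg hχd
        have hχT : χ T₀ = 0 := hχ0 T₀ hδT
        have hχZ : χ 0 = 1 := hχ1 0 le_rfl hr.1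
        rw [hχT, hχZ] at hw
        have hrδ0 : (0:ℝ) ≤ r + δ := by linarith [hr.1]
        have hrrδ : r ≤ r + δ := by linarith
        have hIA : ∀ a b : ℝ, 0 ≤ a → a ≤ b → b ≤ T₀ →
            IntervalIntegrable (fun s => π s ((-(β s)) • f)) volume a b :=
          fun a b ha hab hb => hII _ ((hβcont.neg.smul continuous_const).continuousOn) ha hab hb
        have hIC : ∀ a b : ℝ, 0 ≤ a → a ≤ b → b ≤ T₀ →
            IntervalIntegrable (fun s => π s (χ s • ((P₁ - P₂) f))) volume a b :=
          fun a b ha hab hb => hII _ ((hχcont.smul continuous_const).continuousOn) ha hab hb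
        have hsum : (∫ s in (0:ℝ)..T₀, (π s ((-(β s)) • f) + π s (χ s • ((P₁ - P₂) f))))
            = (∫ s in (0:ℝ)..T₀, π s ((-(β s)) • f))
              + ∫ s in (0:ℝ)..T₀, π s (χ s • ((P₁ - P₂) f)) :=
          intervalIntegral.integral_add (hIA 0 T₀ le_rfl hT₀.le le_rfl)
            (hIC 0 T₀ le_rfl hT₀.le le_rfl)
        have hA0 : (∫ s in (0:ℝ)..r, π s ((-(β s)) • f)) = 0 := by
          have hEq : Set.EqOn (fun s => π s ((-(β s)) • f)) (fun _ => (0:ℝ)) (Set.uIcc 0 r) := by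
            intro u hu
            rw [Set.uIcc_of_le hr.1] at hu
            show π u ((-(β u)) • f) = 0
            rw [hβleft u hu.2]
            simp
          rw [intervalIntegral.integral_congr hEq]
          simp
        have hA2 : (∫ s in (r+δ)..T₀, π s ((-(β s)) • f)) = 0 := by
          have hEq : Set.EqOn (fun s => π s ((-(β s)) • f)) (fun _ => (0:ℝ))
              (Set.uIcc (r+δ) T₀) := by
            intro u hu
            rw [Set.uIcc_of_le hδT] at hu
            show π u ((-(β u)) • f) = 0
            rw [hβright u hu.1]
            simp
          rw [intervalIntegral.integral_congr hEq]
          simp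
        have hAsplit : (∫ s in (0:ℝ)..T₀, π s ((-(β s)) • f))
            = ∫ s in r..(r+δ), π s ((-(β s)) • f) := by
          rw [← intervalIntegral.integral_add_adjacent_intervals
            (hIA 0 r le_rfl hr.1 hr.2) (hIA r T₀ hr.1 hr.2 le_rfl), hA0, zero_add,
            ← intervalIntegral.integral_add_adjacent_intervals
            (hIA r (r+δ) hr.1 hrrδ hδT) (hIA (r+δ) T₀ hrδ0 hδT le_rfl), hA2, add_zero]
        have hβint1 : (∫ s in r..(r+δ), β s * (π r f)) = π r f := by
          rw [intervalIntegral.integral_mul_const, htent, one_mul]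
        have hAmid : |(∫ s in r..(r+δ), π s ((-(β s)) • f)) + π r f| ≤ ε := by
          have hIβf : IntervalIntegrable (fun s => π s ((β s) • f)) volume r (r+δ) :=
            hII _ ((hβcont.smul continuous_const).continuousOn) hr.1 hrrδ hδT
          have hIβc : IntervalIntegrable (fun s => β s * (π r f)) volume r (r+δ) :=
            (hβcont.mul continuous_const).intervalIntegrable _ _
          have he1 : (∫ s in r..(r+δ), π s ((-(β s)) • f)) + π r f
              = - ∫ s in r..(r+δ), (π s ((β s) • f) - β s * (π r f)) := by
            rw [intervalIntegral.integral_sub hIβf hIβc, hβint1]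
            have hneg : (fun s => π s ((-(β s)) • f)) = fun s => -(π s ((β s) • f)) := by
              funext s
              rw [show ((-(β s)) • f) = -((β s) • f) from by rw [neg_smul], map_neg]
            rw [hneg, intervalIntegral.integral_neg]
            ring
          rw [he1, abs_neg]
          have hptb : ∀ᵐ u ∂volume.restrict (Set.uIoc r (r+δ)),
              ‖π u ((β u) • f) - β u * (π r f)‖ ≤ β u * ε := by
            refine (ae_restrict_mem measurableSet_uIoc).mono fun u hu => ?_
            rw [Set.uIoc_of_le hrrδ] at hu
            have hu1 : r ≤ u := hu.1.le
            have hu2 : dist u r < δ₁ := by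
              rw [Real.dist_eq, abs_of_nonneg (by linarith)]
              linarith [hu.2]
            have hcl := hrc (Set.mem_Ici.mpr hu1) hu2
            rw [Real.dist_eq] at hcl
            have happ : π u ((β u) • f) = β u * (π u f) := by
              rw [ContinuousLinearMap.map_smul]
              rfl
            rw [happ, Real.norm_eq_abs, ← mul_sub, abs_mul, abs_of_nonneg (hβnn u)]
            exact mul_le_mul_of_nonneg_left (le_of_lt hcl) (hβnn u)
          have hnr := intervalIntegral.norm_integral_le_abs_of_norm_le hptb
            ((hβcont.mul continuous_const).intervalIntegrable _ _)
          have hβε : (∫ u in r..(r+δ), β u * ε) = ε := by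
            rw [intervalIntegral.integral_mul_const, htent, one_mul]
          rw [hβε, Real.norm_eq_abs, abs_of_pos hε] at hnr
          exact hnr
        have hC0 : (∫ s in (0:ℝ)..r, π s (χ s • ((P₁ - P₂) f)))
            = ∫ s in (0:ℝ)..r, π s ((P₁ - P₂) f) := by
          apply intervalIntegral.integral_congr
          intro u hu
          rw [Set.uIcc_of_le hr.1] at hu
          show π u (χ u • ((P₁ - P₂) f)) = π u ((P₁ - P₂) f)
          rw [hχ1 u hu.1 hu.2, one_smul]
        have hC2 : (∫ s in (r+δ)..T₀, π s (χ s • ((P₁ - P₂) f))) = 0 := by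
          have hEq : Set.EqOn (fun s => π s (χ s • ((P₁ - P₂) f))) (fun _ => (0:ℝ))
              (Set.uIcc (r+δ) T₀) := by
            intro u hu
            rw [Set.uIcc_of_le hδT] at hu
            show π u (χ u • ((P₁ - P₂) f)) = 0
            rw [hχ0 u hu.1]
            simp
          rw [intervalIntegral.integral_congr hEq]
          simp
        have hCsplit : (∫ s in (0:ℝ)..T₀, π s (χ s • ((P₁ - P₂) f)))
            = (∫ s in (0:ℝ)..r, π s ((P₁ - P₂) f))
              + ∫ s in r..(r+δ), π s (χ s • ((P₁ - P₂) f)) := by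
          rw [← intervalIntegral.integral_add_adjacent_intervals
            (hIC 0 r le_rfl hr.1 hr.2) (hIC r T₀ hr.1 hr.2 le_rfl), hC0,
            ← intervalIntegral.integral_add_adjacent_intervals
            (hIC r (r+δ) hr.1 hrrδ hδT) (hIC (r+δ) T₀ hrδ0 hδT le_rfl), hC2, add_zero]
        have hCmid : |∫ s in r..(r+δ), π s (χ s • ((P₁ - P₂) f))| ≤ ε := by
          have hb : ∀ s ∈ Set.uIoc r (r+δ), ‖π s (χ s • ((P₁ - P₂) f))‖ ≤ Kk := by
            intro s hs
            rw [Set.uIoc_of_le hrrδ] at hs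
            have hsI : s ∈ Set.Icc (0:ℝ) T₀ :=
              ⟨le_trans hr.1 hs.1.le, le_trans hs.2 hδT⟩
            have hn : ‖χ s • ((P₁ - P₂) f)‖ ≤ ‖(P₁ - P₂) f‖ := by
              have := norm_smul (χ s) ((P₁ - P₂) f)
              rw [this, Real.norm_eq_abs]
              calc |χ s| * ‖(P₁ - P₂) f‖ ≤ 1 * ‖(P₁ - P₂) f‖ :=
                    mul_le_mul_of_nonneg_right (hχbd s hs.1.le hs.2) (norm_nonneg _)
                _ = ‖(P₁ - P₂) f‖ := one_mul _
            calc ‖π s (χ s • ((P₁ - P₂) f))‖ ≤ ‖π s‖ * ‖χ s • ((P₁ - P₂) f)‖ :=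
                  (π s).le_opNorm _
              _ ≤ Mp * ‖(P₁ - P₂) f‖ :=
                  mul_le_mul (hMp s hsI) hn (norm_nonneg _) hMp0
          have hnr := intervalIntegral.norm_integral_le_of_norm_le_const hb
          rw [Real.norm_eq_abs] at hnr
          calc |∫ s in r..(r+δ), π s (χ s • ((P₁ - P₂) f))| ≤ Kk * |r + δ - r| := hnr
            _ = δ * Kk := by
                rw [show r + δ - r = δ from by ring, abs_of_pos hδ0]
                ring
            _ ≤ ε := hδk
        rw [hsum, hAsplit, hCsplit] at hw
        have hfinal : π r f - (π 0 f + ∫ s in (0:ℝ)..r, π s ((P₁ - P₂) f))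
            = ((∫ s in r..(r+δ), π s ((-(β s)) • f)) + π r f)
              + ∫ s in r..(r+δ), π s (χ s • ((P₁ - P₂) f)) := by
          linarith [hw]
        rw [hfinal]
        calc |((∫ s in r..(r+δ), π s ((-(β s)) • f)) + π r f)
              + ∫ s in r..(r+δ), π s (χ s • ((P₁ - P₂) f))|
            ≤ |(∫ s in r..(r+δ), π s ((-(β s)) • f)) + π r f|
              + |∫ s in r..(r+δ), π s (χ s • ((P₁ - P₂) f))| := abs_add_le _ _
          _ ≤ 2*ε := by linarith
      have h0 : |π r f - (π 0 f + ∫ s in (0:ℝ)..r, π s ((P₁ - P₂) f))| ≤ 0 := by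
        apply le_of_forall_pos_le_add
        intro ε hε
        have := key (ε/2) (by linarith)
        linarith
      have := abs_eq_zero.mp (le_antisymm h0 (abs_nonneg _))
      linarith [sub_eq_zero.mp this]
  -- Step E : uniqueness via iteration
  intro t ht
  have hdiff : ∀ (g : CI), ∀ r ∈ Set.Icc (0:ℝ) T₀,
      π r g - μ r g = ∫ s in (0:ℝ)..r, (π s ((P₁ - P₂) g) - μ s ((P₁ - P₂) g)) := by
    intro g r hrr
    have h1 := hIdent g r hrr
    have h2 := hμ r hrr g
    have h3 := hInit g
    have hIπ : IntervalIntegrable (fun s => π s ((P₁ - P₂) g)) volume 0 r :=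
      hII (fun _ => (P₁ - P₂) g) continuousOn_const le_rfl hrr.1 hrr.2
    have hIμ : IntervalIntegrable (fun s => μ s ((P₁ - P₂) g)) volume 0 r := by
      apply ContinuousOn.intervalIntegrable
      have hco : ContinuousOn (fun s => μ s ((P₁ - P₂) g)) (Set.Icc (0:ℝ) T₀) :=
        (ContinuousLinearMap.apply ℝ ℝ ((P₁ - P₂) g)).continuous.comp_continuousOn hμc
      apply hco.mono
      rw [Set.uIcc_of_le hrr.1]
      exact Set.Icc_subset_Icc le_rfl hrr.2
    rw [intervalIntegral.integral_sub hIπ hIμ]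
    linarith
  have hbound : ∀ (n : ℕ) (g : CI), ∀ r ∈ Set.Icc (0:ℝ) T₀,
      |π r g - μ r g| ≤ (Mp + Mm) * ‖P₁ - P₂‖^n * ‖g‖ * r^n / (n.factorial : ℝ) := by
    intro n
    induction n with
    | zero =>
      intro g r hrr
      simp only [pow_zero, Nat.factorial_zero, Nat.cast_one, mul_one, div_one, one_mul]
      have ha : |π r g| ≤ Mp * ‖g‖ := by
        have h1 := (π r).le_opNorm g
        have h2 := hMp r hrr
        rw [Real.norm_eq_abs] at h1
        calc |π r g| ≤ ‖π r‖ * ‖g‖ := h1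
          _ ≤ Mp * ‖g‖ := mul_le_mul_of_nonneg_right h2 (norm_nonneg _)
      have hb : |μ r g| ≤ Mm * ‖g‖ := by
        have h1 := (μ r).le_opNorm g
        have h2 := hMm r hrr
        rw [Real.norm_eq_abs] at h1
        calc |μ r g| ≤ ‖μ r‖ * ‖g‖ := h1
          _ ≤ Mm * ‖g‖ := mul_le_mul_of_nonneg_right h2 (norm_nonneg _)
      calc |π r g - μ r g| ≤ |π r g| + |μ r g| := abs_sub _ _
        _ ≤ (Mp + Mm) * ‖g‖ := by linarith
    | succ n ih =>
      intro g r hrr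
      rw [hdiff g r hrr]
      have hb : ∀ᵐ s ∂volume.restrict (Set.uIoc 0 r),
          ‖π s ((P₁ - P₂) g) - μ s ((P₁ - P₂) g)‖
            ≤ (Mp + Mm) * ‖P₁ - P₂‖^n * ‖(P₁ - P₂) g‖ * s^n / (n.factorial : ℝ) := by
        refine (ae_restrict_mem measurableSet_uIoc).mono fun s hs => ?_
        rw [Set.uIoc_of_le hrr.1] at hs
        have hsI : s ∈ Set.Icc (0:ℝ) T₀ := ⟨hs.1.le, le_trans hs.2 hrr.2⟩
        simpa [Real.norm_eq_abs] using ih ((P₁ - P₂) g) s hsI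
      have hgI : IntervalIntegrable
          (fun s => (Mp + Mm) * ‖P₁ - P₂‖^n * ‖(P₁ - P₂) g‖ * s^n / (n.factorial : ℝ))
          volume 0 r := by
        apply Continuous.intervalIntegrable
        exact ((continuous_const.mul (continuous_pow n)).div_const _)
      have hnr := intervalIntegral.norm_integral_le_abs_of_norm_le hb hgI
      have hci : (∫ s in (0:ℝ)..r,
            (Mp + Mm) * ‖P₁ - P₂‖^n * ‖(P₁ - P₂) g‖ * s^n / (n.factorial : ℝ))
          = ((Mp + Mm) * ‖P₁ - P₂‖^n * ‖(P₁ - P₂) g‖ / (n.factorial : ℝ))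
              * (r^(n+1) / ((n:ℝ)+1)) := by
        have hfn : (fun s : ℝ => (Mp + Mm) * ‖P₁ - P₂‖^n * ‖(P₁ - P₂) g‖ * s^n
              / (n.factorial : ℝ))
            = fun s => ((Mp + Mm) * ‖P₁ - P₂‖^n * ‖(P₁ - P₂) g‖ / (n.factorial : ℝ)) * s^n := by
          funext s; ring
        rw [hfn, intervalIntegral.integral_const_mul, integral_pow]
        ring
      have hMpMm : (0:ℝ) ≤ Mp + Mm := by linarith
      have hLg : ‖(P₁ - P₂) g‖ ≤ ‖P₁ - P₂‖ * ‖g‖ := (P₁ - P₂).le_opNorm g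
      have hr0 : (0:ℝ) ≤ r := hrr.1
      have hfact : ((n+1).factorial : ℝ) = ((n:ℝ)+1) * (n.factorial : ℝ) := by
        rw [Nat.factorial_succ]; push_cast; ring
      calc |∫ s in (0:ℝ)..r, (π s ((P₁ - P₂) g) - μ s ((P₁ - P₂) g))|
          ≤ |∫ s in (0:ℝ)..r, (Mp + Mm) * ‖P₁ - P₂‖^n * ‖(P₁ - P₂) g‖ * s^n
              / (n.factorial : ℝ)| := by
            rw [← Real.norm_eq_abs]
            exact hnr
        _ = ((Mp + Mm) * ‖P₁ - P₂‖^n * ‖(P₁ - P₂) g‖ / (n.factorial : ℝ))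
              * (r^(n+1) / ((n:ℝ)+1)) := by
            rw [hci, abs_of_nonneg (by positivity)]
        _ ≤ ((Mp + Mm) * ‖P₁ - P₂‖^(n+1) * ‖g‖ / (n.factorial : ℝ))
              * (r^(n+1) / ((n:ℝ)+1)) := by
            apply mul_le_mul_of_nonneg_right _ (by positivity)
            have hnum : (Mp + Mm) * ‖P₁ - P₂‖^n * ‖(P₁ - P₂) g‖
                ≤ (Mp + Mm) * ‖P₁ - P₂‖^(n+1) * ‖g‖ := by
              calc (Mp + Mm) * ‖P₁ - P₂‖^n * ‖(P₁ - P₂) g‖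
                  ≤ (Mp + Mm) * ‖P₁ - P₂‖^n * (‖P₁ - P₂‖ * ‖g‖) :=
                    mul_le_mul_of_nonneg_left hLg (by positivity)
                _ = (Mp + Mm) * ‖P₁ - P₂‖^(n+1) * ‖g‖ := by rw [pow_succ]; ring
            have hfp : (0:ℝ) < (n.factorial : ℝ) :=
              Nat.cast_pos.mpr n.factorial_pos
            exact (div_le_div_iff_of_pos_right hfp).mpr hnum
        _ = (Mp + Mm) * ‖P₁ - P₂‖^(n+1) * ‖g‖ * r^(n+1) / ((n+1).factorial : ℝ) := by
            rw [hfact, div_mul_div_comm]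
            ring
  have hzl : ∀ g : CI, π t g = μ t g := by
    intro g
    have hlim : Tendsto (fun n : ℕ =>
        (Mp + Mm) * ‖P₁ - P₂‖^n * ‖g‖ * t^n / (n.factorial : ℝ)) atTop (nhds 0) := by
      have h1 : (fun n : ℕ => (Mp + Mm) * ‖P₁ - P₂‖^n * ‖g‖ * t^n / (n.factorial : ℝ))
          = fun n => ((Mp + Mm) * ‖g‖) * ((‖P₁ - P₂‖ * t)^n / (n.factorial : ℝ)) := by
        funext n; rw [mul_pow]; ring
      rw [h1]
      have h2 := FloorSemiring.tendsto_pow_div_factorial_atTop (K := ℝ) (‖P₁ - P₂‖ * t)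
      simpa using h2.const_mul ((Mp + Mm) * ‖g‖)
    have hub : ∀ n : ℕ, |π t g - μ t g|
        ≤ (Mp + Mm) * ‖P₁ - P₂‖^n * ‖g‖ * t^n / (n.factorial : ℝ) :=
      fun n => hbound n g t ht
    have h0 : |π t g - μ t g| ≤ 0 := ge_of_tendsto' hlim hub
    have := abs_eq_zero.mp (le_antisymm h0 (abs_nonneg _))
    linarith [sub_eq_zero.mp this]
  exact ContinuousLinearMap.ext hzl
end
end

section
/- Let ν ∈ 𝒮 satisfy ν(f) ≤ ∫₀¹ φ(x)(e^{f(x)} − 1) dx for every f ∈ C([0,1]) (equivalently, J_ini(ν) = 0). Then ν(f) = ∫₀¹ φ(x) f(x) dx for every f ∈ C([0,1]). -/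
open MeasureTheory

noncomputable section

/-!
Minimisation at the origin forces the first variation to vanish. For fixed `f` the function
`t ↦ ∫ φ (e^{t f} - 1) - t ν(f)` is nonnegative and vanishes at `t = 0`, so its derivative
`∫ φ f - ν(f)` there is zero (Fermat); the derivative is computed by differentiating under the
integral sign, dominated by a constant on `|t| < 1`.
-/

theorem hasDerivAt_integral_mul_exp_mul_sub_one {X : Type*} [TopologicalSpace X] [CompactSpace X]
    [MeasurableSpace X] [OpensMeasurableSpace X] (μ : Measure X) [IsFiniteMeasure μ]
    (φ f : C(X, ℝ)) :
    HasDerivAt (fun t : ℝ => ∫ x, φ x * (Real.exp (t * f x) - 1) ∂μ) (∫ x, φ x * f x ∂μ) 0 := by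
  have hderiv (x : X) (t : ℝ) : HasDerivAt (fun t => φ x * (Real.exp (t * f x) - 1))
      (φ x * (Real.exp (t * f x) * f x)) t := by
    simpa using (((hasDerivAt_id t).mul_const (f x)).exp.sub_const 1).const_mul (φ x)
  have hbound (x : X) (t : ℝ) (ht : t ∈ Metric.ball (0 : ℝ) 1) :
      ‖φ x * (Real.exp (t * f x) * f x)‖ ≤ ‖φ‖ * (Real.exp ‖f‖ * ‖f‖) := by
    have hfx : |f x| ≤ ‖f‖ := f.norm_coe_le_norm x
    have ht : |t| ≤ 1 := (mem_ball_zero_iff.mp ht).le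
    have hexp : Real.exp (t * f x) ≤ Real.exp ‖f‖ := Real.exp_le_exp.mpr <| by
      calc t * f x ≤ |t| * |f x| := by rw [← abs_mul]; exact le_abs_self _
        _ ≤ 1 * ‖f‖ := by gcongr
        _ = ‖f‖ := one_mul _
    rw [norm_mul, norm_mul, Real.norm_of_nonneg (Real.exp_pos _).le]
    gcongr
    · exact φ.norm_coe_le_norm x
    · exact f.norm_coe_le_norm x
  have key := hasDerivAt_integral_of_dominated_loc_of_deriv_le (μ := μ) (x₀ := (0 : ℝ))
    (F := fun t x => φ x * (Real.exp (t * f x) - 1))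
    (F' := fun t x => φ x * (Real.exp (t * f x) * f x))
    (Metric.ball_mem_nhds 0 one_pos)
    (Filter.Eventually.of_forall fun t => by fun_prop)
    (by simp) (by fun_prop)
    (Filter.Eventually.of_forall fun x => hbound x) (integrable_const _)
    (Filter.Eventually.of_forall fun x t _ => hderiv x t)
  simpa using key.2

theorem eq_of_le_of_hasDerivAt_smul {E : Type*} [AddCommGroup E] [Module ℝ E] (ν : E →ₗ[ℝ] ℝ)
    {Λ : E → ℝ} (hΛ0 : Λ 0 = 0) (hν : ∀ g, ν g ≤ Λ g) {f : E} {L : ℝ}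
    (hL : HasDerivAt (fun t : ℝ => Λ (t • f)) L 0) : ν f = L := by
  have hmin : IsLocalMin (fun t : ℝ => Λ (t • f) - t * ν f) 0 :=
    Filter.Eventually.of_forall fun t => by
      simpa [hΛ0, ← map_smul] using hν (t • f)
  have hcrit := hmin.hasDerivAt_eq_zero (hL.sub ((hasDerivAt_id 0).mul_const (ν f)))
  simp only [one_mul] at hcrit
  linarith

theorem zero_initial_rate_implies_density_general
    (φ : CI) (ν : S)
    (h : ∀ f : CI, ν f ≤ ∫ x : I01, φ x * (Real.exp (f x) - 1)) :
    ∀ f : CI, ν f = ∫ x : I01, φ x * f x := by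
  intro f
  refine eq_of_le_of_hasDerivAt_smul ν.toLinearMap (by simp) h ?_
  simpa only [ContinuousMap.smul_apply, smul_eq_mul] using
    hasDerivAt_integral_mul_exp_mul_sub_one volume φ f

/-- If `ν ∈ 𝒮` satisfies `ν(f) ≤ ∫₀¹ φ(x)(e^{f(x)} - 1) dx` for every `f ∈ C([0,1])`
(equivalently `J_ini(ν) = 0`), then `ν(f) = ∫₀¹ φ f` for every `f ∈ C([0,1])`. -/
theorem zero_initial_rate_implies_density
    (φ : CI) (hφ : ∀ x, 0 < φ x) (ν : S)
    (h : ∀ f : CI, ν f ≤ ∫ x : I01, φ x * (Real.exp (f x) - 1)) :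
    ∀ f : CI, ν f = ∫ x : I01, φ x * f x :=
  zero_initial_rate_implies_density_general φ ν h
end
end

section
/- Let π : [0,T₀] → 𝒮 be such that for every f ∈ C([0,1]) the map t ↦ π_t(f) is bounded, measurable and right-continuous. Suppose π₀(f) = ∫₀¹ φ f for all f ∈ C([0,1]), and for every h ∈ C¹([0,T₀]) and every f ∈ C([0,1]), h(T₀)π_{T₀}(f) − h(0)π₀(f) − ∫₀^{T₀} h'(s) π_s(f) ds = ∫₀^{T₀} h(s) π_s((P₁−P₂)f) ds. Then for each f ∈ C([0,1]) the map t ↦ π_t(f) is differentiable with derivative π_t((P₁−P₂)f), and π_t = μ_t for all t ∈ [0,T₀]. -/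
open MeasureTheory

noncomputable section

section AuxLemmas

open Real Filter intervalIntegral


lemma expNegInvGlue_mono : Monotone expNegInvGlue := by
  intro x y hxy
  rcases le_or_gt x 0 with hx | hx
  · rw [expNegInvGlue.zero_of_nonpos hx]; exact expNegInvGlue.nonneg y
  · have hy : 0 < y := lt_of_lt_of_le hx hxy
    simp only [expNegInvGlue, if_neg (not_le.2 hx), if_neg (not_le.2 hy)]
    apply Real.exp_le_exp.2
    simp only [neg_le_neg_iff]
    exact inv_anti₀ hx hxy

lemma smoothTransition_mono : Monotone Real.smoothTransition := by
  intro x y hxy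
  unfold Real.smoothTransition
  rw [div_le_div_iff₀ (Real.smoothTransition.pos_denom x) (Real.smoothTransition.pos_denom y)]
  have h1 : expNegInvGlue x ≤ expNegInvGlue y := expNegInvGlue_mono hxy
  have h2 : expNegInvGlue (1 - y) ≤ expNegInvGlue (1 - x) :=
    expNegInvGlue_mono (by linarith)
  nlinarith [expNegInvGlue.nonneg x, expNegInvGlue.nonneg (1 - y), expNegInvGlue.nonneg y,
    expNegInvGlue.nonneg (1 - x)]

lemma deriv_nonneg_of_monotone' {f : ℝ → ℝ} {d x : ℝ} (hm : Monotone f)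
    (hd : HasDerivAt f d x) : 0 ≤ d := by
  have h := hasDerivAt_iff_tendsto_slope.1 hd
  have h2 : Tendsto (slope f x) (nhdsWithin x (Set.Ioi x)) (nhds d) :=
    h.mono_left (nhdsWithin_mono _ (fun y hy => ne_of_gt hy))
  refine ge_of_tendsto h2 ?_
  filter_upwards [self_mem_nhdsWithin] with y hy
  rw [slope_def_field]
  exact div_nonneg (by simpa using hm (le_of_lt hy)) (by linarith [Set.mem_Ioi.1 hy])

lemma intInt_gen {F : ℝ → ℝ} {a b : ℝ}
    (hF : AEStronglyMeasurable F (volume.restrict (Set.uIoc a b)))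
    {M : ℝ} (hM : ∀ s ∈ Set.uIoc a b, |F s| ≤ M) :
    IntervalIntegrable F volume a b := by
  rw [intervalIntegrable_iff]
  refine ⟨hF, ?_⟩
  refine HasFiniteIntegral.restrict_of_bounded (C := M) measure_Ioc_lt_top ?_
  refine (ae_restrict_iff' measurableSet_uIoc).2 ?_
  exact Filter.Eventually.of_forall fun s hs => by
    simpa [Real.norm_eq_abs] using hM s hs

lemma key_recon {T₀ : ℝ} {p A : ℝ → ℝ} (hT₀ : 0 < T₀)
    (hpmeas : AEStronglyMeasurable p (volume.restrict (Set.Icc 0 T₀)))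
    {Mp : ℝ} (hMp : ∀ s ∈ Set.Icc (0:ℝ) T₀, |p s| ≤ Mp)
    (hAmeas : AEStronglyMeasurable A (volume.restrict (Set.Icc 0 T₀)))
    {MA : ℝ} (hMA : ∀ s ∈ Set.Icc (0:ℝ) T₀, |A s| ≤ MA)
    (hrc : ∀ t ∈ Set.Icc (0:ℝ) T₀,
      Tendsto p (nhdsWithin t (Set.Ici t)) (nhds (p t)))
    (heq : ∀ h h' : ℝ → ℝ, ContinuousOn h' (Set.Icc 0 T₀) →
      (∀ t ∈ Set.Icc (0:ℝ) T₀, HasDerivWithinAt h (h' t) (Set.Icc 0 T₀) t) →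
        h T₀ * p T₀ - h 0 * p 0 - (∫ s in (0:ℝ)..T₀, h' s * p s)
          = ∫ s in (0:ℝ)..T₀, h s * A s) :
    ∀ t ∈ Set.Icc (0:ℝ) T₀, p t = p 0 + ∫ s in (0:ℝ)..t, A s := by
  have hMA0 : 0 ≤ MA := le_trans (abs_nonneg _) (hMA 0 ⟨le_rfl, hT₀.le⟩)
  intro t ht
  rcases eq_or_lt_of_le ht.2 with htT | htT
  · -- t = T₀ : use h ≡ 1
    have E := heq (fun _ => 1) (fun _ => 0) continuousOn_const
      (fun s _ => hasDerivWithinAt_const s _ 1)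
    simp only [one_mul, zero_mul, intervalIntegral.integral_zero, sub_zero] at E
    rw [htT]
    linarith
  · -- t < T₀
    have ht0 : 0 ≤ t := ht.1
    have main : ∀ η : ℝ, 0 < η →
        |p t - (p 0 + ∫ s in (0:ℝ)..t, A s)| ≤ η * (MA + 2) := by
      intro η hη
      have hrct := hrc t ht
      rw [Metric.tendsto_nhdsWithin_nhds] at hrct
      obtain ⟨δ, hδ0, hδ⟩ := hrct η hη
      obtain ⟨ε, hε0, hε1, hε2, hε3⟩ : ∃ ε : ℝ, 0 < ε ∧ t + ε ≤ T₀ ∧ ε < δ ∧ ε ≤ η := by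
        refine ⟨min (min (T₀ - t) η) (δ/2), ?_, ?_, ?_, ?_⟩
        · exact lt_min (lt_min (by linarith) hη) (by linarith)
        · linarith [le_trans (min_le_left (min (T₀ - t) η) (δ/2)) (min_le_left (T₀ - t) η)]
        · linarith [min_le_right (min (T₀ - t) η) (δ/2)]
        · exact le_trans (min_le_left _ _) (min_le_right _ _)
      set st := Real.smoothTransition with hstdef
      have hstd : Differentiable ℝ st :=
        (Real.smoothTransition.contDiff (n := 1)).differentiable one_ne_zero
      have hst'c : Continuous (deriv st) :=
        (Real.smoothTransition.contDiff (n := 1)).continuous_deriv le_rfl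
      have hst'nn : ∀ u, 0 ≤ deriv st u := fun u =>
        deriv_nonneg_of_monotone' smoothTransition_mono (hstd u).hasDerivAt
      set h : ℝ → ℝ := fun s => st ((t + ε - s) / ε) with hhdef
      set h' : ℝ → ℝ := fun s => deriv st ((t + ε - s) / ε) * (-1 / ε) with hh'def
      have hgder : ∀ s : ℝ, HasDerivAt (fun u => (t + ε - u) / ε) (-1 / ε) s := by
        intro s
        have := ((hasDerivAt_const s (t + ε)).sub (hasDerivAt_id s)).div_const ε
        simpa using this
      have hhder : ∀ s : ℝ, HasDerivAt h (h' s) s := fun s =>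
        HasDerivAt.comp s (hstd _).hasDerivAt (hgder s)
      have hh'cont : Continuous h' := by
        apply Continuous.mul _ continuous_const
        exact hst'c.comp (by fun_prop)
      have hhc : Continuous h := Real.smoothTransition.continuous.comp (by fun_prop)
      have hone : ∀ s, s ≤ t → h s = 1 := by
        intro s hs
        refine Real.smoothTransition.one_of_one_le ?_
        rw [le_div_iff₀ hε0]
        linarith
      have hzero : ∀ s, t + ε ≤ s → h s = 0 := by
        intro s hs
        refine Real.smoothTransition.zero_of_nonpos ?_
        apply div_nonpos_of_nonpos_of_nonneg <;> linarith
      have hnn : ∀ s, 0 ≤ h s := fun s => Real.smoothTransition.nonneg _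
      have hle1 : ∀ s, h s ≤ 1 := fun s => Real.smoothTransition.le_one _
      have hh'np : ∀ s, h' s ≤ 0 := by
        intro s
        have h1 := hst'nn ((t + ε - s) / ε)
        have h2 : (-1 : ℝ) / ε ≤ 0 := div_nonpos_of_nonpos_of_nonneg (by norm_num) hε0.le
        exact mul_nonpos_iff.2 (Or.inl ⟨h1, h2⟩)
      have hh'zero1 : ∀ s, s < t → h' s = 0 := by
        intro s hs
        have h1 : HasDerivAt h 0 s := by
          refine HasDerivAt.congr_of_eventuallyEq (hasDerivAt_const s (1:ℝ)) ?_
          filter_upwards [Iio_mem_nhds hs] with y hy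
          exact hone y (le_of_lt hy)
        exact (hhder s).unique h1
      have hh'zero2 : ∀ s, t + ε < s → h' s = 0 := by
        intro s hs
        have h1 : HasDerivAt h 0 s := by
          refine HasDerivAt.congr_of_eventuallyEq (hasDerivAt_const s (0:ℝ)) ?_
          filter_upwards [Ioi_mem_nhds hs] with y hy
          exact hzero y (le_of_lt hy)
        exact (hhder s).unique h1
      -- subset facts
      have hsub1 : Set.uIoc 0 t ⊆ Set.Icc 0 T₀ := by
        rw [Set.uIoc_of_le ht0]
        exact fun x hx => ⟨le_of_lt hx.1, le_trans hx.2 ht.2⟩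
      have hsub2 : Set.uIoc t (t + ε) ⊆ Set.Icc 0 T₀ := by
        rw [Set.uIoc_of_le (by linarith)]
        exact fun x hx => ⟨le_trans ht0 (le_of_lt hx.1), le_trans hx.2 hε1⟩
      have hsub3 : Set.uIoc (t + ε) T₀ ⊆ Set.Icc 0 T₀ := by
        rw [Set.uIoc_of_le hε1]
        exact fun x hx => ⟨by linarith [hx.1, hε0, ht0], hx.2⟩
      have hsub12 : Set.uIoc 0 (t + ε) ⊆ Set.Icc 0 T₀ := by
        rw [Set.uIoc_of_le (by linarith)]
        exact fun x hx => ⟨le_of_lt hx.1, le_trans hx.2 hε1⟩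
      -- bound for h'
      obtain ⟨Mh, hMh⟩ := (isCompact_Icc (a := (0:ℝ)) (b := T₀)).exists_bound_of_continuousOn
        hh'cont.continuousOn
      have hMh0 : 0 ≤ Mh := le_trans (norm_nonneg _) (hMh 0 ⟨le_rfl, hT₀.le⟩)
      -- integrability
      have hPint : ∀ a b : ℝ, Set.uIoc a b ⊆ Set.Icc 0 T₀ →
          IntervalIntegrable (fun s => h' s * p s) volume a b := by
        intro a b hab
        refine intInt_gen (M := Mh * max Mp 0) ?_ ?_
        · exact (hh'cont.aestronglyMeasurable.restrict).mul
            (hpmeas.mono_measure (Measure.restrict_mono hab le_rfl))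
        · intro s hs
          rw [abs_mul]
          refine mul_le_mul ?_ ?_ (abs_nonneg _) hMh0
          · simpa [Real.norm_eq_abs] using hMh s (hab hs)
          · exact le_trans (hMp s (hab hs)) (le_max_left _ _)
      have hQint : ∀ a b : ℝ, Set.uIoc a b ⊆ Set.Icc 0 T₀ →
          IntervalIntegrable (fun s => h s * A s) volume a b := by
        intro a b hab
        refine intInt_gen (M := MA) ?_ ?_
        · exact (hhc.aestronglyMeasurable.restrict).mul
            (hAmeas.mono_measure (Measure.restrict_mono hab le_rfl))
        · intro s hs
          rw [abs_mul, abs_of_nonneg (hnn s)]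
          calc h s * |A s| ≤ 1 * MA :=
                mul_le_mul (hle1 s) (hMA s (hab hs)) (abs_nonneg _) zero_le_one
            _ = MA := one_mul _
      -- apply heq
      have E := heq h h' hh'cont.continuousOn (fun s _ => (hhder s).hasDerivWithinAt)
      rw [hzero T₀ hε1, hone 0 ht0] at E
      simp only [zero_mul, one_mul, zero_sub] at E
      -- splits
      have splitP : (∫ s in (0:ℝ)..T₀, h' s * p s)
          = (∫ s in (0:ℝ)..t, h' s * p s) + (∫ s in t..(t + ε), h' s * p s)
            + ∫ s in (t + ε)..T₀, h' s * p s := by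
        rw [integral_add_adjacent_intervals (hPint 0 t hsub1) (hPint t (t + ε) hsub2),
          integral_add_adjacent_intervals (hPint 0 (t + ε) hsub12) (hPint (t + ε) T₀ hsub3)]
      have splitQ : (∫ s in (0:ℝ)..T₀, h s * A s)
          = (∫ s in (0:ℝ)..t, h s * A s) + (∫ s in t..(t + ε), h s * A s)
            + ∫ s in (t + ε)..T₀, h s * A s := by
        rw [integral_add_adjacent_intervals (hQint 0 t hsub1) (hQint t (t + ε) hsub2),
          integral_add_adjacent_intervals (hQint 0 (t + ε) hsub12) (hQint (t + ε) T₀ hsub3)]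
      -- zero pieces
      have hne : ∀ᵐ x : ℝ ∂volume, x ≠ t := by
        rw [ae_iff]
        have hset : {a : ℝ | ¬a ≠ t} = {t} := by ext x; simp
        rw [hset]
        exact Real.volume_singleton
      have z1 : (∫ s in (0:ℝ)..t, h' s * p s) = 0 := by
        have hcong := integral_congr_ae (μ := volume) (a := (0:ℝ)) (b := t)
          (f := fun s => h' s * p s) (g := fun _ => (0:ℝ)) ?_
        · simpa using hcong
        · filter_upwards [hne] with x hx hmem
          rw [Set.uIoc_of_le ht0] at hmem
          rw [hh'zero1 x (lt_of_le_of_ne hmem.2 hx), zero_mul]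
      have z3 : (∫ s in (t + ε)..T₀, h' s * p s) = 0 := by
        have hcong := integral_congr_ae (μ := volume) (a := t + ε) (b := T₀)
          (f := fun s => h' s * p s) (g := fun _ => (0:ℝ)) ?_
        · simpa using hcong
        · refine Eventually.of_forall fun x hx => ?_
          rw [Set.uIoc_of_le hε1] at hx
          show h' x * p x = (0:ℝ)
          rw [hh'zero2 x hx.1, zero_mul]
      -- FTC for h'
      have hFTC : (∫ s in t..(t + ε), h' s) = -1 := by
        rw [integral_eq_sub_of_hasDerivAt (fun x _ => hhder x)
          (hh'cont.intervalIntegrable _ _)]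
        rw [hzero (t + ε) le_rfl, hone t le_rfl]
        norm_num
      -- middle split for P
      have i1 : IntervalIntegrable (fun s => h' s * (p s - p t)) volume t (t + ε) := by
        refine intInt_gen (M := Mh * (max Mp 0 + |p t|)) ?_ ?_
        · exact (hh'cont.aestronglyMeasurable.restrict).mul
            ((hpmeas.mono_measure (Measure.restrict_mono hsub2 le_rfl)).sub
              aestronglyMeasurable_const)
        · intro s hs
          rw [abs_mul]
          refine mul_le_mul ?_ ?_ (abs_nonneg _) hMh0
          · simpa [Real.norm_eq_abs] using hMh s (hsub2 hs)
          · calc |p s - p t| ≤ |p s| + |p t| := abs_sub _ _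
              _ ≤ max Mp 0 + |p t| := by
                  gcongr
                  exact le_trans (hMp s (hsub2 hs)) (le_max_left _ _)
      have i2 : IntervalIntegrable (fun s => h' s * p t) volume t (t + ε) :=
        (hh'cont.mul continuous_const).intervalIntegrable _ _
      have mids : (∫ s in t..(t + ε), h' s * p s)
          = (∫ s in t..(t + ε), h' s * (p s - p t)) + ∫ s in t..(t + ε), h' s * p t := by
        rw [← integral_add i1 i2]
        congr 1
        funext s
        ring
      have mid2 : (∫ s in t..(t + ε), h' s * p t) = -p t := by
        rw [intervalIntegral.integral_mul_const, hFTC]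
        ring
      -- bound on K
      have hK : |∫ s in t..(t + ε), h' s * (p s - p t)| ≤ η := by
        have hb : ∀ᵐ s ∂volume.restrict (Set.uIoc t (t + ε)),
            ‖h' s * (p s - p t)‖ ≤ -h' s * η := by
          refine (ae_restrict_iff' measurableSet_uIoc).2 (Eventually.of_forall fun s hs => ?_)
          rw [Set.uIoc_of_le (by linarith)] at hs
          have hdist : |p s - p t| ≤ η := by
            have hd := hδ (le_of_lt hs.1) (by
              rw [Real.dist_eq, abs_of_nonneg (by linarith [hs.1.le])]
              linarith [hs.2])
            rw [Real.dist_eq] at hd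
            exact le_of_lt hd
          calc ‖h' s * (p s - p t)‖ = |h' s| * |p s - p t| := abs_mul _ _
            _ ≤ |h' s| * η := by gcongr
            _ = -h' s * η := by rw [abs_of_nonpos (hh'np s)]
        have hbnd := intervalIntegral.norm_integral_le_abs_of_norm_le hb
          ((hh'cont.neg.mul continuous_const).intervalIntegrable _ _)
        have hval : (∫ s in t..(t + ε), -h' s * η) = η := by
          rw [intervalIntegral.integral_mul_const, intervalIntegral.integral_neg, hFTC]
          ring
        rw [hval] at hbnd
        simpa [abs_of_pos hη, Real.norm_eq_abs] using hbnd
      -- RHS pieces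
      have q1 : (∫ s in (0:ℝ)..t, h s * A s) = ∫ s in (0:ℝ)..t, A s := by
        refine integral_congr fun s hs => ?_
        rw [Set.uIcc_of_le ht0] at hs
        rw [hone s hs.2, one_mul]
      have q3 : (∫ s in (t + ε)..T₀, h s * A s) = 0 := by
        have hcong : (∫ s in (t + ε)..T₀, h s * A s) = ∫ s in (t + ε)..T₀, (0:ℝ) := by
          refine integral_congr fun s hs => ?_
          rw [Set.uIcc_of_le hε1] at hs
          rw [hzero s hs.1, zero_mul]
        simpa using hcong
      have q2 : |∫ s in t..(t + ε), h s * A s| ≤ MA * ε := by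
        have hbnd := intervalIntegral.norm_integral_le_of_norm_le_const (C := MA)
          (f := fun s => h s * A s) (a := t) (b := t + ε) (fun x hx => by
            rw [Set.uIoc_of_le (by linarith)] at hx
            have hxIcc : x ∈ Set.Icc 0 T₀ := hsub2 (by rw [Set.uIoc_of_le (by linarith)]; exact hx)
            rw [Real.norm_eq_abs, abs_mul, abs_of_nonneg (hnn x)]
            calc h x * |A x| ≤ 1 * MA :=
                  mul_le_mul (hle1 x) (hMA x hxIcc) (abs_nonneg _) zero_le_one
              _ = MA := one_mul _)
        rw [Real.norm_eq_abs] at hbnd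
        have : |t + ε - t| = ε := by rw [abs_of_pos (by linarith)]; ring
        calc |∫ s in t..(t + ε), h s * A s| ≤ MA * |t + ε - t| := hbnd
          _ = MA * ε := by rw [this]
      -- assemble
      rw [splitP, splitQ, z1, z3, q1, q3, mids, mid2] at E
      have heq2 : p t - (p 0 + ∫ s in (0:ℝ)..t, A s)
          = (∫ s in t..(t + ε), h s * A s) + ∫ s in t..(t + ε), h' s * (p s - p t) := by
        linarith
      rw [heq2]
      calc |(∫ s in t..(t + ε), h s * A s) + ∫ s in t..(t + ε), h' s * (p s - p t)|
          ≤ |∫ s in t..(t + ε), h s * A s| + |∫ s in t..(t + ε), h' s * (p s - p t)| :=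
            abs_add_le _ _
        _ ≤ MA * ε + η := add_le_add q2 hK
        _ ≤ η * (MA + 2) := by nlinarith
    have hpos : (0:ℝ) < MA + 2 := by linarith
    have habs : |p t - (p 0 + ∫ s in (0:ℝ)..t, A s)| ≤ 0 := by
      refine le_of_forall_pos_le_add ?_
      intro c hc
      have h1 := main (c / (MA + 2)) (by positivity)
      rw [div_mul_cancel₀ _ (ne_of_gt hpos)] at h1
      linarith
    have h2 : p t - (p 0 + ∫ s in (0:ℝ)..t, A s) = 0 :=
      abs_eq_zero.1 (le_antisymm habs (abs_nonneg _))
    linarith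

end AuxLemmas

open Filter intervalIntegral

/-- If `π` is a bounded measurable right-continuous path with `π₀ = φ dx` satisfying the weak
formulation of the hydrodynamic equation against all `h ∈ C¹([0,T₀])` and `f ∈ C([0,1])`, then
`t ↦ π_t(f)` is differentiable with derivative `π_t((P₁-P₂)f)` and `π = μ`. -/
theorem weak_solution_is_hydrodynamic_limit
    (lam : C(I01 × I01, ℝ)) (hlam : ∀ p, 0 < lam p)
    (φ : CI) (hφ : ∀ x, 0 < φ x)
    (T₀ : ℝ) (hT₀ : 0 < T₀)
    (P₁ P₂ : CI →L[ℝ] CI)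
    (hP₁ : ∀ (f : CI) (x : I01), P₁ f x = ∫ y : I01, lam (x, y) * f y)
    (hP₂ : ∀ (f : CI) (x : I01), P₂ f x = f x * ∫ y : I01, lam (x, y))
    (μ : ℝ → S) (hμc : ContinuousOn μ (Set.Icc 0 T₀))
    (hμ : ∀ t ∈ Set.Icc (0:ℝ) T₀, ∀ f : CI,
      μ t f = (∫ x : I01, f x * φ x) + ∫ s in (0:ℝ)..t, μ s ((P₁ - P₂) f))
    (π : ℝ → S)
    (hbdd : ∀ f : CI, ∃ M : ℝ, ∀ t ∈ Set.Icc (0:ℝ) T₀, |π t f| ≤ M)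
    (hmeas : ∀ f : CI, AEStronglyMeasurable (fun t => π t f)
      (volume.restrict (Set.Icc (0:ℝ) T₀)))
    (hrc : ∀ f : CI, ∀ t ∈ Set.Icc (0:ℝ) T₀,
      Filter.Tendsto (fun s => π s f) (nhdsWithin t (Set.Ici t)) (nhds (π t f)))
    (hinit : ∀ f : CI, π 0 f = ∫ x : I01, φ x * f x)
    (heq : ∀ h h' : ℝ → ℝ, ContinuousOn h' (Set.Icc 0 T₀) →
      (∀ t ∈ Set.Icc (0:ℝ) T₀, HasDerivWithinAt h (h' t) (Set.Icc 0 T₀) t) →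
      ∀ f : CI,
        h T₀ * π T₀ f - h 0 * π 0 f - ∫ s in (0:ℝ)..T₀, h' s * π s f
          = ∫ s in (0:ℝ)..T₀, h s * π s ((P₁ - P₂) f)) :
    (∀ f : CI, ∀ t ∈ Set.Icc (0:ℝ) T₀,
      HasDerivWithinAt (fun s => π s f) (π t ((P₁ - P₂) f)) (Set.Icc 0 T₀) t) ∧
    ∀ t ∈ Set.Icc (0:ℝ) T₀, π t = μ t := by
  have key : ∀ f : CI, ∀ t ∈ Set.Icc (0:ℝ) T₀,
      π t f = π 0 f + ∫ s in (0:ℝ)..t, π s ((P₁ - P₂) f) := by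
    intro f
    obtain ⟨Mp, hMp⟩ := hbdd f
    obtain ⟨MA, hMA⟩ := hbdd ((P₁ - P₂) f)
    exact key_recon hT₀ (hmeas f) hMp (hmeas ((P₁ - P₂) f)) hMA (hrc f)
      (fun h h' hc hd => heq h h' hc hd f)
  -- interval integrability of t ↦ π t g on subintervals
  have hIπ : ∀ (g : CI) (a b : ℝ), Set.uIoc a b ⊆ Set.Icc 0 T₀ →
      IntervalIntegrable (fun s => π s g) volume a b := by
    intro g a b hab
    obtain ⟨M, hM⟩ := hbdd g
    rw [intervalIntegrable_iff]
    refine ⟨(hmeas g).mono_measure (Measure.restrict_mono hab le_rfl), ?_⟩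
    refine HasFiniteIntegral.restrict_of_bounded (C := M) measure_Ioc_lt_top ?_
    refine (ae_restrict_iff' measurableSet_uIoc).2 (Filter.Eventually.of_forall fun s hs => ?_)
    simpa [Real.norm_eq_abs] using hM s (hab hs)
  -- continuity of t ↦ π t g on Icc
  have cont : ∀ g : CI, ContinuousOn (fun s => π s g) (Set.Icc 0 T₀) := by
    intro g
    have hInt : IntegrableOn (fun s => π s ((P₁ - P₂) g)) (Set.uIcc 0 T₀) volume := by
      rw [Set.uIcc_of_le hT₀.le]
      obtain ⟨M, hM⟩ := hbdd ((P₁ - P₂) g)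
      refine Integrable.mono' (g := fun _ => M)
        (integrableOn_const measure_Icc_lt_top.ne) (hmeas _) ?_
      refine (ae_restrict_iff' measurableSet_Icc).2 (Filter.Eventually.of_forall fun s hs => ?_)
      simpa [Real.norm_eq_abs] using hM s hs
    have hprim := continuousOn_primitive_interval (a := (0:ℝ)) (b := T₀)
      (f := fun s => π s ((P₁ - P₂) g)) (μ := volume) hInt
    rw [Set.uIcc_of_le hT₀.le] at hprim
    refine ((continuousOn_const (c := π 0 g)).add hprim).congr ?_
    intro y hy
    exact key g y hy
  -- derivative statement
  have deriv_part : ∀ f : CI, ∀ t ∈ Set.Icc (0:ℝ) T₀,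
      HasDerivWithinAt (fun s => π s f) (π t ((P₁ - P₂) f)) (Set.Icc 0 T₀) t := by
    intro f t ht
    haveI : Fact (t ∈ Set.Icc (0:ℝ) T₀) := ⟨ht⟩
    have hFTC : HasDerivWithinAt (fun u => ∫ s in (0:ℝ)..u, π s ((P₁ - P₂) f))
        (π t ((P₁ - P₂) f)) (Set.Icc 0 T₀) t := by
      refine intervalIntegral.integral_hasDerivWithinAt_right
        (hIπ ((P₁ - P₂) f) 0 t ?_) ⟨Set.Icc 0 T₀, self_mem_nhdsWithin, hmeas _⟩
        ((cont ((P₁ - P₂) f)) t ht)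
      rw [Set.uIoc_of_le ht.1]
      exact fun x hx => ⟨le_of_lt hx.1, le_trans hx.2 ht.2⟩
    refine HasDerivWithinAt.congr (hFTC.const_add (π 0 f)) (fun y hy => key f y hy) (key f t ht)
  refine ⟨deriv_part, ?_⟩
  -- uniform bound on ‖π s‖ by Banach–Steinhaus
  obtain ⟨Cπ, hCπ⟩ : ∃ Cb : ℝ, ∀ s ∈ Set.Icc (0:ℝ) T₀, ‖π s‖ ≤ Cb := by
    have hb : ∀ f : CI, ∃ Cb : ℝ, ∀ i : Set.Icc (0:ℝ) T₀, ‖π i f‖ ≤ Cb := by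
      intro f
      obtain ⟨M, hM⟩ := hbdd f
      exact ⟨M, fun i => by simpa [Real.norm_eq_abs] using hM i i.2⟩
    obtain ⟨Cb, hCb⟩ := banach_steinhaus hb
    exact ⟨Cb, fun s hs => hCb ⟨s, hs⟩⟩
  obtain ⟨Cμ, hCμ⟩ := (isCompact_Icc (a := (0:ℝ)) (b := T₀)).exists_bound_of_continuousOn (f := μ) hμc
  set C := Cπ + Cμ with hCdef
  have hC : ∀ s ∈ Set.Icc (0:ℝ) T₀, ‖π s - μ s‖ ≤ C := by
    intro s hs
    calc ‖π s - μ s‖ ≤ ‖π s‖ + ‖μ s‖ := @norm_sub_le S _ (π s) (μ s)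
      _ ≤ Cπ + Cμ := add_le_add (hCπ s hs) (hCμ s hs)
  have hC0 : 0 ≤ C := le_trans (@norm_nonneg S _ (π 0 - μ 0)) (hC 0 ⟨le_rfl, hT₀.le⟩)
  -- continuity of s ↦ μ s g
  have contμ : ∀ g : CI, ContinuousOn (fun s => μ s g) (Set.Icc 0 T₀) := by
    intro g
    exact (ContinuousLinearMap.apply ℝ ℝ g).continuous.comp_continuousOn hμc
  have contD : ∀ g : CI, ContinuousOn (fun s => (π s - μ s) g) (Set.Icc 0 T₀) := by
    intro g
    simp only [ContinuousLinearMap.sub_apply]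
    exact (cont g).sub (contμ g)
  -- the difference satisfies the homogeneous integral equation
  have Deq : ∀ f : CI, ∀ t ∈ Set.Icc (0:ℝ) T₀,
      (π t - μ t) f = ∫ s in (0:ℝ)..t, (π s - μ s) ((P₁ - P₂) f) := by
    intro f t ht
    have hsubIcc : Set.uIcc 0 t ⊆ Set.Icc 0 T₀ := by
      rw [Set.uIcc_of_le ht.1]
      exact Set.Icc_subset_Icc le_rfl ht.2
    have h1 : IntervalIntegrable (fun s => π s ((P₁ - P₂) f)) volume 0 t :=
      ((cont _).mono hsubIcc).intervalIntegrable
    have h2 : IntervalIntegrable (fun s => μ s ((P₁ - P₂) f)) volume 0 t :=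
      ((contμ _).mono hsubIcc).intervalIntegrable
    have h0 : π 0 f = ∫ x : I01, f x * φ x := by
      rw [hinit f]
      simp [mul_comm]
    have hsub : (∫ s in (0:ℝ)..t, π s ((P₁ - P₂) f)) - (∫ s in (0:ℝ)..t, μ s ((P₁ - P₂) f))
        = ∫ s in (0:ℝ)..t, (π s - μ s) ((P₁ - P₂) f) := by
      rw [← intervalIntegral.integral_sub h1 h2]
      simp [ContinuousLinearMap.sub_apply]
    calc (π t - μ t) f = π t f - μ t f := rfl
      _ = (∫ s in (0:ℝ)..t, π s ((P₁ - P₂) f)) - ∫ s in (0:ℝ)..t, μ s ((P₁ - P₂) f) := by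
          rw [key f t ht, hμ t ht f, h0]; ring
      _ = _ := hsub
  -- iterate the bound
  have bound : ∀ n : ℕ, ∀ t ∈ Set.Icc (0:ℝ) T₀, ∀ f : CI,
      |(π t - μ t) f| ≤ C * ‖P₁ - P₂‖ ^ n * ‖f‖ * t ^ n / n.factorial := by
    intro n
    induction n with
    | zero =>
      intro t ht f
      simp only [pow_zero, Nat.factorial_zero, Nat.cast_one, mul_one, div_one]
      calc |(π t - μ t) f| ≤ ‖π t - μ t‖ * ‖f‖ := (π t - μ t).le_opNorm f
        _ ≤ C * ‖f‖ := by gcongr; exact hC t ht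
    | succ n ih =>
      intro t ht f
      rw [Deq f t ht]
      have hbnd := intervalIntegral.norm_integral_le_abs_of_norm_le (μ := volume)
        (f := fun s => (π s - μ s) ((P₁ - P₂) f)) (a := 0) (b := t)
        (g := fun s => C * ‖P₁ - P₂‖ ^ n * ‖(P₁ - P₂) f‖ * s ^ n / n.factorial)
        ?_ ?_
      · have hval : (∫ s in (0:ℝ)..t, C * ‖P₁ - P₂‖ ^ n * ‖(P₁ - P₂) f‖ * s ^ n / n.factorial)
            = C * ‖P₁ - P₂‖ ^ n * ‖(P₁ - P₂) f‖ / n.factorial * (t ^ (n + 1) / (n + 1)) := by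
          have : (fun s : ℝ => C * ‖P₁ - P₂‖ ^ n * ‖(P₁ - P₂) f‖ * s ^ n / n.factorial)
              = fun s : ℝ => (C * ‖P₁ - P₂‖ ^ n * ‖(P₁ - P₂) f‖ / n.factorial) * s ^ n := by
            funext s; ring
          rw [this, intervalIntegral.integral_const_mul, integral_pow]
          ring
        rw [Real.norm_eq_abs] at hbnd
        refine le_trans hbnd ?_
        have hLf : ‖(P₁ - P₂) f‖ ≤ ‖P₁ - P₂‖ * ‖f‖ := (P₁ - P₂).le_opNorm f
        have ht0 : (0:ℝ) ≤ t := ht.1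
        have hfac : (0:ℝ) < n.factorial := by positivity
        have hN0 : (0:ℝ) ≤ ‖P₁ - P₂‖ := @norm_nonneg (CI →L[ℝ] CI) _ (P₁ - P₂)
        have hnn : (0:ℝ) < (n:ℝ) + 1 := by positivity
        have hval2 : (0:ℝ) ≤ C * ‖P₁ - P₂‖ ^ n * ‖(P₁ - P₂) f‖ / ↑n.factorial
            * (t ^ (n + 1) / ((n:ℝ) + 1)) :=
          mul_nonneg (div_nonneg (mul_nonneg (mul_nonneg hC0
            (pow_nonneg hN0 n)) (norm_nonneg _)) hfac.le)
            (div_nonneg (pow_nonneg ht0 _) hnn.le)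
        rw [hval, abs_of_nonneg hval2, Nat.factorial_succ]
        push_cast
        have hfactor : (0:ℝ) ≤ C * ‖P₁ - P₂‖ ^ n * t ^ (n + 1) / (((n:ℝ) + 1) * ↑n.factorial) :=
          div_nonneg (mul_nonneg (mul_nonneg hC0 (pow_nonneg hN0 n))
            (pow_nonneg ht0 _)) (by positivity)
        calc C * ‖P₁ - P₂‖ ^ n * ‖(P₁ - P₂) f‖ / ↑n.factorial * (t ^ (n + 1) / ((n:ℝ) + 1))
            = C * ‖P₁ - P₂‖ ^ n * t ^ (n + 1) / (((n:ℝ) + 1) * ↑n.factorial) * ‖(P₁ - P₂) f‖ := by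
              field_simp
          _ ≤ C * ‖P₁ - P₂‖ ^ n * t ^ (n + 1) / (((n:ℝ) + 1) * ↑n.factorial)
              * (‖P₁ - P₂‖ * ‖f‖) := mul_le_mul_of_nonneg_left hLf hfactor
          _ = C * ‖P₁ - P₂‖ ^ (n + 1) * ‖f‖ * t ^ (n + 1) / (((n:ℝ) + 1) * ↑n.factorial) := by
              rw [pow_succ]; field_simp; ring
      · refine (ae_restrict_iff' measurableSet_uIoc).2 (Filter.Eventually.of_forall fun s hs => ?_)
        rw [Set.uIoc_of_le ht.1] at hs
        have hsIcc : s ∈ Set.Icc (0:ℝ) T₀ := ⟨le_of_lt hs.1, le_trans hs.2 ht.2⟩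
        simpa [Real.norm_eq_abs] using ih s hsIcc ((P₁ - P₂) f)
      · exact Continuous.intervalIntegrable (by fun_prop) _ _
  -- conclude
  intro t ht
  ext f
  have hten : Filter.Tendsto
      (fun n : ℕ => C * ‖f‖ * ((‖P₁ - P₂‖ * T₀) ^ n / n.factorial)) Filter.atTop (nhds 0) := by
    have h1 := FloorSemiring.tendsto_pow_div_factorial_atTop (K := ℝ) (‖P₁ - P₂‖ * T₀)
    simpa using h1.const_mul (C * ‖f‖)
  have hle : ∀ n : ℕ, |(π t - μ t) f| ≤ C * ‖f‖ * ((‖P₁ - P₂‖ * T₀) ^ n / n.factorial) := by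
    intro n
    refine le_trans (bound n t ht f) ?_
    have ht2 : t ^ n ≤ T₀ ^ n := pow_le_pow_left₀ ht.1 ht.2 n
    calc C * ‖P₁ - P₂‖ ^ n * ‖f‖ * t ^ n / n.factorial
        ≤ C * ‖P₁ - P₂‖ ^ n * ‖f‖ * T₀ ^ n / n.factorial := by gcongr
      _ = C * ‖f‖ * ((‖P₁ - P₂‖ * T₀) ^ n / n.factorial) := by rw [mul_pow]; ring
  have h0 : |(π t - μ t) f| ≤ 0 := ge_of_tendsto' hten hle
  have hz : (π t - μ t) f = 0 := abs_eq_zero.1 (le_antisymm h0 (abs_nonneg _))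
  have := hz
  rw [ContinuousLinearMap.sub_apply, sub_eq_zero] at this
  exact this
end
end

section
/- Let 0 < C < ∞ and let π : [0,T₀] → 𝒮 be such that for every f ∈ C([0,1]) the map t ↦ π_t(f) is right-continuous with left limits, π_t is nonnegative for every t (i.e. π_t(f) ≥ 0 whenever f ≥ 0), and J_dyn(π) ≤ C. Then for every g ∈ C([0,1]) and all 0 ≤ s < t ≤ T₀, π_t(g) ≤ π_s(g) + C + ∫_s^t π_u(𝓑g) du. -/
open MeasureTheory

noncomputable section

open Filter Set intervalIntegral

namespace JdynAux


/-- continuous bump derivative: `6 c (1-c)` with `c` the clamp of `x` to `[0,1]`. -/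
def rho' (x : ℝ) : ℝ := 6 * (min 1 (max 0 x)) * (1 - min 1 (max 0 x))

lemma clamp_mem (x : ℝ) : min 1 (max 0 x) ∈ Icc (0:ℝ) 1 :=
  ⟨le_min one_pos.le (le_max_left _ _), min_le_left _ _⟩

lemma rho'_cont : Continuous rho' := by
  unfold rho'
  fun_prop

lemma rho'_nonneg (x : ℝ) : 0 ≤ rho' x := by
  obtain ⟨h0, h1⟩ := clamp_mem x
  unfold rho'; nlinarith

lemma rho'_le (x : ℝ) : rho' x ≤ 3/2 := by
  obtain ⟨h0, h1⟩ := clamp_mem x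
  unfold rho'; nlinarith [sq_nonneg (min 1 (max 0 x) - 1/2)]

lemma rho'_of_nonpos {x : ℝ} (h : x ≤ 0) : rho' x = 0 := by
  unfold rho'
  rw [max_eq_left h, min_eq_right (zero_le_one)]
  ring

lemma rho'_of_one_le {x : ℝ} (h : 1 ≤ x) : rho' x = 0 := by
  unfold rho'
  rw [min_eq_left (le_trans h (le_max_right 0 x))]
  ring

/-- smooth step function -/
def rho (x : ℝ) : ℝ := ∫ v in (0:ℝ)..x, rho' v

lemma hasDerivAt_rho (x : ℝ) : HasDerivAt rho (rho' x) x :=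
  (rho'_cont.integral_hasStrictDerivAt 0 x).hasDerivAt

lemma rho_cont : Continuous rho :=
  continuous_iff_continuousAt.2 fun x => (hasDerivAt_rho x).continuousAt

lemma rho_zero : rho 0 = 0 := integral_same

lemma rho_of_nonpos {x : ℝ} (h : x ≤ 0) : rho x = 0 := by
  unfold rho
  have : (∫ v in (0:ℝ)..x, rho' v) = ∫ v in (0:ℝ)..x, (0:ℝ) := by
    refine integral_congr fun v hv => ?_
    rw [uIcc_of_ge h] at hv
    exact rho'_of_nonpos hv.2
  rw [this]; simp

lemma rho_int01 : rho 1 = 1 := by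
  have hd : ∀ v ∈ uIcc (0:ℝ) 1, HasDerivAt (fun v => 3*v^2 - 2*v^3) (rho' v) v := by
    intro v hv
    rw [uIcc_of_le zero_le_one] at hv
    have h1 : HasDerivAt (fun v : ℝ => 3*v^2 - 2*v^3) (3*(2*v) - 2*(3*v^2)) v := by
      have := ((hasDerivAt_pow 2 v).const_mul (3:ℝ)).sub ((hasDerivAt_pow 3 v).const_mul (2:ℝ))
      exact this.congr_deriv (by push_cast; ring)
    convert h1 using 1
    unfold rho'
    rw [max_eq_right hv.1, min_eq_right hv.2]
    ring
  have := integral_eq_sub_of_hasDerivAt hd (rho'_cont.intervalIntegrable 0 1)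
  unfold rho
  rw [this]; norm_num

lemma rho_of_one_le {x : ℝ} (h : 1 ≤ x) : rho x = 1 := by
  have hsplit : rho x = rho 1 + ∫ v in (1:ℝ)..x, rho' v := by
    unfold rho
    rw [integral_add_adjacent_intervals (rho'_cont.intervalIntegrable 0 1)
      (rho'_cont.intervalIntegrable 1 x)]
  have h2 : (∫ v in (1:ℝ)..x, rho' v) = 0 := by
    have : (∫ v in (1:ℝ)..x, rho' v) = ∫ v in (1:ℝ)..x, (0:ℝ) := by
      refine integral_congr fun v hv => ?_
      rw [uIcc_of_le h] at hv
      exact rho'_of_one_le hv.1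
    rw [this]; simp
  rw [hsplit, h2, rho_int01]; ring

lemma rho_mono : Monotone rho := by
  intro x y hxy
  have : rho y = rho x + ∫ v in x..y, rho' v := by
    unfold rho
    rw [integral_add_adjacent_intervals (rho'_cont.intervalIntegrable 0 x)
      (rho'_cont.intervalIntegrable x y)]
  rw [this]
  have : 0 ≤ ∫ v in x..y, rho' v :=
    integral_nonneg hxy fun v _ => rho'_nonneg v
  linarith

lemma rho_nonneg (x : ℝ) : 0 ≤ rho x := by
  rcases le_total x 0 with h | h
  · rw [rho_of_nonpos h]
  · rw [← rho_zero]; exact rho_mono h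

lemma rho_le_one (x : ℝ) : rho x ≤ 1 := by
  rcases le_total 1 x with h | h
  · rw [rho_of_one_le h]
  · rw [← rho_int01]; exact rho_mono h

/-- derivative of `u ↦ rho ((u-a)/ε)` -/
lemma hasDerivAt_rho_comp (a ε u : ℝ) (hε : ε ≠ 0) :
    HasDerivAt (fun u => rho ((u - a)/ε)) (rho' ((u - a)/ε) / ε) u := by
  have h1 : HasDerivAt (fun u : ℝ => (u - a)/ε) (1/ε) u :=
    ((hasDerivAt_id u).sub_const a).div_const ε
  have := (hasDerivAt_rho ((u - a)/ε)).comp u h1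
  exact this.congr_deriv (by ring)

/-- the weight integrates to `rho ((b-a)/ε)`. -/
lemma weight_integral (a b ε : ℝ) (hε : ε ≠ 0) :
    (∫ u in a..b, rho' ((u - a)/ε) / ε) = rho ((b - a)/ε) := by
  have : (∫ u in a..b, rho' ((u - a)/ε) / ε)
      = rho ((b - a)/ε) - rho ((a - a)/ε) :=
    integral_eq_sub_of_hasDerivAt (fun u _ => hasDerivAt_rho_comp a ε u hε)
      (by
        apply Continuous.intervalIntegrable
        have : Continuous fun u : ℝ => (u - a)/ε := by fun_prop
        exact (rho'_cont.comp this).div_const ε)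
  rw [this]
  simp [rho_zero]



/-- dyadic right approximation -/
lemma tendsto_dyadic_ceil (u : ℝ) :
    Tendsto (fun n : ℕ => ((⌈2^n * u⌉ : ℤ) : ℝ) / 2^n) atTop (nhdsWithin u (Ici u)) := by
  have hpow : ∀ n : ℕ, (0:ℝ) < 2^n := fun n => by positivity
  have hle : ∀ n : ℕ, u ≤ ((⌈2^n * u⌉ : ℤ) : ℝ) / 2^n := by
    intro n
    rw [le_div_iff₀ (hpow n)]
    calc u * 2^n = 2^n * u := by ring
    _ ≤ _ := Int.le_ceil _
  have hub : ∀ n : ℕ, ((⌈2^n * u⌉ : ℤ) : ℝ) / 2^n ≤ u + (1/2)^n := by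
    intro n
    rw [div_le_iff₀ (hpow n)]
    have := (Int.ceil_lt_add_one (2^n * u)).le
    calc ((⌈2^n * u⌉ : ℤ) : ℝ) ≤ 2^n * u + 1 := this
    _ = (u + (1/2)^n) * 2^n := by
        field_simp
        linarith [show ((1:ℝ)/2)^n * 2^n = 1 by rw [← mul_pow]; norm_num]
  have h1 : Tendsto (fun n : ℕ => u + (1/2:ℝ)^n) atTop (nhds u) := by
    have := tendsto_pow_atTop_nhds_zero_of_lt_one (by norm_num : (0:ℝ) ≤ 1/2)
      (by norm_num : (1/2:ℝ) < 1)
    simpa using tendsto_const_nhds.add this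
  have h2 : Tendsto (fun n : ℕ => ((⌈2^n * u⌉ : ℤ) : ℝ) / 2^n) atTop (nhds u) :=
    tendsto_of_tendsto_of_tendsto_of_le_of_le tendsto_const_nhds h1 hle hub
  exact tendsto_nhdsWithin_of_tendsto_nhds_of_eventually_within _ h2
    (Eventually.of_forall hle)

/-- A right-continuous real function is measurable. -/
lemma measurable_of_rightCont (w : ℝ → ℝ)
    (hr : ∀ u : ℝ, Tendsto w (nhdsWithin u (Ici u)) (nhds (w u))) : Measurable w := by
  apply measurable_of_tendsto_metrizable
    (f := fun (n : ℕ) (u : ℝ) => w (((⌈2^n * u⌉ : ℤ) : ℝ) / 2^n))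
  · intro n
    have : (fun u : ℝ => w (((⌈2^n * u⌉ : ℤ) : ℝ) / 2^n)) =
        (fun k : ℤ => w ((k : ℝ) / 2^n)) ∘ (fun u : ℝ => ⌈2^n * u⌉) := rfl
    rw [this]
    exact measurable_from_top.comp (Int.measurable_ceil.comp (measurable_const_mul _))
  · rw [tendsto_pi_nhds]
    intro u
    exact (hr u).comp (tendsto_dyadic_ceil u)

/-- A function which is right-continuous and has left limits everywhere is bounded on
compact intervals. -/
lemma bounded_of_cadlag (w : ℝ → ℝ) (a b : ℝ)
    (hr : ∀ u : ℝ, Tendsto w (nhdsWithin u (Ici u)) (nhds (w u)))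
    (hl : ∀ u : ℝ, ∃ L, Tendsto w (nhdsWithin u (Iio u)) (nhds L)) :
    ∃ M : ℝ, ∀ u ∈ Icc a b, |w u| ≤ M := by
  -- for each point choose a neighborhood on which w is bounded
  have key : ∀ x : ℝ, ∃ U : Set ℝ, U ∈ nhds x ∧ ∃ M : ℝ, ∀ u ∈ U, |w u| ≤ M := by
    intro x
    obtain ⟨L, hL⟩ := hl x
    have h1 : {u : ℝ | |w u - w x| < 1} ∈ nhdsWithin x (Ici x) :=
      (hr x) (Metric.ball_mem_nhds (w x) one_pos)
    have h2 : {u : ℝ | |w u - L| < 1} ∈ nhdsWithin x (Iio x) :=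
      hL (Metric.ball_mem_nhds L one_pos)
    rw [mem_nhdsGE_iff_exists_Ico_subset] at h1
    obtain ⟨d, hd, hIco⟩ := h1
    rw [mem_nhdsLT_iff_exists_Ioo_subset] at h2
    obtain ⟨l, hld, hIoo⟩ := h2
    refine ⟨Ioo l d, Ioo_mem_nhds hld hd, max (|w x| + 1) (|L| + 1), ?_⟩
    intro u hu
    rcases lt_or_ge u x with h | h
    · have := hIoo ⟨hu.1, h⟩
      have : |w u - L| < 1 := this
      calc |w u| ≤ |L| + |w u - L| := by
            have := abs_sub_abs_le_abs_sub (w u) L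
            linarith [abs_sub_abs_le_abs_sub (w u) L]
      _ ≤ |L| + 1 := by linarith
      _ ≤ _ := le_max_right _ _
    · have := hIco ⟨h, hu.2⟩
      have h3 : |w u - w x| < 1 := this
      have : |w u| ≤ |w x| + 1 := by
        have := abs_sub_abs_le_abs_sub (w u) (w x)
        linarith
      exact this.trans (le_max_left _ _)
  choose U hU M hM using key
  rcases isCompact_Icc.elim_nhds_subcover U (fun x _ => hU x) with ⟨t, _, hcover⟩
  rcases t.eq_empty_or_nonempty with rfl | hne
  · refine ⟨0, fun u hu => ?_⟩
    have := hcover hu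
    simp at this
  · refine ⟨t.sup' hne M, fun u hu => ?_⟩
    obtain ⟨x, hxt, hxU⟩ := by
      have := hcover hu
      simpa using this
    exact (hM x u hxU).trans (Finset.le_sup' M hxt)



lemma intervalIntegrable_of_bounded {f : ℝ → ℝ} (hf : Measurable f) {M : ℝ}
    (hM : ∀ u, |f u| ≤ M) (a b : ℝ) : IntervalIntegrable f volume a b := by
  rw [intervalIntegrable_iff]
  haveI : IsFiniteMeasure (volume.restrict (Set.uIoc a b)) :=
    ⟨by rw [Measure.restrict_apply_univ]; exact measure_Ioc_lt_top⟩
  refine ⟨hf.aestronglyMeasurable.restrict, ?_⟩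
  exact HasFiniteIntegral.of_bounded (C := M) (ae_of_all _ fun u => hM u)

lemma ramp_tendsto {w : ℝ → ℝ} (hw : Measurable w) {M : ℝ} (hM : ∀ u, |w u| ≤ M)
    {a : ℝ} (hcont : Tendsto w (nhdsWithin a (Ici a)) (nhds (w a))) :
    Tendsto (fun ε : ℝ => ∫ u in a..(a+ε), rho' ((u - a)/ε)/ε * w u)
      (nhdsWithin 0 (Ioi 0)) (nhds (w a)) := by
  rw [Metric.tendsto_nhds]
  intro δ hδ
  rw [Metric.tendsto_nhdsWithin_nhds] at hcont
  obtain ⟨r, hr, hball⟩ := hcont (δ/2) (by linarith)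
  filter_upwards [Ioo_mem_nhdsGT_of_mem (show (0:ℝ) ∈ Ico (0:ℝ) r from ⟨le_rfl, hr⟩)]
    with ε hε
  obtain ⟨hε0, hεr⟩ := hε
  set W : ℝ → ℝ := fun u => rho' ((u - a)/ε)/ε with hW
  have hWc : Continuous W := by
    have : Continuous fun u : ℝ => (u - a)/ε := by fun_prop
    exact (rho'_cont.comp this).div_const ε
  have hWnn : ∀ u, 0 ≤ W u := fun u => div_nonneg (rho'_nonneg _) hε0.le
  have hint1 : (∫ u in a..(a+ε), W u) = 1 := by
    rw [hW]
    rw [weight_integral a (a+ε) ε hε0.ne']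
    have : (a + ε - a)/ε = 1 := by field_simp; ring
    rw [this, rho_int01]
  have hWwint : IntervalIntegrable (fun u => W u * w u) volume a (a+ε) := by
    refine intervalIntegrable_of_bounded (hWc.measurable.mul hw) (M := 3/2/ε * M) ?_ a (a+ε)
    intro u
    rw [Pi.mul_apply, abs_mul]
    have h0M : 0 ≤ M := (abs_nonneg _).trans (hM u)
    have : |W u| ≤ 3/2/ε := by
      rw [abs_of_nonneg (hWnn u)]
      show rho' ((u - a)/ε) / ε ≤ 3/2/ε
      gcongr
      exact rho'_le _
    exact mul_le_mul this (hM u) (abs_nonneg _) (by positivity)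
  have hWaint : IntervalIntegrable (fun u => W u * w a) volume a (a+ε) :=
    (hWc.mul continuous_const).intervalIntegrable a (a+ε)
  have key : (∫ u in a..(a+ε), W u * w u) - w a = ∫ u in a..(a+ε), W u * (w u - w a) := by
    have : (∫ u in a..(a+ε), W u * (w u - w a))
        = (∫ u in a..(a+ε), W u * w u) - ∫ u in a..(a+ε), W u * w a := by
      rw [← integral_sub hWwint hWaint]
      congr 1; ext u; ring
    rw [this, intervalIntegral.integral_mul_const, hint1, one_mul]
  rw [Real.dist_eq, key]
  have hbound : ‖∫ u in a..(a+ε), W u * (w u - w a)‖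
      ≤ |∫ u in a..(a+ε), W u * (δ/2)| := by
    apply intervalIntegral.norm_integral_le_abs_of_norm_le
    · filter_upwards [ae_restrict_mem measurableSet_uIoc] with u hu
      rw [uIoc_of_le (by linarith : a ≤ a + ε)] at hu
      have h1 : dist u a < r := by
        rw [Real.dist_eq, abs_of_nonneg (by linarith [hu.1] : 0 ≤ u - a)]
        linarith [hu.2]
      have h2 : dist (w u) (w a) < δ/2 := hball (le_of_lt hu.1) h1
      rw [Real.dist_eq] at h2
      rw [Real.norm_eq_abs, abs_mul, abs_of_nonneg (hWnn u)]
      exact mul_le_mul_of_nonneg_left h2.le (hWnn u)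
    · exact (hWc.mul continuous_const).intervalIntegrable a (a+ε)
  rw [Real.norm_eq_abs] at hbound
  have : (∫ u in a..(a+ε), W u * (δ/2)) = δ/2 := by
    rw [intervalIntegral.integral_mul_const, hint1, one_mul]
  rw [this] at hbound
  calc |∫ u in a..(a+ε), W u * (w u - w a)| ≤ |δ/2| := hbound
  _ = δ/2 := abs_of_pos (by linarith)
  _ < δ := by linarith



/-! ### projection onto `[0,T₀]` -/

def proj (T₀ u : ℝ) : ℝ := max 0 (min u T₀)

lemma proj_mem {T₀ : ℝ} (hT : 0 ≤ T₀) (u : ℝ) : proj T₀ u ∈ Icc 0 T₀ :=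
  ⟨le_max_left _ _, max_le hT (min_le_right _ _)⟩

lemma proj_eq_self {T₀ u : ℝ} (hu : u ∈ Icc 0 T₀) : proj T₀ u = u := by
  unfold proj
  rw [min_eq_left hu.2, max_eq_right hu.1]

lemma proj_mono {T₀ : ℝ} : Monotone (proj T₀) := fun x y h =>
  max_le_max le_rfl (min_le_min (by exact h) le_rfl)

lemma proj_cont {T₀ : ℝ} : Continuous (proj T₀) :=
  continuous_const.max (continuous_id.min continuous_const)

/-! ### regularity of `u ↦ π (proj T₀ u) f` -/

variable {T₀ : ℝ} {π : ℝ → S}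

lemma rightCont_v (hT : 0 ≤ T₀) {f : CI} (hπf : Cadlag T₀ fun t => π t f) (u : ℝ) :
    Tendsto (fun u' => π (proj T₀ u') f) (nhdsWithin u (Ici u))
      (nhds (π (proj T₀ u) f)) := by
  have h1 : Tendsto (proj T₀) (nhdsWithin u (Ici u))
      (nhdsWithin (proj T₀ u) (Ici (proj T₀ u))) := by
    apply tendsto_nhdsWithin_of_tendsto_nhds_of_eventually_within
    · exact (proj_cont.tendsto u).mono_left nhdsWithin_le_nhds
    · exact eventually_mem_nhdsWithin.mono fun x hx => proj_mono hx
  exact (hπf.1 _ (proj_mem hT u)).comp h1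

lemma leftLim_v (hT : 0 ≤ T₀) {f : CI} (hπf : Cadlag T₀ fun t => π t f) (u : ℝ) :
    ∃ L, Tendsto (fun u' => π (proj T₀ u') f) (nhdsWithin u (Iio u)) (nhds L) := by
  rcases le_or_gt u 0 with h | h
  · refine ⟨π 0 f, Tendsto.congr' ?_ tendsto_const_nhds⟩
    filter_upwards [self_mem_nhdsWithin] with x hx
    have : proj T₀ x = 0 := by
      unfold proj
      rw [min_eq_left (le_trans (le_of_lt hx) (h.trans hT)), max_eq_left]
      exact le_trans (le_of_lt hx) h
    rw [this]
  rcases le_or_gt u T₀ with h2 | h2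
  · obtain ⟨L, hL⟩ := hπf.2 u ⟨h, h2⟩
    refine ⟨L, Tendsto.congr' ?_ hL⟩
    filter_upwards [Ioo_mem_nhdsLT_of_mem (show u ∈ Ioc (0:ℝ) u from ⟨h, le_rfl⟩)] with x hx
    rw [proj_eq_self ⟨hx.1.le, hx.2.le.trans h2⟩]
  · refine ⟨π T₀ f, Tendsto.congr' ?_ tendsto_const_nhds⟩
    filter_upwards [Ioo_mem_nhdsLT_of_mem (show u ∈ Ioc T₀ u from ⟨h2, le_rfl⟩)] with x hx
    have : proj T₀ x = T₀ := by
      unfold proj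
      rw [min_eq_right hx.1.le, max_eq_right hT]
    rw [this]

/-! ### positivity -/

lemma abs_pi_le (hpos : ∀ t ∈ Set.Icc (0:ℝ) T₀, ∀ f : CI, (∀ x, 0 ≤ f x) → 0 ≤ π t f)
    {a : ℝ} (ha : a ∈ Icc 0 T₀) (f : CI) : |π a f| ≤ π a 1 * ‖f‖ := by
  have key : ∀ h : CI, (∀ x, |h x| ≤ ‖h‖) := fun h x => by
    have := h.norm_coe_le_norm x
    rwa [Real.norm_eq_abs] at this
  have h1 : 0 ≤ π a (‖f‖ • (1 : CI) - f) := by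
    apply hpos a ha
    intro x
    have := (abs_le.1 (key f x)).2
    simp only [ContinuousMap.sub_apply, ContinuousMap.smul_apply, ContinuousMap.one_apply,
      smul_eq_mul, mul_one]
    linarith
  have h2 : 0 ≤ π a (‖f‖ • (1 : CI) + f) := by
    apply hpos a ha
    intro x
    have := (abs_le.1 (key f x)).1
    simp only [ContinuousMap.add_apply, ContinuousMap.smul_apply, ContinuousMap.one_apply,
      smul_eq_mul, mul_one]
    linarith
  rw [map_sub, _root_.map_smul] at h1
  rw [map_add, _root_.map_smul] at h2
  simp only [smul_eq_mul] at h1 h2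
  rw [abs_le]
  constructor <;> nlinarith [h1, h2]

/-! ### measurability of composites -/


lemma measurable_comp_proj (hT : 0 ≤ T₀)
    (hπ : ∀ f : CI, Cadlag T₀ fun t => π t f)
    (hpos : ∀ t ∈ Set.Icc (0:ℝ) T₀, ∀ f : CI, (∀ x, 0 ≤ f x) → 0 ≤ π t f)
    (K : ℝ → CI)
    (hK : ∀ u : ℝ, Tendsto (fun u' => ‖K u' - K u‖) (nhdsWithin u (Ici u)) (nhds 0)) :
    Measurable fun u => π (proj T₀ u) (K u) := by
  apply measurable_of_rightCont
  intro u
  rw [tendsto_iff_dist_tendsto_zero]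
  have hb : ∀ u', dist (π (proj T₀ u') (K u')) (π (proj T₀ u) (K u))
      ≤ π (proj T₀ u') 1 * ‖K u' - K u‖
        + dist (π (proj T₀ u') (K u)) (π (proj T₀ u) (K u)) := by
    intro u'
    have h1 : dist (π (proj T₀ u') (K u')) (π (proj T₀ u') (K u))
        ≤ π (proj T₀ u') 1 * ‖K u' - K u‖ := by
      rw [Real.dist_eq]
      have := abs_pi_le hpos (proj_mem hT u') (K u' - K u)
      rwa [map_sub] at this
    calc dist (π (proj T₀ u') (K u')) (π (proj T₀ u) (K u))
        ≤ dist (π (proj T₀ u') (K u')) (π (proj T₀ u') (K u))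
          + dist (π (proj T₀ u') (K u)) (π (proj T₀ u) (K u)) := dist_triangle _ _ _
    _ ≤ _ := by linarith
  have t1 : Tendsto (fun u' => π (proj T₀ u') 1) (nhdsWithin u (Ici u))
      (nhds (π (proj T₀ u) 1)) := rightCont_v hT (hπ 1) u
  have t3 : Tendsto (fun u' => dist (π (proj T₀ u') (K u)) (π (proj T₀ u) (K u)))
      (nhdsWithin u (Ici u)) (nhds 0) := by
    rw [← tendsto_iff_dist_tendsto_zero]
    exact rightCont_v hT (hπ (K u)) u
  have hlim : Tendsto (fun u' => π (proj T₀ u') 1 * ‖K u' - K u‖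
      + dist (π (proj T₀ u') (K u)) (π (proj T₀ u) (K u)))
      (nhdsWithin u (Ici u)) (nhds 0) := by
    have := (t1.mul (hK u)).add t3
    simpa using this
  exact squeeze_zero' (Eventually.of_forall fun u' => dist_nonneg)
    (Eventually.of_forall hb) hlim



lemma exp_sub_exp_le {p q R : ℝ} (hp : p ≤ R) (h : q ≤ p) :
    Real.exp p - Real.exp q ≤ Real.exp R * (p - q) := by
  have h1 : Real.exp p - Real.exp q = Real.exp q * (Real.exp (p - q) - 1) := by
    rw [mul_sub, ← Real.exp_add]; ring_nf
  have h2 : Real.exp (p - q) - 1 ≤ (p - q) * Real.exp (p - q) := by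
    have h3 := Real.add_one_le_exp (-(p - q))
    have h4 : Real.exp (-(p - q)) * Real.exp (p - q) = 1 := by
      rw [← Real.exp_add]; simp
    nlinarith [Real.exp_pos (p - q)]
  calc Real.exp p - Real.exp q ≤ Real.exp q * ((p - q) * Real.exp (p - q)) := by
        rw [h1]; exact mul_le_mul_of_nonneg_left h2 (Real.exp_pos q).le
  _ = (p - q) * Real.exp p := by rw [mul_comm (p-q) _, ← mul_assoc, ← Real.exp_add]; ring_nf
  _ ≤ Real.exp R * (p - q) := by
      have h5 := Real.exp_le_exp.2 hp
      nlinarith [sub_nonneg.2 h]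

lemma abs_exp_sub_exp {p q R : ℝ} (hp : |p| ≤ R) (hq : |q| ≤ R) :
    |Real.exp p - Real.exp q| ≤ Real.exp R * |p - q| := by
  rcases le_total q p with h | h
  · rw [abs_of_nonneg (sub_nonneg.2 (Real.exp_le_exp.2 h)), abs_of_nonneg (sub_nonneg.2 h)]
    exact exp_sub_exp_le (abs_le.1 hp).2 h
  · rw [abs_of_nonpos (sub_nonpos.2 (Real.exp_le_exp.2 h)), abs_of_nonpos (sub_nonpos.2 h)]
    have := exp_sub_exp_le (abs_le.1 hq).2 h
    linarith

variable (lam : C(I01 × I01, ℝ)) (B : CI → CI)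
  (hB : ∀ (f : CI) (x : I01), B f x = ∫ y : I01, lam (x, y) * (Real.exp (f y - f x) - 1))
  (g : CI)

lemma integrand_cont (h : CI) (x : I01) :
    Continuous fun y : I01 => lam (x, y) * (Real.exp (h y - h x) - 1) := by
  have h1 : Continuous fun y : I01 => lam (x, y) :=
    lam.continuous.comp (Continuous.prodMk_right x)
  have h2 : Continuous fun y : I01 => Real.exp (h y - h x) - 1 :=
    (Real.continuous_exp.comp (h.continuous.sub continuous_const)).sub continuous_const
  exact h1.mul h2

lemma integrand_integrable (h : CI) (x : I01) :
    Integrable (fun y : I01 => lam (x, y) * (Real.exp (h y - h x) - 1)) :=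
  (integrand_cont lam h x).integrable_of_hasCompactSupport
    (HasCompactSupport.of_compactSpace _)

lemma abs_CI_le (h : CI) (x : I01) : |h x| ≤ ‖h‖ := by
  have := h.norm_coe_le_norm x
  rwa [Real.norm_eq_abs] at this

lemma abs_lam_le (p : I01 × I01) : |lam p| ≤ ‖lam‖ := by
  have := lam.norm_coe_le_norm p
  rwa [Real.norm_eq_abs] at this

include hB in
lemma B_zero_smul : B ((0:ℝ) • g) = 0 := by
  ext x
  rw [hB]
  simp only [ContinuousMap.smul_apply, smul_eq_mul, zero_mul, sub_zero, sub_self,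
    Real.exp_zero, ContinuousMap.zero_apply]
  simp

include hB in
lemma B_bound {c : ℝ} (hc : |c| ≤ 1) :
    ‖B (c • g)‖ ≤ ‖lam‖ * (Real.exp (2 * ‖g‖) + 1) := by
  have hnn : (0:ℝ) ≤ ‖lam‖ * (Real.exp (2 * ‖g‖) + 1) := by positivity
  rw [ContinuousMap.norm_le _ hnn]
  intro x
  rw [Real.norm_eq_abs, hB]
  have hbd : ∀ y : I01,
      ‖lam (x, y) * (Real.exp ((c • g) y - (c • g) x) - 1)‖
        ≤ ‖lam‖ * (Real.exp (2 * ‖g‖) + 1) := by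
    intro y
    rw [Real.norm_eq_abs, abs_mul]
    have h1 : |(c • g) y - (c • g) x| ≤ 2 * ‖g‖ := by
      simp only [ContinuousMap.smul_apply, smul_eq_mul]
      calc |c * g y - c * g x| = |c| * |g y - g x| := by rw [← abs_mul]; ring_nf
      _ ≤ 1 * (|g y| + |g x|) := by
          apply mul_le_mul hc (abs_sub _ _) (abs_nonneg _) zero_le_one
      _ ≤ 2 * ‖g‖ := by
          have := abs_CI_le g y
          have := abs_CI_le g x
          linarith
    have h2 : |Real.exp ((c • g) y - (c • g) x) - 1| ≤ Real.exp (2 * ‖g‖) + 1 := by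
      have h3 : Real.exp ((c • g) y - (c • g) x) ≤ Real.exp (2 * ‖g‖) :=
        Real.exp_le_exp.2 (abs_le.1 h1).2
      have h4 := Real.exp_pos ((c • g) y - (c • g) x)
      rw [abs_le]
      constructor <;> linarith
    exact mul_le_mul (abs_lam_le lam _) h2 (abs_nonneg _) (norm_nonneg _)
  calc |∫ y : I01, lam (x, y) * (Real.exp ((c • g) y - (c • g) x) - 1)|
      ≤ ‖lam‖ * (Real.exp (2 * ‖g‖) + 1) * (volume (univ : Set I01)).toReal := by
        rw [← Real.norm_eq_abs]
        exact norm_integral_le_of_norm_le_const (ae_of_all _ hbd)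
  _ = _ := by simp

include hB in
lemma B_lip {c d : ℝ} (hc : |c| ≤ 1) (hd : |d| ≤ 1) :
    ‖B (c • g) - B (d • g)‖
      ≤ ‖lam‖ * (2 * ‖g‖) * Real.exp (2 * ‖g‖) * |c - d| := by
  have hnn : (0:ℝ) ≤ ‖lam‖ * (2 * ‖g‖) * Real.exp (2 * ‖g‖) * |c - d| := by positivity
  rw [ContinuousMap.norm_le _ hnn]
  intro x
  rw [ContinuousMap.sub_apply, Real.norm_eq_abs, hB, hB]
  rw [← integral_sub (integrand_integrable lam (c • g) x) (integrand_integrable lam (d • g) x)]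
  have heq : ∀ y : I01,
      lam (x, y) * (Real.exp ((c • g) y - (c • g) x) - 1)
        - lam (x, y) * (Real.exp ((d • g) y - (d • g) x) - 1)
      = lam (x, y) * (Real.exp ((c • g) y - (c • g) x)
        - Real.exp ((d • g) y - (d • g) x)) := fun y => by ring
  have hbd : ∀ y : I01,
      ‖lam (x, y) * (Real.exp ((c • g) y - (c • g) x) - 1)
        - lam (x, y) * (Real.exp ((d • g) y - (d • g) x) - 1)‖
      ≤ ‖lam‖ * (2 * ‖g‖) * Real.exp (2 * ‖g‖) * |c - d| := by
    intro y
    rw [Real.norm_eq_abs, heq y, abs_mul]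
    have habs : ∀ e : ℝ, |e| ≤ 1 → |(e • g) y - (e • g) x| ≤ 2 * ‖g‖ := by
      intro e he
      simp only [ContinuousMap.smul_apply, smul_eq_mul]
      calc |e * g y - e * g x| = |e| * |g y - g x| := by rw [← abs_mul]; ring_nf
      _ ≤ 1 * (|g y| + |g x|) := mul_le_mul he (abs_sub _ _) (abs_nonneg _) zero_le_one
      _ ≤ 2 * ‖g‖ := by
          have := abs_CI_le g y
          have := abs_CI_le g x
          linarith
    have h2 : |Real.exp ((c • g) y - (c • g) x) - Real.exp ((d • g) y - (d • g) x)|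
        ≤ Real.exp (2 * ‖g‖) * ((2 * ‖g‖) * |c - d|) := by
      have h3 := abs_exp_sub_exp (habs c hc) (habs d hd)
      have h4 : |((c • g) y - (c • g) x) - ((d • g) y - (d • g) x)|
          ≤ (2 * ‖g‖) * |c - d| := by
        simp only [ContinuousMap.smul_apply, smul_eq_mul]
        calc |c * g y - c * g x - (d * g y - d * g x)|
            = |c - d| * |g y - g x| := by rw [← abs_mul]; ring_nf
        _ ≤ |c - d| * (2 * ‖g‖) := by
            apply mul_le_mul_of_nonneg_left _ (abs_nonneg _)
            calc |g y - g x| ≤ |g y| + |g x| := abs_sub _ _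
            _ ≤ 2 * ‖g‖ := by
                have := abs_CI_le g y
                have := abs_CI_le g x
                linarith
        _ = (2 * ‖g‖) * |c - d| := by ring
      calc |Real.exp ((c • g) y - (c • g) x) - Real.exp ((d • g) y - (d • g) x)|
          ≤ Real.exp (2 * ‖g‖) * |((c • g) y - (c • g) x) - ((d • g) y - (d • g) x)| := h3
      _ ≤ _ := mul_le_mul_of_nonneg_left h4 (Real.exp_pos _).le
    calc |lam (x, y)| * |Real.exp ((c • g) y - (c • g) x)
          - Real.exp ((d • g) y - (d • g) x)|
        ≤ ‖lam‖ * (Real.exp (2 * ‖g‖) * ((2 * ‖g‖) * |c - d|)) :=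
          mul_le_mul (abs_lam_le lam _) h2 (abs_nonneg _) (norm_nonneg _)
    _ = _ := by ring
  calc |∫ y : I01, (lam (x, y) * (Real.exp ((c • g) y - (c • g) x) - 1)
        - lam (x, y) * (Real.exp ((d • g) y - (d • g) x) - 1))|
      ≤ ‖lam‖ * (2 * ‖g‖) * Real.exp (2 * ‖g‖) * |c - d|
          * (volume (univ : Set I01)).toReal := by
        rw [← Real.norm_eq_abs]
        exact norm_integral_le_of_norm_le_const (ae_of_all _ hbd)
  _ = _ := by simp


end JdynAux


open JdynAux

/-- If `π` is a càdlàg nonnegative path with `J_dyn(π) ≤ C`, then for every `g ∈ C([0,1])`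
and `0 ≤ s < t ≤ T₀`, `π_t(g) ≤ π_s(g) + C + ∫_s^t π_u(𝓑g) du`. -/
theorem Jdyn_bound_implies_increment_bound
    (lam : C(I01 × I01, ℝ)) (hlam : ∀ p, 0 < lam p)
    (T₀ : ℝ) (hT₀ : 0 < T₀)
    (B : CI → CI)
    (hB : ∀ (f : CI) (x : I01), B f x = ∫ y : I01, lam (x, y) * (Real.exp (f y - f x) - 1))
    (C : ℝ) (hC : 0 < C)
    (π : ℝ → S)
    (hπ : ∀ f : CI, Cadlag T₀ fun t => π t f)
    (hpos : ∀ t ∈ Set.Icc (0:ℝ) T₀, ∀ f : CI, (∀ x, 0 ≤ f x) → 0 ≤ π t f)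
    (hJ : Jdyn T₀ B π ≤ (C : EReal)) :
    ∀ g : CI, ∀ s t : ℝ, 0 ≤ s → s < t → t ≤ T₀ →
      π t g ≤ π s g + C + ∫ u in s..t, π u (B g) := by
  intro g s t hs hst ht
  have hT : (0:ℝ) ≤ T₀ := hT₀.le
  have hsT : s ∈ Set.Icc (0:ℝ) T₀ := ⟨hs, hst.le.trans ht⟩
  have htT : t ∈ Set.Icc (0:ℝ) T₀ := ⟨hs.trans hst.le, ht⟩
  -- global bound on the path
  obtain ⟨Mπ, hMπ⟩ := bounded_of_cadlag (fun u => π (proj T₀ u) 1) 0 T₀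
    (rightCont_v hT (hπ 1)) (leftLim_v hT (hπ 1))
  have hMπ' : ∀ u : ℝ, |π (proj T₀ u) 1| ≤ Mπ := by
    intro u
    have h := hMπ (proj T₀ u) (proj_mem hT u)
    rwa [proj_eq_self (proj_mem hT u)] at h
  have hMπ0 : (0:ℝ) ≤ Mπ := (abs_nonneg _).trans (hMπ' 0)
  have hπ1le : ∀ u : ℝ, π (proj T₀ u) 1 ≤ Mπ := fun u => (le_abs_self _).trans (hMπ' u)
  have hvb : ∀ (u : ℝ) (f : CI), |π (proj T₀ u) f| ≤ Mπ * ‖f‖ := by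
    intro u f
    refine (abs_pi_le hpos (proj_mem hT u) f).trans ?_
    exact mul_le_mul_of_nonneg_right (hπ1le u) (norm_nonneg f)
  have hmeasf : ∀ f : CI, Measurable fun u => π (proj T₀ u) f := fun f =>
    measurable_of_rightCont _ (rightCont_v hT (hπ f))
  -- the test functions
  set ψ : ℝ → ℝ → ℝ := fun ε u => rho ((u - s)/ε) - rho ((u - t)/ε) with hψdef
  set ψ' : ℝ → ℝ → ℝ := fun ε u => rho' ((u - s)/ε)/ε - rho' ((u - t)/ε)/ε with hψ'def
  set vg : ℝ → ℝ := fun u => π (proj T₀ u) g with hvgdef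
  set vBg : ℝ → ℝ := fun u => π (proj T₀ u) (B g) with hvBgdef
  set vK : ℝ → ℝ → ℝ := fun ε u => π (proj T₀ u) (B (ψ ε u • g)) with hvKdef
  have hdivle : ∀ ε : ℝ, 0 < ε → ∀ a u : ℝ, u ≤ a → (u - a)/ε ≤ 0 := by
    intro ε hε a u h
    exact div_nonpos_of_nonpos_of_nonneg (by linarith) hε.le
  have hdivge : ∀ ε : ℝ, 0 < ε → ∀ a u : ℝ, a + ε ≤ u → 1 ≤ (u - a)/ε := by
    intro ε hε a u h
    rw [one_le_div hε]; linarith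
  have hψ01 : ∀ ε : ℝ, 0 < ε → ∀ u, ψ ε u ∈ Icc (0:ℝ) 1 := by
    intro ε hε u
    simp only [hψdef]
    constructor
    · have h1 : (u - t)/ε ≤ (u - s)/ε := by
        gcongr <;> linarith
      have := rho_mono h1
      linarith
    · have h1 := rho_le_one ((u - s)/ε)
      have h2 := rho_nonneg ((u - t)/ε)
      linarith
  have hψabs : ∀ ε : ℝ, 0 < ε → ∀ u, |ψ ε u| ≤ 1 := fun ε hε u =>
    abs_le.2 ⟨by linarith [(hψ01 ε hε u).1], (hψ01 ε hε u).2⟩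
  have hψ_left : ∀ ε : ℝ, 0 < ε → ∀ u, u ≤ s → ψ ε u = 0 := by
    intro ε hε u h
    simp only [hψdef]
    rw [rho_of_nonpos (hdivle ε hε s u h), rho_of_nonpos (hdivle ε hε t u (h.trans hst.le))]
    ring
  have hψ'_left : ∀ ε : ℝ, 0 < ε → ∀ u, u ≤ s → ψ' ε u = 0 := by
    intro ε hε u h
    simp only [hψ'def]
    rw [rho'_of_nonpos (hdivle ε hε s u h), rho'_of_nonpos (hdivle ε hε t u (h.trans hst.le))]
    ring
  have hψ_mid : ∀ ε : ℝ, 0 < ε → ∀ u, s + ε ≤ u → u ≤ t → ψ ε u = 1 := by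
    intro ε hε u h1 h2
    simp only [hψdef]
    rw [rho_of_one_le (hdivge ε hε s u h1), rho_of_nonpos (hdivle ε hε t u h2)]
    ring
  have hψ'_mid : ∀ ε : ℝ, 0 < ε → ∀ u, s + ε ≤ u → u ≤ t → ψ' ε u = 0 := by
    intro ε hε u h1 h2
    simp only [hψ'def]
    rw [rho'_of_one_le (hdivge ε hε s u h1), rho'_of_nonpos (hdivle ε hε t u h2)]
    ring
  have hψ_right : ∀ ε : ℝ, 0 < ε → ∀ u, t + ε ≤ u → ψ ε u = 0 := by
    intro ε hε u h
    simp only [hψdef]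
    rw [rho_of_one_le (hdivge ε hε s u (by linarith [hst.le])),
      rho_of_one_le (hdivge ε hε t u h)]
    ring
  have hψ'_right : ∀ ε : ℝ, 0 < ε → ∀ u, t + ε ≤ u → ψ' ε u = 0 := by
    intro ε hε u h
    simp only [hψ'def]
    rw [rho'_of_one_le (hdivge ε hε s u (by linarith [hst.le])),
      rho'_of_one_le (hdivge ε hε t u h)]
    ring
  have hψ'_ramp1 : ∀ ε : ℝ, 0 < ε → ε ≤ t - s → ∀ u, u ≤ s + ε →
      ψ' ε u = rho' ((u - s)/ε)/ε := by
    intro ε hε hεts u h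
    simp only [hψ'def]
    rw [rho'_of_nonpos (hdivle ε hε t u (by linarith))]
    ring
  have hψ'_ramp2 : ∀ ε : ℝ, 0 < ε → ε ≤ t - s → ∀ u, t ≤ u →
      ψ' ε u = -(rho' ((u - t)/ε)/ε) := by
    intro ε hε hεts u h
    simp only [hψ'def]
    rw [rho'_of_one_le (hdivge ε hε s u (by linarith))]
    ring
  have hcψ : ∀ ε : ℝ, Continuous (ψ ε) := by
    intro ε
    simp only [hψdef]
    exact (rho_cont.comp ((continuous_id.sub continuous_const).div_const ε)).sub
      (rho_cont.comp ((continuous_id.sub continuous_const).div_const ε))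
  have hcψ' : ∀ ε : ℝ, Continuous (ψ' ε) := by
    intro ε
    simp only [hψ'def]
    exact ((rho'_cont.comp ((continuous_id.sub continuous_const).div_const ε)).div_const ε).sub
      ((rho'_cont.comp ((continuous_id.sub continuous_const).div_const ε)).div_const ε)
  -- measurability and bounds for the composite
  have hmeasvK : ∀ ε : ℝ, 0 < ε → Measurable (vK ε) := by
    intro ε hε
    simp only [hvKdef]
    apply measurable_comp_proj hT hπ hpos
    intro u
    have hlip : ∀ u', ‖B (ψ ε u' • g) - B (ψ ε u • g)‖
        ≤ ‖lam‖ * (2 * ‖g‖) * Real.exp (2 * ‖g‖) * |ψ ε u' - ψ ε u| := fun u' =>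
      B_lip lam B hB g (hψabs ε hε u') (hψabs ε hε u)
    apply squeeze_zero' (Eventually.of_forall fun _ => norm_nonneg _)
      (Eventually.of_forall hlip)
    have h1 : Tendsto (fun u' => ψ ε u' - ψ ε u) (nhdsWithin u (Ici u)) (nhds 0) := by
      have h2 := ((hcψ ε).tendsto u).mono_left (nhdsWithin_le_nhds (s := Ici u))
      have h3 := h2.sub_const (ψ ε u)
      simpa using h3
    have h2 := h1.abs
    rw [abs_zero] at h2
    have h3 := h2.const_mul (‖lam‖ * (2 * ‖g‖) * Real.exp (2 * ‖g‖))
    simpa using h3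
  have hvKb : ∀ ε : ℝ, 0 < ε → ∀ u,
      |vK ε u| ≤ Mπ * (‖lam‖ * (Real.exp (2 * ‖g‖) + 1)) := by
    intro ε hε u
    refine (hvb u _).trans ?_
    exact mul_le_mul_of_nonneg_left (B_bound lam B hB g (hψabs ε hε u)) hMπ0
  -- integrability
  have hvgInt : ∀ a b : ℝ, IntervalIntegrable vg volume a b := fun a b =>
    intervalIntegrable_of_bounded (hmeasf g) (fun u => hvb u g) a b
  have hvBgInt : ∀ a b : ℝ, IntervalIntegrable vBg volume a b := fun a b =>
    intervalIntegrable_of_bounded (hmeasf (B g)) (fun u => hvb u (B g)) a b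
  have hvKInt : ∀ ε : ℝ, 0 < ε → ∀ a b : ℝ, IntervalIntegrable (vK ε) volume a b :=
    fun ε hε a b => intervalIntegrable_of_bounded (hmeasvK ε hε) (hvKb ε hε) a b
  have hrampInt : ∀ (a : ℝ) (ε : ℝ), 0 < ε → ∀ b c : ℝ,
      IntervalIntegrable (fun u => rho' ((u - a)/ε)/ε * vg u) volume b c := by
    intro a ε hε b c
    apply intervalIntegrable_of_bounded (M := 3/2/ε * (Mπ * ‖g‖))
    · exact ((rho'_cont.comp ((continuous_id.sub continuous_const).div_const ε)).div_const
        ε).measurable.mul (hmeasf g)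
    · intro u
      rw [abs_mul]
      refine mul_le_mul ?_ (hvb u g) (abs_nonneg _) (by positivity)
      rw [abs_of_nonneg (div_nonneg (rho'_nonneg _) hε.le)]
      gcongr
      exact rho'_le _
  have hψ'b : ∀ ε : ℝ, 0 < ε → ∀ u, |ψ' ε u| ≤ 3/ε := by
    intro ε hε u
    simp only [hψ'def]
    rw [← sub_div, abs_div, abs_of_pos hε]
    gcongr
    have h1 := rho'_nonneg ((u - s)/ε)
    have h2 := rho'_le ((u - s)/ε)
    have h3 := rho'_nonneg ((u - t)/ε)
    have h4 := rho'_le ((u - t)/ε)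
    rw [abs_le]
    constructor <;> linarith
  have hψ'Int : ∀ ε : ℝ, 0 < ε → ∀ a b : ℝ,
      IntervalIntegrable (fun u => ψ' ε u * vg u) volume a b := by
    intro ε hε a b
    apply intervalIntegrable_of_bounded (M := 3/ε * (Mπ * ‖g‖))
    · exact (hcψ' ε).measurable.mul (hmeasf g)
    · intro u
      rw [abs_mul]
      exact mul_le_mul (hψ'b ε hε u) (hvb u g) (abs_nonneg _) (by positivity)
  -- the supremum bound applied to a test function
  have hGle : ∀ (G1 G2 : ℝ → CI), (G1, G2) ∈ C10 T₀ →
      π T₀ (G1 T₀) - π 0 (G1 0) - (∫ u in (0:ℝ)..T₀, π u (G2 u + B (G1 u))) ≤ C := by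
    intro G1 G2 hG
    have h1 := le_iSup₂ (f := fun (G : (ℝ → CI) × (ℝ → CI)) (_ : G ∈ C10 T₀) =>
        ((π T₀ (G.1 T₀) - π 0 (G.1 0)
          - ∫ u in (0:ℝ)..T₀, π u (G.2 u + B (G.1 u)) : ℝ) : EReal)) (G1, G2) hG
    have h2 : ((π T₀ (G1 T₀) - π 0 (G1 0)
        - ∫ u in (0:ℝ)..T₀, π u (G2 u + B (G1 u)) : ℝ) : EReal) ≤ Jdyn T₀ B π := h1
    have h3 := h2.trans hJ
    exact_mod_cast h3
  have hGmem : ∀ ε : ℝ, 0 < ε →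
      ((fun u => ψ ε u • g, fun u => ψ' ε u • g) : (ℝ → CI) × (ℝ → CI)) ∈ C10 T₀ := by
    intro ε hε
    refine ⟨((hcψ ε).smul continuous_const).continuousOn,
      ((hcψ' ε).smul continuous_const).continuousOn, ?_⟩
    intro u _
    have hd : HasDerivAt (ψ ε) (ψ' ε u) u := by
      simp only [hψdef, hψ'def]
      exact (hasDerivAt_rho_comp s ε u hε.ne').sub (hasDerivAt_rho_comp t ε u hε.ne')
    exact (hd.smul_const g).hasDerivWithinAt
  -- the per-ε inequality
  have hval : ∀ ε : ℝ, 0 < ε → ε ≤ t - s → (t + ε ≤ T₀ ∨ t = T₀) →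
      (π T₀ (ψ ε T₀ • g) + ∫ u in t..min (t+ε) T₀, rho' ((u - t)/ε)/ε * vg u)
        - (∫ u in s..s+ε, rho' ((u - s)/ε)/ε * vg u)
        - (∫ u in s..s+ε, vK ε u)
        - ((∫ u in s..t, vBg u) - (∫ u in s..s+ε, vBg u))
        - (∫ u in t..min (t+ε) T₀, vK ε u) ≤ C := by
    intro ε hε hεts hcase
    have h : π T₀ (ψ ε T₀ • g) - π 0 (ψ ε 0 • g)
        - (∫ u in (0:ℝ)..T₀, π u (ψ' ε u • g + B (ψ ε u • g))) ≤ C :=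
      hGle (fun u => ψ ε u • g) (fun u => ψ' ε u • g) (hGmem ε hε)
    have h0 : π 0 (ψ ε 0 • g) = 0 := by
      rw [hψ_left ε hε 0 hs, zero_smul, map_zero]
    rw [h0, sub_zero] at h
    have hQpInt : ∀ a b : ℝ,
        IntervalIntegrable (fun u => ψ' ε u * vg u + vK ε u) volume a b :=
      fun a b => (hψ'Int ε hε a b).add (hvKInt ε hε a b)
    have hcongr : (∫ u in (0:ℝ)..T₀, π u (ψ' ε u • g + B (ψ ε u • g)))
        = ∫ u in (0:ℝ)..T₀, (ψ' ε u * vg u + vK ε u) := by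
      refine integral_congr fun u hu => ?_
      rw [uIcc_of_le hT] at hu
      rw [map_add, _root_.map_smul, smul_eq_mul]
      simp only [hvgdef, hvKdef]
      rw [proj_eq_self hu]
    rw [hcongr] at h
    have p0 : (∫ u in (0:ℝ)..s, (ψ' ε u * vg u + vK ε u)) = 0 := by
      have heq : (∫ u in (0:ℝ)..s, (ψ' ε u * vg u + vK ε u)) = ∫ u in (0:ℝ)..s, (0:ℝ) := by
        refine integral_congr fun u hu => ?_
        rw [uIcc_of_le hs] at hu
        rw [hψ'_left ε hε u hu.2, zero_mul, zero_add]
        simp only [hvKdef]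
        rw [hψ_left ε hε u hu.2, B_zero_smul lam B hB g, map_zero]
      rw [heq]; simp
    have p1 : (∫ u in s..s+ε, (ψ' ε u * vg u + vK ε u))
        = (∫ u in s..s+ε, rho' ((u - s)/ε)/ε * vg u) + (∫ u in s..s+ε, vK ε u) := by
      have heq : (∫ u in s..s+ε, (ψ' ε u * vg u + vK ε u))
          = ∫ u in s..s+ε, (rho' ((u - s)/ε)/ε * vg u + vK ε u) := by
        refine integral_congr fun u hu => ?_
        rw [uIcc_of_le (by linarith : s ≤ s + ε)] at hu
        rw [hψ'_ramp1 ε hε hεts u hu.2]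
      rw [heq, integral_add (hrampInt s ε hε s (s+ε)) (hvKInt ε hε s (s+ε))]
    rcases hcase with hA | htT0
    · -- case A : t + ε ≤ T₀
      rw [min_eq_left (by linarith : t + ε ≤ T₀)]
      have pm : (∫ u in s+ε..t, (ψ' ε u * vg u + vK ε u)) = ∫ u in s+ε..t, vBg u := by
        refine integral_congr fun u hu => ?_
        rw [uIcc_of_le (by linarith : s + ε ≤ t)] at hu
        rw [hψ'_mid ε hε u hu.1 hu.2, zero_mul, zero_add]
        simp only [hvKdef, hvBgdef]
        rw [hψ_mid ε hε u hu.1 hu.2, one_smul]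
      have pm2 : (∫ u in s..s+ε, vBg u) + (∫ u in s+ε..t, vBg u) = ∫ u in s..t, vBg u :=
        integral_add_adjacent_intervals (hvBgInt s (s+ε)) (hvBgInt (s+ε) t)
      have pt : (∫ u in t..t+ε, (ψ' ε u * vg u + vK ε u))
          = (∫ u in t..t+ε, vK ε u) - (∫ u in t..t+ε, rho' ((u - t)/ε)/ε * vg u) := by
        have heq : (∫ u in t..t+ε, (ψ' ε u * vg u + vK ε u))
            = ∫ u in t..t+ε, (vK ε u - rho' ((u - t)/ε)/ε * vg u) := by
          refine integral_congr fun u hu => ?_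
          rw [uIcc_of_le (by linarith : t ≤ t + ε)] at hu
          rw [hψ'_ramp2 ε hε hεts u hu.1]
          ring
        rw [heq, integral_sub (hvKInt ε hε t (t+ε)) (hrampInt t ε hε t (t+ε))]
      have ptail : (∫ u in t+ε..T₀, (ψ' ε u * vg u + vK ε u)) = 0 := by
        have heq : (∫ u in t+ε..T₀, (ψ' ε u * vg u + vK ε u)) = ∫ u in t+ε..T₀, (0:ℝ) := by
          refine integral_congr fun u hu => ?_
          rw [uIcc_of_le hA] at hu
          rw [hψ'_right ε hε u hu.1, zero_mul, zero_add]
          simp only [hvKdef]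
          rw [hψ_right ε hε u hu.1, B_zero_smul lam B hB g, map_zero]
        rw [heq]; simp
      have e1 := integral_add_adjacent_intervals (hQpInt 0 s) (hQpInt s (s+ε))
      have e2 := integral_add_adjacent_intervals (hQpInt 0 (s+ε)) (hQpInt (s+ε) t)
      have e3 := integral_add_adjacent_intervals (hQpInt 0 t) (hQpInt t (t+ε))
      have e4 := integral_add_adjacent_intervals (hQpInt 0 (t+ε)) (hQpInt (t+ε) T₀)
      linarith [h, e1, e2, e3, e4, p0, p1, pm, pm2, pt, ptail]
    · -- case B : t = T₀
      rw [min_eq_right (by linarith : T₀ ≤ t + ε), ← htT0, integral_same, integral_same]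
      have pm : (∫ u in s+ε..t, (ψ' ε u * vg u + vK ε u)) = ∫ u in s+ε..t, vBg u := by
        refine integral_congr fun u hu => ?_
        rw [uIcc_of_le (by linarith : s + ε ≤ t)] at hu
        rw [hψ'_mid ε hε u hu.1 hu.2, zero_mul, zero_add]
        simp only [hvKdef, hvBgdef]
        rw [hψ_mid ε hε u hu.1 hu.2, one_smul]
      have pm2 : (∫ u in s..s+ε, vBg u) + (∫ u in s+ε..t, vBg u) = ∫ u in s..t, vBg u :=
        integral_add_adjacent_intervals (hvBgInt s (s+ε)) (hvBgInt (s+ε) t)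
      have e1 := integral_add_adjacent_intervals (hQpInt 0 s) (hQpInt s (s+ε))
      have e2 := integral_add_adjacent_intervals (hQpInt 0 (s+ε)) (hQpInt (s+ε) t)
      rw [← htT0] at h
      linarith [h, e1, e2, p0, p1, pm, pm2]
  -- the eventual inequality
  have hev : ∀ᶠ ε in nhdsWithin (0:ℝ) (Ioi 0),
      (π T₀ (ψ ε T₀ • g) + ∫ u in t..min (t+ε) T₀, rho' ((u - t)/ε)/ε * vg u)
        - (∫ u in s..s+ε, rho' ((u - s)/ε)/ε * vg u)
        - (∫ u in s..s+ε, vK ε u)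
        - ((∫ u in s..t, vBg u) - (∫ u in s..s+ε, vBg u))
        - (∫ u in t..min (t+ε) T₀, vK ε u) ≤ C := by
    rcases lt_or_eq_of_le ht with htlt | hteq
    · have hmem : (0:ℝ) ∈ Ico (0:ℝ) (min (t - s) (T₀ - t)) :=
        ⟨le_rfl, lt_min (by linarith) (by linarith)⟩
      filter_upwards [Ioc_mem_nhdsGT_of_mem hmem] with ε hε
      exact hval ε hε.1 (hε.2.trans (min_le_left _ _))
        (Or.inl (by have := hε.2.trans (min_le_right _ _); linarith))
    · have hmem : (0:ℝ) ∈ Ico (0:ℝ) (t - s) := ⟨le_rfl, by linarith⟩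
      filter_upwards [Ioc_mem_nhdsGT_of_mem hmem] with ε hε
      exact hval ε hε.1 hε.2 (Or.inr hteq)
  -- the limits
  have hvgs : vg s = π s g := by simp only [hvgdef]; rw [proj_eq_self hsT]
  have hvgt : vg t = π t g := by simp only [hvgdef]; rw [proj_eq_self htT]
  have hP1 : Tendsto (fun ε => ∫ u in s..s+ε, rho' ((u - s)/ε)/ε * vg u)
      (nhdsWithin (0:ℝ) (Ioi 0)) (nhds (π s g)) := by
    have h1 := ramp_tendsto (hmeasf g) (fun u => hvb u g) (rightCont_v hT (hπ g) s)
    rw [show π (proj T₀ s) g = π s g by rw [proj_eq_self hsT]] at h1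
    exact h1
  have hconst_mul_tendsto : ∀ c : ℝ, Tendsto (fun ε : ℝ => c * ε)
      (nhdsWithin (0:ℝ) (Ioi 0)) (nhds 0) := by
    intro c
    have h1 : Tendsto (fun ε : ℝ => c * ε) (nhds (0:ℝ)) (nhds (c * 0)) :=
      (continuous_const.mul continuous_id).tendsto 0
    rw [mul_zero] at h1
    exact h1.mono_left nhdsWithin_le_nhds
  have hP2 : Tendsto (fun ε => ∫ u in s..s+ε, vK ε u)
      (nhdsWithin (0:ℝ) (Ioi 0)) (nhds 0) := by
    apply squeeze_zero_norm' ?_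
      (hconst_mul_tendsto (Mπ * (‖lam‖ * (Real.exp (2 * ‖g‖) + 1))))
    filter_upwards [self_mem_nhdsWithin] with ε (hε : ε ∈ Ioi 0)
    calc ‖∫ u in s..s+ε, vK ε u‖
        ≤ Mπ * (‖lam‖ * (Real.exp (2 * ‖g‖) + 1)) * |s + ε - s| :=
          intervalIntegral.norm_integral_le_of_norm_le_const fun u _ => by
            rw [Real.norm_eq_abs]; exact hvKb ε hε u
    _ = Mπ * (‖lam‖ * (Real.exp (2 * ‖g‖) + 1)) * ε := by
        rw [add_sub_cancel_left, abs_of_pos hε]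
  have hP3 : Tendsto (fun ε => ∫ u in s..s+ε, vBg u)
      (nhdsWithin (0:ℝ) (Ioi 0)) (nhds 0) := by
    apply squeeze_zero_norm' ?_ (hconst_mul_tendsto (Mπ * ‖B g‖))
    filter_upwards [self_mem_nhdsWithin] with ε (hε : ε ∈ Ioi 0)
    calc ‖∫ u in s..s+ε, vBg u‖
        ≤ Mπ * ‖B g‖ * |s + ε - s| :=
          intervalIntegral.norm_integral_le_of_norm_le_const fun u _ => by
            rw [Real.norm_eq_abs]; exact hvb u (B g)
    _ = Mπ * ‖B g‖ * ε := by rw [add_sub_cancel_left, abs_of_pos hε]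
  have hQ4 : Tendsto (fun ε => π T₀ (ψ ε T₀ • g)
        + ∫ u in t..min (t+ε) T₀, rho' ((u - t)/ε)/ε * vg u)
      (nhdsWithin (0:ℝ) (Ioi 0)) (nhds (π t g)) := by
    rcases lt_or_eq_of_le ht with htlt | hteq
    · have h1 := ramp_tendsto (hmeasf g) (fun u => hvb u g) (rightCont_v hT (hπ g) t)
      rw [show π (proj T₀ t) g = π t g by rw [proj_eq_self htT]] at h1
      apply Tendsto.congr' ?_ h1
      have hmem : (0:ℝ) ∈ Ico (0:ℝ) (T₀ - t) := ⟨le_rfl, by linarith⟩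
      filter_upwards [Ioc_mem_nhdsGT_of_mem hmem] with ε hε
      rw [min_eq_left (by linarith [hε.2] : t + ε ≤ T₀),
        hψ_right ε hε.1 T₀ (by linarith [hε.2]), zero_smul, map_zero, zero_add]
    · apply Tendsto.congr' ?_ (tendsto_const_nhds :
        Tendsto (fun _ : ℝ => π t g) (nhdsWithin (0:ℝ) (Ioi 0)) (nhds (π t g)))
      have hmem : (0:ℝ) ∈ Ico (0:ℝ) (t - s) := ⟨le_rfl, by linarith⟩
      filter_upwards [Ioc_mem_nhdsGT_of_mem hmem] with ε hε
      rw [min_eq_right (by linarith [hε.1] : T₀ ≤ t + ε), ← hteq, integral_same, add_zero,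
        hψ_mid ε hε.1 t (by linarith [hε.2]) le_rfl, one_smul]
  have hP5 : Tendsto (fun ε => ∫ u in t..min (t+ε) T₀, vK ε u)
      (nhdsWithin (0:ℝ) (Ioi 0)) (nhds 0) := by
    apply squeeze_zero_norm' ?_
      (hconst_mul_tendsto (Mπ * (‖lam‖ * (Real.exp (2 * ‖g‖) + 1))))
    filter_upwards [self_mem_nhdsWithin] with ε (hε : ε ∈ Ioi 0)
    have hminmem : t ≤ min (t+ε) T₀ := le_min (by linarith [mem_Ioi.1 hε]) ht
    calc ‖∫ u in t..min (t+ε) T₀, vK ε u‖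
        ≤ Mπ * (‖lam‖ * (Real.exp (2 * ‖g‖) + 1)) * |min (t+ε) T₀ - t| :=
          intervalIntegral.norm_integral_le_of_norm_le_const fun u _ => by
            rw [Real.norm_eq_abs]; exact hvKb ε hε u
    _ ≤ Mπ * (‖lam‖ * (Real.exp (2 * ‖g‖) + 1)) * ε := by
        have h1 : |min (t+ε) T₀ - t| ≤ ε := by
          rw [abs_of_nonneg (by linarith)]
          have := min_le_left (t+ε) T₀
          linarith
        have h2 : (0:ℝ) ≤ Mπ * (‖lam‖ * (Real.exp (2 * ‖g‖) + 1)) := by positivity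
        exact mul_le_mul_of_nonneg_left h1 h2
  have htend : Tendsto (fun ε => (π T₀ (ψ ε T₀ • g)
        + ∫ u in t..min (t+ε) T₀, rho' ((u - t)/ε)/ε * vg u)
        - (∫ u in s..s+ε, rho' ((u - s)/ε)/ε * vg u)
        - (∫ u in s..s+ε, vK ε u)
        - ((∫ u in s..t, vBg u) - (∫ u in s..s+ε, vBg u))
        - (∫ u in t..min (t+ε) T₀, vK ε u))
      (nhdsWithin (0:ℝ) (Ioi 0))
      (nhds (π t g - π s g - 0 - ((∫ u in s..t, vBg u) - 0) - 0)) :=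
    ((((hQ4.sub hP1).sub hP2).sub (tendsto_const_nhds.sub hP3)).sub hP5)
  have hle := le_of_tendsto htend hev
  have hfinal : (∫ u in s..t, π u (B g)) = ∫ u in s..t, vBg u := by
    refine integral_congr fun u hu => ?_
    rw [uIcc_of_le hst.le] at hu
    simp only [hvBgdef]
    rw [proj_eq_self ⟨hs.trans hu.1, hu.2.trans ht⟩]
  rw [hfinal]
  linarith
end
end

section
/- Let 0 < C < ∞ and let π ∈ 𝔄_C. Then for every nonnegative f ∈ C([0,1]) and every t ∈ [0,T₀], π_t(f) ≤ (max_{0≤x≤1} f(x)) · (2C + (e−1)∫₀¹ φ(x) dx). In particular π_t(𝟙) ≤ π₀(𝟙) + C and π₀(𝟙) ≤ C + (e−1)∫₀¹ φ(x) dx, where 𝟙 is the constant function 1. -/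
/-! Both rate functionals are nonnegative (test with `f = 0`, `G = 0`), so each is at most `C`.
Testing `J_ini` with `f ≡ 1` bounds `π₀(𝟙)`. Since `𝓑` annihilates constants, testing `J_dyn`
with `G_s = g(s) 𝟙` gives `g(T₀) π_{T₀}(𝟙) - g(0) π₀(𝟙) - ∫ g'(s) π_s(𝟙) ds ≤ C`. Taking `g`
decreasing from `1` to `0` with `-g'` a normalized bump just to the right of `t`,
right-continuity of `s ↦ π_s(𝟙)` gives `π_t(𝟙) ≤ π₀(𝟙) + C`. Finally positivity of `π_t` gives
`π_t(f) ≤ (max f) π_t(𝟙)`. -/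

open MeasureTheory

noncomputable section

open Set Filter Topology

theorem tendsto_ceil_mul_div_nhdsWithin_Ici (x : ℝ) :
    Tendsto (fun n : ℕ => (⌈x * n⌉ : ℝ) / n) atTop (𝓝[≥] x) := by
  have hge : ∀ᶠ n : ℕ in atTop, x ≤ (⌈x * n⌉ : ℝ) / n := by
    filter_upwards [eventually_gt_atTop 0] with n hn
    rw [le_div_iff₀ (by exact_mod_cast hn)]
    exact Int.le_ceil _
  have hle : ∀ᶠ n : ℕ in atTop, (⌈x * n⌉ : ℝ) / n ≤ x + 1 / n := by
    filter_upwards [eventually_gt_atTop 0] with n hn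
    have hn' : (0 : ℝ) < n := by exact_mod_cast hn
    rw [div_le_iff₀ hn', add_mul, one_div_mul_cancel hn'.ne']
    exact (Int.ceil_lt_add_one _).le
  have hlim : Tendsto (fun n : ℕ => x + 1 / (n : ℝ)) atTop (𝓝 x) := by
    simpa using (tendsto_const_nhds (x := x)).add tendsto_one_div_atTop_nhds_zero_nat
  exact tendsto_nhdsWithin_iff.2
    ⟨tendsto_of_tendsto_of_tendsto_of_le_of_le' tendsto_const_nhds hlim hge hle, hge⟩

theorem aemeasurable_restrict_of_continuousWithinAt_Ici {β : Type*} [TopologicalSpace β]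
    [TopologicalSpace.PseudoMetrizableSpace β] [MeasurableSpace β] [BorelSpace β]
    {μ : Measure ℝ} {s : Set ℝ} {f : ℝ → β} (hs : MeasurableSet s)
    (hf : ∀ x ∈ s, ContinuousWithinAt f (Ici x) x) : AEMeasurable f (μ.restrict s) := by
  refine aemeasurable_of_tendsto_metrizable_ae'
    (f := fun (n : ℕ) (x : ℝ) => f ((⌈x * n⌉ : ℝ) / n)) (fun n => ?_) ?_
  · exact ((measurable_from_top (f := fun k : ℤ => f ((k : ℝ) / n))).comp
      (Int.measurable_ceil.comp (measurable_id.mul_const _))).aemeasurable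
  · filter_upwards [ae_restrict_mem hs] with x hx
    exact (hf x hx).tendsto.comp (tendsto_ceil_mul_div_nhdsWithin_Ici x)

theorem exists_integral_mul_ge_of_continuousWithinAt_Ici {h : ℝ → ℝ} {a b t δ : ℝ}
    (hat : a ≤ t) (htb : t < b) (hδ : 0 < δ) (hh : ContinuousWithinAt h (Ici t) t)
    (hmeas : AEMeasurable h (volume.restrict (Ioc a b))) :
    ∃ w : ℝ → ℝ, Continuous w ∧ ∫ s in a..b, w s = 1 ∧
      IntervalIntegrable (fun s => w s * h s) volume a b ∧
      h t - δ ≤ ∫ s in a..b, w s * h s := by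
  obtain ⟨η, hη, hclose⟩ := Metric.continuousWithinAt_iff.1 hh δ hδ
  obtain ⟨r, hr, hrη, hrb⟩ : ∃ r : ℝ, 0 < r ∧ 2 * r ≤ η ∧ 2 * r ≤ b - t :=
    ⟨min η (b - t) / 2, by positivity, by linarith [min_le_left η (b - t)],
      by linarith [min_le_right η (b - t)]⟩
  set w := (⟨r / 2, r, by positivity, by linarith⟩ : ContDiffBump (t + r)).normed volume
  have hw_nonneg : ∀ s, 0 ≤ w s := fun s => ContDiffBump.nonneg_normed _ s
  have hsupp : ∀ s, w s ≠ 0 → s ∈ Ioo t b ∧ |h s - h t| < δ := by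
    intro s hs
    have hs : s ∈ Ioo t (t + 2 * r) := by
      rw [← Function.mem_support, ContDiffBump.support_normed_eq, Real.ball_eq_Ioo] at hs
      constructor <;> linarith [hs.1, hs.2]
    refine ⟨⟨hs.1, by linarith [hs.2]⟩, ?_⟩
    refine hclose (le_of_lt hs.1) ?_
    rw [Real.dist_eq, abs_of_pos (by linarith [hs.1])]
    linarith [hs.2]
  have hlower : ∀ s, w s * (h t - δ) ≤ w s * h s := fun s => by
    by_cases hs : w s = 0
    · simp [hs]
    · exact mul_le_mul_of_nonneg_left (by linarith [abs_lt.1 (hsupp s hs).2]) (hw_nonneg s)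
  have hupper : ∀ s, ‖w s * h s‖ ≤ w s * (|h t| + δ) := fun s => by
    by_cases hs : w s = 0
    · simp [hs]
    · rw [norm_mul, Real.norm_of_nonneg (hw_nonneg s), Real.norm_eq_abs]
      exact mul_le_mul_of_nonneg_left (by linarith [abs_sub_abs_le_abs_sub (h s) (h t),
        (hsupp s hs).2]) (hw_nonneg s)
  have hab : a ≤ b := by linarith
  have hw_int : ∫ s in a..b, w s = 1 := by
    rw [intervalIntegral.integral_of_le hab, setIntegral_eq_integral_of_forall_compl_eq_zero,
      ContDiffBump.integral_normed]
    intro s hs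
    by_contra hws
    exact hs (Ioo_subset_Ioc_self.trans (Ioc_subset_Ioc_left hat) (hsupp s hws).1)
  have hwh : IntervalIntegrable (fun s => w s * h s) volume a b := by
    rw [intervalIntegrable_iff_integrableOn_Ioc_of_le hab]
    exact Integrable.mono' ((ContDiffBump.integrable_normed _).mul_const _).integrableOn
      ((ContDiffBump.continuous_normed _).aemeasurable.mul hmeas).aestronglyMeasurable
      (ae_of_all _ hupper)
  refine ⟨w, ContDiffBump.continuous_normed _, hw_int, hwh, ?_⟩
  calc h t - δ = ∫ s in a..b, w s * (h t - δ) := by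
        rw [intervalIntegral.integral_mul_const, hw_int, one_mul]
    _ ≤ ∫ s in a..b, w s * h s :=
        intervalIntegral.integral_mono_on hab
          (((ContDiffBump.continuous_normed _).mul continuous_const).intervalIntegrable _ _)
          hwh (fun s _ => hlower s)

theorem apply_le_iSup_mul_apply_one {X : Type*} [TopologicalSpace X] [CompactSpace X]
    (ν : C(X, ℝ) →L[ℝ] ℝ) (hν : ∀ f : C(X, ℝ), (∀ x, 0 ≤ f x) → 0 ≤ ν f) (f : C(X, ℝ)) :
    ν f ≤ (⨆ x, f x) * ν 1 := by
  have hbdd : BddAbove (range f) := (isCompact_range f.continuous).bddAbove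
  have h := hν ((⨆ x, f x) • 1 - f) fun x => by
    simpa using le_ciSup hbdd x
  rw [map_sub, map_smul, smul_eq_mul] at h
  linarith

theorem B_smul_one_eq_zero {lam : C(I01 × I01, ℝ)} {B : CI → CI}
    (hB : ∀ (f : CI) (x : I01), B f x = ∫ y : I01, lam (x, y) * (Real.exp (f y - f x) - 1))
    (a : ℝ) : B (a • 1) = 0 := by
  ext x
  simp [hB]

theorem smul_one_mem_C10 {T₀ : ℝ} {g g' : ℝ → ℝ} (hg : ∀ s, HasDerivAt g (g' s) s)
    (hg' : Continuous g') : ((fun s => g s • (1 : CI)), (fun s => g' s • (1 : CI))) ∈ C10 T₀ :=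
  ⟨(continuous_iff_continuousAt.2 fun s => (hg s).continuousAt).smul continuous_const
      |>.continuousOn,
    (hg'.smul continuous_const).continuousOn,
    fun s _ => ((hg s).smul_const (1 : CI)).hasDerivWithinAt⟩

theorem sub_integral_le_Jini (φ : CI) (ν : S) (f : CI) :
    ((ν f - ∫ x : I01, φ x * (Real.exp (f x) - 1) : ℝ) : EReal) ≤ Jini φ ν :=
  le_iSup (fun f : CI => ((ν f - ∫ x : I01, φ x * (Real.exp (f x) - 1) : ℝ) : EReal)) f

theorem Jini_nonneg (φ : CI) (ν : S) : 0 ≤ Jini φ ν := by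
  simpa using sub_integral_le_Jini φ ν 0

theorem le_Jdyn {T₀ : ℝ} (B : CI → CI) (π : ℝ → S) {G : (ℝ → CI) × (ℝ → CI)}
    (hG : G ∈ C10 T₀) :
    ((π T₀ (G.1 T₀) - π 0 (G.1 0) - ∫ s in (0:ℝ)..T₀, π s (G.2 s + B (G.1 s)) : ℝ) : EReal)
      ≤ Jdyn T₀ B π :=
  le_iSup₂ (f := fun (G : (ℝ → CI) × (ℝ → CI)) (_ : G ∈ C10 T₀) =>
    ((π T₀ (G.1 T₀) - π 0 (G.1 0) - ∫ s in (0:ℝ)..T₀, π s (G.2 s + B (G.1 s)) : ℝ) : EReal))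
    G hG

theorem Jdyn_nonneg (T₀ : ℝ) {B : CI → CI} (hB : B 0 = 0) (π : ℝ → S) : 0 ≤ Jdyn T₀ B π := by
  simpa [hB] using le_Jdyn (T₀ := T₀) B π (G := (fun _ => 0, fun _ => 0))
    ⟨continuousOn_const, continuousOn_const, fun _ _ => hasDerivWithinAt_const _ _ _⟩

namespace memA

variable {T₀ C : ℝ} {φ : CI} {B : CI → CI} {π : ℝ → S}

theorem Jini_le (hA : memA T₀ C φ B π) (hB : ∀ a : ℝ, B (a • 1) = 0) : Jini φ (π 0) ≤ C :=
  (le_add_of_nonneg_right (Jdyn_nonneg T₀ (by simpa using hB 0) π)).trans hA.2.2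

theorem Jdyn_le (hA : memA T₀ C φ B π) : Jdyn T₀ B π ≤ C :=
  (le_add_of_nonneg_left (Jini_nonneg φ (π 0))).trans hA.2.2

theorem sub_integral_le (hA : memA T₀ C φ B π) (hB : ∀ a : ℝ, B (a • 1) = 0) (f : CI) :
    π 0 f - ∫ x : I01, φ x * (Real.exp (f x) - 1) ≤ C :=
  EReal.coe_le_coe_iff.1 ((sub_integral_le_Jini φ (π 0) f).trans (hA.Jini_le hB))

theorem apply_zero_one_le (hA : memA T₀ C φ B π) (hB : ∀ a : ℝ, B (a • 1) = 0) :
    π 0 1 ≤ C + (Real.exp 1 - 1) * ∫ x : I01, φ x := by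
  have h := hA.sub_integral_le hB 1
  simp only [ContinuousMap.one_apply, integral_mul_const] at h
  linarith

theorem profile_le (hA : memA T₀ C φ B π) (hB : ∀ a : ℝ, B (a • 1) = 0) {g g' : ℝ → ℝ}
    (hg : ∀ s, HasDerivAt g (g' s) s) (hg' : Continuous g') :
    g T₀ * π T₀ 1 - g 0 * π 0 1 - ∫ s in (0:ℝ)..T₀, g' s * π s 1 ≤ C := by
  have h := EReal.coe_le_coe_iff.1 ((le_Jdyn B π (smul_one_mem_C10 hg hg')).trans hA.Jdyn_le)
  simpa [hB] using h

theorem apply_one_le (hA : memA T₀ C φ B π) (hB : ∀ a : ℝ, B (a • 1) = 0) {t : ℝ}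
    (ht : t ∈ Icc 0 T₀) : π t 1 ≤ π 0 1 + C := by
  rcases ht.2.eq_or_lt with rfl | htT
  · have h := hA.profile_le hB (g := fun _ => 1) (fun _ => hasDerivAt_const _ _)
      continuous_const
    simp only [one_mul, zero_mul, intervalIntegral.integral_zero, sub_zero] at h
    linarith
  refine le_of_forall_sub_le fun δ hδ => ?_
  have hright : ∀ s ∈ Icc 0 T₀, ContinuousWithinAt (fun s => π s 1) (Ici s) s :=
    fun s hs => (hA.1 1).1 s hs
  obtain ⟨w, hw, hw_int, hwh, hle⟩ := exists_integral_mul_ge_of_continuousWithinAt_Ici ht.1 htT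
    hδ (hright t ht) (aemeasurable_restrict_of_continuousWithinAt_Ici measurableSet_Ioc
      fun s hs => hright s (Ioc_subset_Icc_self hs))
  have hg : ∀ s, HasDerivAt (fun s => ∫ u in s..T₀, w u) (-w s) s := fun s =>
    intervalIntegral.integral_hasDerivAt_left (hw.intervalIntegrable _ _)
      (hw.stronglyMeasurableAtFilter _ _) hw.continuousAt
  have h := hA.profile_le hB hg hw.neg
  simp only [intervalIntegral.integral_same, hw_int, neg_mul, intervalIntegral.integral_neg] at h
  linarith

end memA

theorem uniform_bound_on_A_general
    (lam : C(I01 × I01, ℝ))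
    (φ : CI)
    (T₀ : ℝ)
    (B : CI → CI)
    (hB : ∀ (f : CI) (x : I01), B f x = ∫ y : I01, lam (x, y) * (Real.exp (f y - f x) - 1))
    (C : ℝ)
    (π : ℝ → S) (hA : memA T₀ C φ B π) :
    (∀ f : CI, (∀ x, 0 ≤ f x) → ∀ t ∈ Set.Icc (0:ℝ) T₀,
      π t f ≤ (⨆ x : I01, f x) * (2 * C + (Real.exp 1 - 1) * ∫ x : I01, φ x)) ∧
    (∀ t ∈ Set.Icc (0:ℝ) T₀, π t (1 : CI) ≤ π 0 (1 : CI) + C) ∧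
    π 0 (1 : CI) ≤ C + (Real.exp 1 - 1) * ∫ x : I01, φ x := by
  have hB1 := B_smul_one_eq_zero hB
  refine ⟨fun f hf t ht => ?_, fun t ht => hA.apply_one_le hB1 ht, hA.apply_zero_one_le hB1⟩
  have hM : 0 ≤ ⨆ x, f x := (hf 0).trans (le_ciSup (isCompact_range f.continuous).bddAbove 0)
  calc π t f ≤ (⨆ x, f x) * π t 1 := apply_le_iSup_mul_apply_one (π t) (hA.2.1 t ht) f
    _ ≤ _ := mul_le_mul_of_nonneg_left
      (by linarith [hA.apply_one_le hB1 ht, hA.apply_zero_one_le hB1]) hM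

/-- Uniform boundedness on `𝔄_C`: for nonnegative `f`,
`π_t(f) ≤ (max f)(2C + (e-1)∫₀¹φ)`; in particular `π_t(𝟙) ≤ π₀(𝟙) + C` and
`π₀(𝟙) ≤ C + (e-1)∫₀¹φ`. -/
theorem uniform_bound_on_A
    (lam : C(I01 × I01, ℝ)) (hlam : ∀ p, 0 < lam p)
    (φ : CI) (hφ : ∀ x, 0 < φ x)
    (T₀ : ℝ) (hT₀ : 0 < T₀)
    (B : CI → CI)
    (hB : ∀ (f : CI) (x : I01), B f x = ∫ y : I01, lam (x, y) * (Real.exp (f y - f x) - 1))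
    (C : ℝ) (hC : 0 < C)
    (π : ℝ → S) (hA : memA T₀ C φ B π) :
    (∀ f : CI, (∀ x, 0 ≤ f x) → ∀ t ∈ Set.Icc (0:ℝ) T₀,
      π t f ≤ (⨆ x : I01, f x) * (2 * C + (Real.exp 1 - 1) * ∫ x : I01, φ x)) ∧
    (∀ t ∈ Set.Icc (0:ℝ) T₀, π t (1 : CI) ≤ π 0 (1 : CI) + C) ∧
    π 0 (1 : CI) ≤ C + (Real.exp 1 - 1) * ∫ x : I01, φ x :=
  uniform_bound_on_A_general lam φ T₀ B hB C π hA
end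
end
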